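/- arXiv:2309.01423 — 7 statements merged into one kernel-verified Lean document; each statement's English description precedes it below -/
import Mathlib

section
/- With the rotated OPUC setup (see context), the following inner product formulas hold for all j, k ∈ ℕ: (i) ⟨φⱼ^∠, φₖ^∠⟩ = δ_{jk}; (ii) ⟨φⱼ^{∠,*}, φₖ^∠⟩ = −conj(α_{k−1})·∏_{ℓ=k}^{j−1} conj(ρ_ℓ) if 0 ≤ k ≤ j−1, = −conj(α_{k−1}) if k = j, and = 0 if k ≥ j+1; (iii) ⟨φⱼ^∠, φₖ^{∠,*}⟩ = −α_{j−1}·∏_{ℓ=j}^{k−1} ρ_ℓ if 0 ≤ j ≤ k−1, = −α_{j−1} if j = k, and = 0 if j ≥ k+1; (iv) ⟨φⱼ^{∠,*}, φₖ^{∠,*}⟩ = ∏_{ℓ=k}^{j−1} conj(ρ_ℓ) if k ≤ j−1, = 1 if k = j, and = ∏_{ℓ=j}^{k−1} ρ_ℓ if k ≥ j+1. (Here α_{−1} = −1.) -/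
open MeasureTheory ComplexConjugate

/-- The `L²(μ)` inner product `⟨f, g⟩ = ∫ conj (f z) · g z dμ(z)`,
conjugate-linear in the first argument. -/
noncomputable def opucInner (μ : Measure ℂ) (f g : ℂ → ℂ) : ℂ :=
  ∫ z, conj (f z) * g z ∂μ

/-- The (topological) support of a measure on `ℂ`: the set of points all of whose
neighbourhoods have positive measure. -/
def measureSupport (μ : Measure ℂ) : Set ℂ :=
  {z | ∀ U ∈ nhds z, μ U ≠ 0}


open Polynomial in
private lemma opuc_integrable (μ : Measure ℂ) [IsFiniteMeasure μ]
    (hae : ∀ᵐ z ∂μ, ‖z‖ = 1) (p q : Polynomial ℂ) :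
    Integrable (fun z => conj (p.eval z) * q.eval z) μ := by
  have hb : ∀ (r : Polynomial ℂ) (z : ℂ), ‖z‖ = 1 →
      ‖r.eval z‖ ≤ ∑ i ∈ r.support, ‖r.coeff i‖ := by
    intro r z hz
    rw [Polynomial.eval_eq_sum, Polynomial.sum_def]
    refine (norm_sum_le _ _).trans ?_
    refine Finset.sum_le_sum fun i _ => ?_
    rw [norm_mul, norm_pow, hz, one_pow, mul_one]
  refine Integrable.mono' (integrable_const
      ((∑ i ∈ p.support, ‖p.coeff i‖) *
        (∑ i ∈ q.support, ‖q.coeff i‖))) ?_ ?_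
  · exact ((Complex.continuous_conj.comp p.continuous).mul q.continuous).aestronglyMeasurable
  · filter_upwards [hae] with z hz
    rw [norm_mul, Complex.norm_conj]
    exact mul_le_mul (hb p z hz) (hb q z hz) (norm_nonneg _)
      (Finset.sum_nonneg fun i _ => norm_nonneg _)

private lemma opuc_conj (μ : Measure ℂ) (f g : ℂ → ℂ) :
    opucInner μ f g = conj (opucInner μ g f) := by
  unfold opucInner
  rw [← integral_conj]
  congr 1
  funext z
  simp [mul_comm]

private lemma opuc_smul (μ : Measure ℂ) (a b : ℂ) (f g : ℂ → ℂ) :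
    opucInner μ (fun z => a * f z) (fun z => b * g z) = conj a * b * opucInner μ f g := by
  unfold opucInner
  rw [← integral_const_mul]
  congr 1
  funext z
  rw [map_mul]
  ring

open Polynomial in
private lemma opuc_expand (μ : Measure ℂ) [IsFiniteMeasure μ]
    (hae : ∀ᵐ z ∂μ, ‖z‖ = 1) (p q : Polynomial ℂ) {n : ℕ} (hq : q.natDegree < n) :
    opucInner μ (fun z => p.eval z) (fun z => q.eval z)
      = ∑ m ∈ Finset.range n, q.coeff m
          * opucInner μ (fun z => p.eval z) (fun z => z ^ m) := by
  unfold opucInner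
  have h1 : ∀ z : ℂ, conj (p.eval z) * q.eval z
      = ∑ m ∈ Finset.range n, q.coeff m * (conj (p.eval z) * z ^ m) := by
    intro z
    rw [Polynomial.eval_eq_sum_range' hq, Finset.mul_sum]
    exact Finset.sum_congr rfl fun m _ => by ring
  simp_rw [h1]
  rw [integral_finset_sum]
  · exact Finset.sum_congr rfl fun m _ => by rw [integral_const_mul]
  · intro m _
    have := (opuc_integrable μ hae p (Polynomial.X ^ m)).const_mul (q.coeff m)
    simpa using this

open Polynomial in
private lemma opuc_reverse (μ : Measure ℂ) (hae : ∀ᵐ z ∂μ, ‖z‖ = 1)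
    (p : Polynomial ℂ) {j : ℕ} (hdeg : p.natDegree = j) {m : ℕ} (hm : m ≤ j) :
    opucInner μ
        (fun z => (∑ i ∈ Finset.range (j+1), C (conj (p.coeff (j - i))) * X ^ i).eval z)
        (fun z => z ^ m)
      = conj (opucInner μ (fun z => p.eval z) (fun z => z ^ (j - m))) := by
  unfold opucInner
  rw [← integral_conj]
  refine integral_congr_ae ?_
  filter_upwards [hae] with z hz
  have hz0 : z ≠ 0 := by
    intro h; rw [h] at hz; simp at hz
  have hw0 : conj z ≠ 0 := by simpa using hz0
  have hzw : z * conj z = 1 := by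
    rw [Complex.mul_conj, Complex.normSq_eq_norm_sq, hz]; norm_num
  have hpe : p.eval z = ∑ i ∈ Finset.range (j+1), p.coeff (j - i) * z ^ (j - i) := by
    rw [Polynomial.eval_eq_sum_range' (by omega : p.natDegree < j + 1)]
    rw [← Finset.sum_range_reflect]
    refine Finset.sum_congr rfl fun i hi => ?_
    congr 1 <;> omega
  simp only [map_mul, map_pow, Complex.conj_conj, Polynomial.eval_finset_sum,
    Polynomial.eval_mul, Polynomial.eval_pow, Polynomial.eval_C, Polynomial.eval_X,
    map_sum, hpe, Finset.sum_mul]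
  refine Finset.sum_congr rfl fun i hi => ?_
  have hij : i ≤ j := Nat.lt_succ_iff.mp (Finset.mem_range.mp hi)
  have key : (starRingEnd ℂ) z ^ i * z ^ m = z ^ (j - i) * (starRingEnd ℂ) z ^ (j - m) := by
    have hc : z ^ i * (starRingEnd ℂ) z ^ m ≠ 0 :=
      mul_ne_zero (pow_ne_zero _ hz0) (pow_ne_zero _ hw0)
    apply mul_right_cancel₀ hc
    have e1 : (starRingEnd ℂ) z ^ i * z ^ m * (z ^ i * (starRingEnd ℂ) z ^ m)
        = (z * (starRingEnd ℂ) z) ^ i * (z * (starRingEnd ℂ) z) ^ m := by ring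
    have e2 : z ^ (j - i) * (starRingEnd ℂ) z ^ (j - m) * (z ^ i * (starRingEnd ℂ) z ^ m)
        = (z ^ (j - i) * z ^ i) * ((starRingEnd ℂ) z ^ (j - m) * (starRingEnd ℂ) z ^ m) := by
      ring
    rw [e1, e2, hzw, one_pow, one_pow, one_mul, ← pow_add, ← pow_add,
      Nat.sub_add_cancel hij, Nat.sub_add_cancel hm, ← mul_pow, hzw, one_pow]
  rw [mul_assoc, mul_assoc, key]

/-- **Inner products of rotated OPUCs** (rotated analogue of Simon, Prop. 1.5.8).
With the rotated OPUC setup: (i) the `φⱼ^∠` are orthonormal;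
(ii) `⟨φⱼ^{∠,*}, φₖ^∠⟩ = -conj(α_{k-1})·∏_{ℓ=k}^{j-1} conj(ρ_ℓ)` for `k ≤ j` and `0` for `k > j`;
(iii) `⟨φⱼ^∠, φₖ^{∠,*}⟩ = -α_{j-1}·∏_{ℓ=j}^{k-1} ρ_ℓ` for `j ≤ k` and `0` for `j > k`;
(iv) `⟨φⱼ^{∠,*}, φₖ^{∠,*}⟩ = ∏_{ℓ=k}^{j-1} conj(ρ_ℓ)` for `k ≤ j` and `∏_{ℓ=j}^{k-1} ρ_ℓ`
for `k ≥ j`. -/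
theorem rotated_opuc_inner_products
    (μ : Measure ℂ) [IsProbabilityMeasure μ]
    -- the support of `μ` is an infinite subset of the unit circle
    (hsupp_circ : measureSupport μ ⊆ {z : ℂ | ‖z‖ = 1})
    (hsupp_inf : (measureSupport μ).Infinite)
    -- `Φₙ` is the monic OPUC of degree `n`
    (Φ : ℕ → Polynomial ℂ)
    (hΦmonic : ∀ n, (Φ n).Monic) (hΦdeg : ∀ n, (Φ n).natDegree = n)
    (hΦorth : ∀ n, ∀ j < n, opucInner μ (fun z => (Φ n).eval z) (fun z => z ^ j) = 0)
    -- `Φₙ*` is the reverse polynomial of `Φₙ`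
    (Φs : ℕ → ℂ → ℂ)
    (hΦs : ∀ n z, Φs n z = ∑ j ∈ Finset.range (n + 1), conj ((Φ n).coeff (n - j)) * z ^ j)
    -- the Verblunsky coefficients, with `|αₙ| < 1`
    (α : ℕ → ℂ) (hα : ∀ n, α n = -conj ((Φ (n + 1)).eval 0))
    (hα1 : ∀ n, ‖α n‖ < 1)
    -- `αm k = α (k - 1)`, with the convention `α₋₁ = -1`
    (αm : ℕ → ℂ) (hαm0 : αm 0 = -1) (hαms : ∀ n, αm (n + 1) = α n)
    -- `ρabs n = |ρₙ| = (1 - |αₙ|²)^{1/2}` and the Szegő norm identity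
    (ρabs : ℕ → ℝ) (hρabs : ∀ n, ρabs n = Real.sqrt (1 - ‖α n‖ ^ 2))
    (hΦnorm : ∀ n, opucInner μ (fun z => (Φ n).eval z) (fun z => (Φ n).eval z)
      = (((∏ j ∈ Finset.range n, ρabs j : ℝ)) : ℂ) ^ 2)
    -- a sequence of unimodular numbers and the rotated `ρₙ = |ρₙ|·ζₙ`
    (ζ : ℕ → ℂ) (hζ : ∀ n, ‖ζ n‖ = 1)
    (ρ : ℕ → ℂ) (hρ : ∀ n, ρ n = ((ρabs n : ℝ) : ℂ) * ζ n)
    -- the orthonormal polynomials, their reverses, and the rotated versions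
    (φ φs φr φsr : ℕ → ℂ → ℂ)
    (hφ : ∀ n z, φ n z = (((∏ j ∈ Finset.range n, ρabs j : ℝ)) : ℂ)⁻¹ * (Φ n).eval z)
    (hφs : ∀ n z, φs n z = (((∏ j ∈ Finset.range n, ρabs j : ℝ)) : ℂ)⁻¹ * Φs n z)
    (hφr : ∀ n z, φr n z = (∏ j ∈ Finset.range n, ζ j) * φ n z)
    (hφsr : ∀ n z, φsr n z = (∏ j ∈ Finset.range n, ζ j) * φs n z)
    :
    (∀ j k, opucInner μ (φr j) (φr k) = if j = k then 1 else 0)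
    ∧ (∀ j k : ℕ,
        (k < j → opucInner μ (φsr j) (φr k)
          = -conj (αm k) * ∏ ℓ ∈ Finset.Ico k j, conj (ρ ℓ))
        ∧ (k = j → opucInner μ (φsr j) (φr k) = -conj (αm k))
        ∧ (j < k → opucInner μ (φsr j) (φr k) = 0))
    ∧ (∀ j k : ℕ,
        (j < k → opucInner μ (φr j) (φsr k)
          = -(αm j) * ∏ ℓ ∈ Finset.Ico j k, ρ ℓ)
        ∧ (j = k → opucInner μ (φr j) (φsr k) = -(αm j))
        ∧ (k < j → opucInner μ (φr j) (φsr k) = 0))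
    ∧ (∀ j k : ℕ,
        (k < j → opucInner μ (φsr j) (φsr k) = ∏ ℓ ∈ Finset.Ico k j, conj (ρ ℓ))
        ∧ (k = j → opucInner μ (φsr j) (φsr k) = 1)
        ∧ (j < k → opucInner μ (φsr j) (φsr k) = ∏ ℓ ∈ Finset.Ico j k, ρ ℓ)) := by
  classical
  -- almost every point is on the unit circle
  have hae : ∀ᵐ z ∂μ, ‖z‖ = 1 := by
    have hnull : μ (measureSupport μ)ᶜ = 0 := by
      apply measure_null_of_locally_null
      intro x hx
      simp only [Set.mem_compl_iff, measureSupport, Set.mem_setOf_eq, not_forall] at hx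
      obtain ⟨U, hU, hU0⟩ := hx
      exact ⟨U, mem_nhdsWithin_of_mem_nhds hU, by simpa using hU0⟩
    rw [ae_iff]
    refine measure_mono_null ?_ hnull
    intro z hz hmem
    exact hz (hsupp_circ hmem)
  -- positivity of the normalizers
  have hρpos : ∀ n, 0 < ρabs n := by
    intro n
    rw [hρabs]
    have := hα1 n
    exact Real.sqrt_pos.mpr (by nlinarith [norm_nonneg (α n)])
  have hPpos : ∀ n, 0 < ∏ j ∈ Finset.range n, ρabs j :=
    fun n => Finset.prod_pos fun j _ => hρpos j
  have hPne : ∀ n, ((∏ j ∈ Finset.range n, ρabs j : ℝ) : ℂ) ≠ 0 :=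
    fun n => Complex.ofReal_ne_zero.mpr (hPpos n).ne'
  -- the reversed polynomial as a polynomial
  set Ψ : ℕ → Polynomial ℂ := fun n =>
    ∑ i ∈ Finset.range (n+1), Polynomial.C (conj ((Φ n).coeff (n - i))) * Polynomial.X ^ i
    with hΨdef
  have hΨeval : ∀ n z, (Ψ n).eval z = Φs n z := by
    intro n z
    rw [hΦs, hΨdef]
    simp [Polynomial.eval_finset_sum]
  have hΨcoeff : ∀ n m, (Ψ n).coeff m
      = if m ≤ n then conj ((Φ n).coeff (n - m)) else 0 := by
    intro n m
    rw [hΨdef]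
    simp [Polynomial.coeff_X_pow, Finset.sum_ite_eq', Nat.lt_succ_iff]
  have hΨdegle : ∀ n, (Ψ n).natDegree ≤ n := by
    intro n
    refine Polynomial.natDegree_le_iff_coeff_eq_zero.mpr fun m hm => ?_
    rw [hΨcoeff]
    simp [Nat.not_le.mpr hm]
  -- basic orthogonality facts
  have hlow : ∀ n (q : Polynomial ℂ), q.natDegree < n →
      opucInner μ (fun z => (Φ n).eval z) (fun z => q.eval z) = 0 := by
    intro n q hq
    rw [opuc_expand μ hae _ _ hq]
    exact Finset.sum_eq_zero fun m hm => by
      rw [hΦorth n m (Finset.mem_range.mp hm), mul_zero]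
  have hmon : ∀ n, (Φ n).coeff n = 1 := by
    intro n
    have := (hΦmonic n).coeff_natDegree
    rwa [hΦdeg] at this
  have hzn : ∀ n, opucInner μ (fun z => (Φ n).eval z) (fun z => z ^ n)
      = ((∏ j ∈ Finset.range n, ρabs j : ℝ) : ℂ) ^ 2 := by
    intro n
    have h := hΦnorm n
    rw [opuc_expand μ hae (Φ n) (Φ n) (by rw [hΦdeg]; exact Nat.lt_succ_self n),
      Finset.sum_range_succ, hmon n, one_mul,
      Finset.sum_eq_zero (fun m hm => by
        rw [hΦorth n m (Finset.mem_range.mp hm), mul_zero]), zero_add] at h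
    exact h
  have hΦΦ : ∀ j k, opucInner μ (fun z => (Φ j).eval z) (fun z => (Φ k).eval z)
      = if j = k then ((∏ i ∈ Finset.range j, ρabs i : ℝ) : ℂ) ^ 2 else 0 := by
    intro j k
    rcases lt_trichotomy j k with h | h | h
    · rw [if_neg h.ne, opuc_conj, hlow k (Φ j) (by rw [hΦdeg]; exact h), map_zero]
    · subst h; rw [if_pos rfl]; exact hΦnorm j
    · rw [if_neg h.ne', hlow j (Φ k) (by rw [hΦdeg]; exact h)]
  -- inner products of Ψ with monomials
  have hΨz : ∀ j m, m ≤ j →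
      opucInner μ (fun z => (Ψ j).eval z) (fun z => z ^ m)
        = if m = 0 then ((∏ i ∈ Finset.range j, ρabs i : ℝ) : ℂ) ^ 2 else 0 := by
    intro j m hm
    rw [hΨdef]
    rw [opuc_reverse μ hae (Φ j) (hΦdeg j) hm]
    rcases Nat.eq_zero_or_pos m with h0 | h0
    · subst h0
      rw [if_pos rfl, Nat.sub_zero, hzn j, ← Complex.ofReal_pow, Complex.conj_ofReal]
    · rw [if_neg h0.ne', hΦorth j (j - m) (by omega), map_zero]
  -- inner products of Ψ with the monic polynomials
  have hΨΦ : ∀ j k, k ≤ j →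
      opucInner μ (fun z => (Ψ j).eval z) (fun z => (Φ k).eval z)
        = (Φ k).coeff 0 * ((∏ i ∈ Finset.range j, ρabs i : ℝ) : ℂ) ^ 2 := by
    intro j k hkj
    rw [opuc_expand μ hae (Ψ j) (Φ k) (by rw [hΦdeg]; exact Nat.lt_succ_self k)]
    rw [Finset.sum_eq_single 0]
    · rw [hΨz j 0 (Nat.zero_le j), if_pos rfl]
    · intro m hmem hm0
      rw [hΨz j m (le_trans (Nat.lt_succ_iff.mp (Finset.mem_range.mp hmem)) hkj),
        if_neg hm0, mul_zero]
    · intro h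
      exact absurd (Finset.mem_range.mpr (Nat.succ_pos k)) h
  have hΨΦ0 : ∀ j k, j < k →
      opucInner μ (fun z => (Ψ j).eval z) (fun z => (Φ k).eval z) = 0 := by
    intro j k hjk
    rw [opuc_conj, hlow k (Ψ j) (lt_of_le_of_lt (hΨdegle j) hjk), map_zero]
  have hΨΨ : ∀ j k, k ≤ j →
      opucInner μ (fun z => (Ψ j).eval z) (fun z => (Ψ k).eval z)
        = ((∏ i ∈ Finset.range j, ρabs i : ℝ) : ℂ) ^ 2 := by
    intro j k hkj
    rw [opuc_expand μ hae (Ψ j) (Ψ k) (Nat.lt_succ_of_le (hΨdegle k))]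
    rw [Finset.sum_eq_single 0]
    · rw [hΨz j 0 (Nat.zero_le j), if_pos rfl, hΨcoeff, if_pos (Nat.zero_le k),
        Nat.sub_zero, hmon k, map_one, one_mul]
    · intro m hmem hm0
      rw [hΨz j m (le_trans (Nat.lt_succ_iff.mp (Finset.mem_range.mp hmem)) hkj),
        if_neg hm0, mul_zero]
    · intro h
      exact absurd (Finset.mem_range.mpr (Nat.succ_pos k)) h
  -- the constant coefficient and Verblunsky coefficients
  have hcoeff0 : ∀ k, (Φ k).coeff 0 = -conj (αm k) := by
    intro k
    cases k with
    | zero =>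
      have h1 : Φ 0 = 1 := (hΦmonic 0).natDegree_eq_zero.mp (hΦdeg 0)
      rw [h1, hαm0]
      simp
    | succ n =>
      rw [Polynomial.coeff_zero_eq_eval_zero, hαms, hα]
      simp
  -- unimodularity facts
  have hζ1 : ∀ n, conj (ζ n) * ζ n = 1 := by
    intro n
    rw [mul_comm, Complex.mul_conj, Complex.normSq_eq_norm_sq, hζ]
    norm_num
  have hZZ : ∀ k j, k ≤ j →
      conj (∏ i ∈ Finset.range j, ζ i) * (∏ i ∈ Finset.range k, ζ i)
        = ∏ ℓ ∈ Finset.Ico k j, conj (ζ ℓ) := by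
    intro k j h
    rw [map_prod, ← Finset.prod_range_mul_prod_Ico (fun l => conj (ζ l)) h,
      mul_right_comm, ← Finset.prod_mul_distrib,
      Finset.prod_congr rfl (fun i _ => hζ1 i), Finset.prod_const_one, one_mul]
  have hZZ1 : ∀ j, conj (∏ i ∈ Finset.range j, ζ i) * (∏ i ∈ Finset.range j, ζ i) = 1 := by
    intro j
    rw [hZZ j j le_rfl]
    simp
  have hPratio : ∀ k j, k ≤ j →
      ((∏ i ∈ Finset.range j, ρabs i : ℝ) : ℂ)⁻¹ * ((∏ i ∈ Finset.range k, ρabs i : ℝ) : ℂ)⁻¹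
          * ((∏ i ∈ Finset.range j, ρabs i : ℝ) : ℂ) ^ 2
        = ∏ ℓ ∈ Finset.Ico k j, ((ρabs ℓ : ℝ) : ℂ) := by
    intro k j h
    have hk := (hPpos k).ne'
    have ht : (0:ℝ) < ∏ ℓ ∈ Finset.Ico k j, ρabs ℓ := Finset.prod_pos fun ℓ _ => hρpos ℓ
    have ht' := ht.ne'
    have hreal : (∏ i ∈ Finset.range j, ρabs i)⁻¹ * (∏ i ∈ Finset.range k, ρabs i)⁻¹
        * (∏ i ∈ Finset.range j, ρabs i) ^ 2 = ∏ ℓ ∈ Finset.Ico k j, ρabs ℓ := by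
      rw [sq, ← Finset.prod_range_mul_prod_Ico ρabs h]
      field_simp
    calc ((∏ i ∈ Finset.range j, ρabs i : ℝ) : ℂ)⁻¹
          * ((∏ i ∈ Finset.range k, ρabs i : ℝ) : ℂ)⁻¹
          * ((∏ i ∈ Finset.range j, ρabs i : ℝ) : ℂ) ^ 2
        = (((∏ i ∈ Finset.range j, ρabs i)⁻¹ * (∏ i ∈ Finset.range k, ρabs i)⁻¹
            * (∏ i ∈ Finset.range j, ρabs i) ^ 2 : ℝ) : ℂ) := by push_cast; ring
      _ = ((∏ ℓ ∈ Finset.Ico k j, ρabs ℓ : ℝ) : ℂ) := by rw [hreal]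
      _ = ∏ ℓ ∈ Finset.Ico k j, ((ρabs ℓ : ℝ) : ℂ) := by push_cast; ring
  have hρconj : ∀ ℓ, conj (ρ ℓ) = ((ρabs ℓ : ℝ) : ℂ) * conj (ζ ℓ) := by
    intro ℓ
    rw [hρ, map_mul, Complex.conj_ofReal]
  -- rewrite the rotated polynomials in scaled form
  have hφr' : ∀ j, φr j = fun z =>
      ((∏ i ∈ Finset.range j, ζ i) * ((∏ i ∈ Finset.range j, ρabs i : ℝ) : ℂ)⁻¹)
        * (Φ j).eval z := by
    intro j; funext z; rw [hφr, hφ]; ring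
  have hφsr' : ∀ j, φsr j = fun z =>
      ((∏ i ∈ Finset.range j, ζ i) * ((∏ i ∈ Finset.range j, ρabs i : ℝ) : ℂ)⁻¹)
        * (Ψ j).eval z := by
    intro j; funext z; rw [hφsr, hφs, ← hΨeval]; ring
  have hIcoρ : ∀ k j, (∏ ℓ ∈ Finset.Ico k j, conj (ζ ℓ))
      * (∏ ℓ ∈ Finset.Ico k j, ((ρabs ℓ : ℝ) : ℂ)) = ∏ ℓ ∈ Finset.Ico k j, conj (ρ ℓ) := by
    intro k j
    rw [← Finset.prod_mul_distrib]
    exact Finset.prod_congr rfl fun ℓ _ => by rw [hρconj]; ring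
  -- the four families of inner products, in unconjugated form
  have main1 : ∀ j k, opucInner μ (φr j) (φr k) = if j = k then 1 else 0 := by
    intro j k
    rw [hφr' j, hφr' k, opuc_smul, hΦΦ j k]
    by_cases h : j = k
    · subst h
      rw [if_pos rfl, if_pos rfl, map_mul, map_inv₀, Complex.conj_ofReal]
      have haa : ((∏ i ∈ Finset.range j, ρabs i : ℝ) : ℂ)⁻¹
          * ((∏ i ∈ Finset.range j, ρabs i : ℝ) : ℂ)⁻¹
          * ((∏ i ∈ Finset.range j, ρabs i : ℝ) : ℂ) ^ 2 = 1 := by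
        have hne : ((∏ i ∈ Finset.range j, ρabs i : ℝ) : ℂ) ≠ 0 := hPne j
        calc ((∏ i ∈ Finset.range j, ρabs i : ℝ) : ℂ)⁻¹
            * ((∏ i ∈ Finset.range j, ρabs i : ℝ) : ℂ)⁻¹
            * ((∏ i ∈ Finset.range j, ρabs i : ℝ) : ℂ) ^ 2
            = (((∏ i ∈ Finset.range j, ρabs i : ℝ) : ℂ)⁻¹
                * ((∏ i ∈ Finset.range j, ρabs i : ℝ) : ℂ))
              * (((∏ i ∈ Finset.range j, ρabs i : ℝ) : ℂ)⁻¹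
                * ((∏ i ∈ Finset.range j, ρabs i : ℝ) : ℂ)) := by ring
          _ = 1 := by rw [inv_mul_cancel₀ hne, one_mul]
      calc conj (∏ i ∈ Finset.range j, ζ i) * ((∏ i ∈ Finset.range j, ρabs i : ℝ) : ℂ)⁻¹
            * ((∏ i ∈ Finset.range j, ζ i) * ((∏ i ∈ Finset.range j, ρabs i : ℝ) : ℂ)⁻¹)
            * ((∏ i ∈ Finset.range j, ρabs i : ℝ) : ℂ) ^ 2
          = (conj (∏ i ∈ Finset.range j, ζ i) * (∏ i ∈ Finset.range j, ζ i))
            * (((∏ i ∈ Finset.range j, ρabs i : ℝ) : ℂ)⁻¹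
              * ((∏ i ∈ Finset.range j, ρabs i : ℝ) : ℂ)⁻¹
              * ((∏ i ∈ Finset.range j, ρabs i : ℝ) : ℂ) ^ 2) := by ring
        _ = 1 := by rw [haa, hZZ1 j, one_mul]
    · rw [if_neg h, if_neg h, mul_zero]
  have main2 : ∀ j k, k ≤ j → opucInner μ (φsr j) (φr k)
      = -conj (αm k) * ∏ ℓ ∈ Finset.Ico k j, conj (ρ ℓ) := by
    intro j k hkj
    rw [hφsr' j, hφr' k, opuc_smul, hΨΦ j k hkj, hcoeff0 k, map_mul, map_inv₀,
      Complex.conj_ofReal]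
    calc conj (∏ i ∈ Finset.range j, ζ i) * ((∏ i ∈ Finset.range j, ρabs i : ℝ) : ℂ)⁻¹
          * ((∏ i ∈ Finset.range k, ζ i) * ((∏ i ∈ Finset.range k, ρabs i : ℝ) : ℂ)⁻¹)
          * (-conj (αm k) * ((∏ i ∈ Finset.range j, ρabs i : ℝ) : ℂ) ^ 2)
        = -conj (αm k) * ((conj (∏ i ∈ Finset.range j, ζ i) * (∏ i ∈ Finset.range k, ζ i))
            * (((∏ i ∈ Finset.range j, ρabs i : ℝ) : ℂ)⁻¹
              * ((∏ i ∈ Finset.range k, ρabs i : ℝ) : ℂ)⁻¹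
              * ((∏ i ∈ Finset.range j, ρabs i : ℝ) : ℂ) ^ 2)) := by ring
      _ = -conj (αm k) * ((∏ ℓ ∈ Finset.Ico k j, conj (ζ ℓ))
            * (∏ ℓ ∈ Finset.Ico k j, ((ρabs ℓ : ℝ) : ℂ))) := by
          rw [hZZ k j hkj, hPratio k j hkj]
      _ = -conj (αm k) * ∏ ℓ ∈ Finset.Ico k j, conj (ρ ℓ) := by rw [hIcoρ k j]
  have main2' : ∀ j k, j < k → opucInner μ (φsr j) (φr k) = 0 := by
    intro j k hjk
    rw [hφsr' j, hφr' k, opuc_smul, hΨΦ0 j k hjk, mul_zero]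
  have main4 : ∀ j k, k ≤ j → opucInner μ (φsr j) (φsr k)
      = ∏ ℓ ∈ Finset.Ico k j, conj (ρ ℓ) := by
    intro j k hkj
    rw [hφsr' j, hφsr' k, opuc_smul, hΨΨ j k hkj, map_mul, map_inv₀, Complex.conj_ofReal]
    calc conj (∏ i ∈ Finset.range j, ζ i) * ((∏ i ∈ Finset.range j, ρabs i : ℝ) : ℂ)⁻¹
          * ((∏ i ∈ Finset.range k, ζ i) * ((∏ i ∈ Finset.range k, ρabs i : ℝ) : ℂ)⁻¹)
          * ((∏ i ∈ Finset.range j, ρabs i : ℝ) : ℂ) ^ 2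
        = (conj (∏ i ∈ Finset.range j, ζ i) * (∏ i ∈ Finset.range k, ζ i))
            * (((∏ i ∈ Finset.range j, ρabs i : ℝ) : ℂ)⁻¹
              * ((∏ i ∈ Finset.range k, ρabs i : ℝ) : ℂ)⁻¹
              * ((∏ i ∈ Finset.range j, ρabs i : ℝ) : ℂ) ^ 2) := by ring
      _ = (∏ ℓ ∈ Finset.Ico k j, conj (ζ ℓ))
            * (∏ ℓ ∈ Finset.Ico k j, ((ρabs ℓ : ℝ) : ℂ)) := by
          rw [hZZ k j hkj, hPratio k j hkj]
      _ = ∏ ℓ ∈ Finset.Ico k j, conj (ρ ℓ) := by rw [hIcoρ k j]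
  refine ⟨main1, fun j k => ⟨fun h => main2 j k h.le, fun h => ?_, fun h => main2' j k h⟩,
    fun j k => ⟨fun h => ?_, fun h => ?_, fun h => ?_⟩,
    fun j k => ⟨fun h => main4 j k h.le, fun h => ?_, fun h => ?_⟩⟩
  · rw [main2 j k h.le]
    rw [h, Finset.Ico_self, Finset.prod_empty, mul_one]
  · -- (iii), j < k
    rw [opuc_conj, main2 k j h.le, map_mul, map_neg, Complex.conj_conj, map_prod]
    simp only [Complex.conj_conj]
  · -- (iii), j = k
    rw [opuc_conj, main2 k j h.le, map_mul, map_neg, Complex.conj_conj]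
    rw [h, Finset.Ico_self, Finset.prod_empty, map_one, mul_one]
  · -- (iii), k < j
    rw [opuc_conj, main2' k j h, map_zero]
  · -- (iv), k = j
    rw [main4 j k h.le, h, Finset.Ico_self, Finset.prod_empty]
  · -- (iv), j < k
    rw [opuc_conj, main4 k j h.le, map_prod]
    simp only [Complex.conj_conj]
end

section
/- With the rotated OPUC setup and assuming in addition the forward Szegő recursion (see context), the following hold for all j, k ∈ ℕ: (i) ⟨φⱼ^∠, z·φₖ^∠⟩ = −conj(αₖ)·α_{j−1}·∏_{ℓ=j}^{k−1} ρ_ℓ if 0 ≤ j ≤ k−1, = −conj(αₖ)·α_{j−1} if j = k, = conj(ρₖ) if j = k+1, and = 0 if j ≥ k+2; (ii) ⟨φⱼ^{∠,*}, z·φₖ^∠⟩ = conj(αₖ)·∏_{ℓ=j}^{k−1} ρ_ℓ if 0 ≤ j ≤ k−1, = conj(αₖ) if j = k, and = 0 if j ≥ k+1. (Here α_{−1} = −1, and z·φ denotes the function z ↦ z·φ(z).) -/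
open MeasureTheory ComplexConjugate

/-- Multiplication of a function by the independent variable: `(zmul f) z = z * f z`. -/
def zmul (f : ℂ → ℂ) : ℂ → ℂ := fun z => z * f z

/-- functions that are pointwise evaluations of polynomials -/
def PolyLike (f : ℂ → ℂ) : Prop := ∃ P : Polynomial ℂ, ∀ z, f z = P.eval z

lemma polyLike_pow (m : ℕ) : PolyLike (fun z => z ^ m) :=
  ⟨Polynomial.X ^ m, by simp⟩

lemma polyLike_eval (P : Polynomial ℂ) : PolyLike (fun z => P.eval z) := ⟨P, fun _ => rfl⟩

lemma PolyLike.zmul {f : ℂ → ℂ} (hf : PolyLike f) : PolyLike (zmul f) := by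
  obtain ⟨P, hP⟩ := hf
  exact ⟨Polynomial.X * P, fun z => by simp [_root_.zmul, hP]⟩

lemma PolyLike.const_mul {f : ℂ → ℂ} (hf : PolyLike f) (c : ℂ) :
    PolyLike (fun z => c * f z) := by
  obtain ⟨P, hP⟩ := hf
  exact ⟨Polynomial.C c * P, fun z => by simp [hP]⟩

lemma PolyLike.add {f g : ℂ → ℂ} (hf : PolyLike f) (hg : PolyLike g) :
    PolyLike (fun z => f z + g z) := by
  obtain ⟨P, hP⟩ := hf; obtain ⟨Q, hQ⟩ := hg
  exact ⟨P + Q, fun z => by simp [hP, hQ]⟩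

lemma ae_circle (μ : Measure ℂ) (hsupp : measureSupport μ ⊆ {z : ℂ | ‖z‖ = 1}) :
    ∀ᵐ z ∂μ, ‖z‖ = 1 := by
  rw [ae_iff]
  refine measure_null_of_locally_null _ (fun x hx => ?_)
  have hx' : x ∉ measureSupport μ := fun h => hx (hsupp h)
  simp only [measureSupport, Set.mem_setOf_eq, not_forall] at hx'
  obtain ⟨U, hU, hU0⟩ := hx'
  push_neg at hU0
  exact ⟨{a | ¬‖a‖ = 1} ∩ U, inter_mem_nhdsWithin _ hU,
    measure_mono_null Set.inter_subset_right hU0⟩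

lemma poly_eval_abs_le (P : Polynomial ℂ) {z : ℂ} (hz : ‖z‖ = 1) :
    ‖P.eval z‖ ≤ ∑ j ∈ Finset.range (P.natDegree + 1), ‖P.coeff j‖ := by
  rw [Polynomial.eval_eq_sum_range]
  refine (norm_sum_le _ _).trans (Finset.sum_le_sum fun j _ => ?_)
  rw [norm_mul, norm_pow, hz, one_pow, mul_one]

lemma integrable_conj_mul (μ : Measure ℂ) [IsFiniteMeasure μ]
    (hae : ∀ᵐ z ∂μ, ‖z‖ = 1) {f g : ℂ → ℂ} (hf : PolyLike f) (hg : PolyLike g) :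
    Integrable (fun z => (conj (f z)) * g z) μ := by
  obtain ⟨P, hP⟩ := hf; obtain ⟨Q, hQ⟩ := hg
  have hc : Continuous fun z => (conj (f z)) * g z := by
    simp_rw [hP, hQ]
    exact ((Complex.continuous_conj.comp P.continuous).mul Q.continuous)
  refine ⟨hc.aestronglyMeasurable, ?_⟩
  refine HasFiniteIntegral.of_bounded
    (C := (∑ j ∈ Finset.range (P.natDegree + 1), ‖P.coeff j‖) *
      (∑ j ∈ Finset.range (Q.natDegree + 1), ‖Q.coeff j‖)) ?_
  filter_upwards [hae] with z hz
  simp only [norm_mul, hP, hQ, Complex.norm_conj]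
  exact mul_le_mul (poly_eval_abs_le P hz) (poly_eval_abs_le Q hz)
    (by positivity) (Finset.sum_nonneg fun j _ => by positivity)

lemma oi_const_left (μ : Measure ℂ) (c : ℂ) (f g : ℂ → ℂ) :
    opucInner μ (fun z => c * f z) g = conj c * opucInner μ f g := by
  unfold opucInner
  simp_rw [map_mul, mul_assoc]
  exact integral_const_mul _ _

lemma oi_const_right (μ : Measure ℂ) (c : ℂ) (f g : ℂ → ℂ) :
    opucInner μ f (fun z => c * g z) = c * opucInner μ f g := by
  unfold opucInner
  simp_rw [mul_left_comm]
  exact integral_const_mul _ _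

lemma oi_conj (μ : Measure ℂ) (f g : ℂ → ℂ) :
    conj (opucInner μ f g) = opucInner μ g f := by
  unfold opucInner
  rw [← integral_conj]
  congr 1; funext z; rw [map_mul]; ring_nf; rw [Complex.conj_conj]; ring

lemma oi_sum_right (μ : Measure ℂ) {ι : Type*} (s : Finset ι) (f : ℂ → ℂ) (F : ι → ℂ → ℂ)
    (hint : ∀ i ∈ s, Integrable (fun z => conj (f z) * F i z) μ) :
    opucInner μ f (fun z => ∑ i ∈ s, F i z) = ∑ i ∈ s, opucInner μ f (F i) := by
  unfold opucInner
  simp_rw [Finset.mul_sum]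
  exact integral_finset_sum s hint

lemma oi_add_right (μ : Measure ℂ) (f g h : ℂ → ℂ)
    (h1 : Integrable (fun z => conj (f z) * g z) μ)
    (h2 : Integrable (fun z => conj (f z) * h z) μ) :
    opucInner μ f (fun z => g z + h z) = opucInner μ f g + opucInner μ f h := by
  unfold opucInner
  simp_rw [mul_add]
  exact integral_add h1 h2

lemma oi_combo (μ : Measure ℂ) (f g h : ℂ → ℂ) (a b : ℂ)
    (h1 : Integrable (fun z => conj (f z) * g z) μ)
    (h2 : Integrable (fun z => conj (f z) * h z) μ) :
    opucInner μ f (fun z => a * g z + b * h z)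
      = a * opucInner μ f g + b * opucInner μ f h := by
  unfold opucInner
  have he : (fun z => conj (f z) * (a * g z + b * h z))
      = fun z => a * (conj (f z) * g z) + b * (conj (f z) * h z) := by
    funext z; ring
  rw [he, integral_add (h1.const_mul a) (h2.const_mul b), integral_const_mul, integral_const_mul]
/-- **Inner products of rotated OPUCs against `z·φₖ^∠`** (rotated analogue of Simon,
Prop. 1.5.9).  With the rotated OPUC setup and the forward Szegő recursion:
(i) `⟨φⱼ^∠, z·φₖ^∠⟩ = -conj(αₖ)·α_{j-1}·∏_{ℓ=j}^{k-1} ρ_ℓ` for `j ≤ k`, `= conj(ρₖ)` for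
`j = k+1`, and `= 0` for `j ≥ k+2`;
(ii) `⟨φⱼ^{∠,*}, z·φₖ^∠⟩ = conj(αₖ)·∏_{ℓ=j}^{k-1} ρ_ℓ` for `j ≤ k` and `= 0` for `j ≥ k+1`. -/
theorem rotated_opuc_inner_products_zmul
    (μ : Measure ℂ) [IsProbabilityMeasure μ]
    -- the support of `μ` is an infinite subset of the unit circle
    (hsupp_circ : measureSupport μ ⊆ {z : ℂ | ‖z‖ = 1})
    (hsupp_inf : (measureSupport μ).Infinite)
    -- `Φₙ` is the monic OPUC of degree `n`
    (Φ : ℕ → Polynomial ℂ)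
    (hΦmonic : ∀ n, (Φ n).Monic) (hΦdeg : ∀ n, (Φ n).natDegree = n)
    (hΦorth : ∀ n, ∀ j < n, opucInner μ (fun z => (Φ n).eval z) (fun z => z ^ j) = 0)
    -- `Φₙ*` is the reverse polynomial of `Φₙ`
    (Φs : ℕ → ℂ → ℂ)
    (hΦs : ∀ n z, Φs n z = ∑ j ∈ Finset.range (n + 1), conj ((Φ n).coeff (n - j)) * z ^ j)
    -- the Verblunsky coefficients, with `|αₙ| < 1`
    (α : ℕ → ℂ) (hα : ∀ n, α n = -conj ((Φ (n + 1)).eval 0))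
    (hα1 : ∀ n, ‖α n‖ < 1)
    -- `αm k = α (k - 1)`, with the convention `α₋₁ = -1`
    (αm : ℕ → ℂ) (hαm0 : αm 0 = -1) (hαms : ∀ n, αm (n + 1) = α n)
    -- `ρabs n = |ρₙ| = (1 - |αₙ|²)^{1/2}` and the Szegő norm identity
    (ρabs : ℕ → ℝ) (hρabs : ∀ n, ρabs n = Real.sqrt (1 - ‖α n‖ ^ 2))
    (hΦnorm : ∀ n, opucInner μ (fun z => (Φ n).eval z) (fun z => (Φ n).eval z)
      = (((∏ j ∈ Finset.range n, ρabs j : ℝ)) : ℂ) ^ 2)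
    -- a sequence of unimodular numbers and the rotated `ρₙ = |ρₙ|·ζₙ`
    (ζ : ℕ → ℂ) (hζ : ∀ n, ‖ζ n‖ = 1)
    (ρ : ℕ → ℂ) (hρ : ∀ n, ρ n = ((ρabs n : ℝ) : ℂ) * ζ n)
    -- the orthonormal polynomials, their reverses, and the rotated versions
    (φ φs φr φsr : ℕ → ℂ → ℂ)
    (hφ : ∀ n z, φ n z = (((∏ j ∈ Finset.range n, ρabs j : ℝ)) : ℂ)⁻¹ * (Φ n).eval z)
    (hφs : ∀ n z, φs n z = (((∏ j ∈ Finset.range n, ρabs j : ℝ)) : ℂ)⁻¹ * Φs n z)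
    (hφr : ∀ n z, φr n z = (∏ j ∈ Finset.range n, ζ j) * φ n z)
    (hφsr : ∀ n z, φsr n z = (∏ j ∈ Finset.range n, ζ j) * φs n z)
    -- the forward Szegő recursion
    (hszego : ∀ (n : ℕ) (z : ℂ),
      φ (n + 1) z = ((ρabs n : ℝ) : ℂ)⁻¹ * (z * φ n z - conj (α n) * φs n z)
      ∧ φs (n + 1) z = ((ρabs n : ℝ) : ℂ)⁻¹ * (φs n z - α n * z * φ n z)) :
    (∀ j k : ℕ,
        (j < k → opucInner μ (φr j) (zmul (φr k))
          = -conj (α k) * αm j * ∏ ℓ ∈ Finset.Ico j k, ρ ℓ)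
        ∧ (j = k → opucInner μ (φr j) (zmul (φr k)) = -conj (α k) * αm j)
        ∧ (j = k + 1 → opucInner μ (φr j) (zmul (φr k)) = conj (ρ k))
        ∧ (k + 2 ≤ j → opucInner μ (φr j) (zmul (φr k)) = 0))
    ∧ (∀ j k : ℕ,
        (j < k → opucInner μ (φsr j) (zmul (φr k))
          = conj (α k) * ∏ ℓ ∈ Finset.Ico j k, ρ ℓ)
        ∧ (j = k → opucInner μ (φsr j) (zmul (φr k)) = conj (α k))
        ∧ (k < j → opucInner μ (φsr j) (zmul (φr k)) = 0)) := by

  classical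
  have hz1 : ∀ᵐ z ∂μ, ‖z‖ = 1 := ae_circle μ hsupp_circ
  have hρpos : ∀ n, 0 < ρabs n := by
    intro n
    rw [hρabs n]
    apply Real.sqrt_pos.2
    have h := hα1 n
    nlinarith [norm_nonneg (α n)]
  set Pr : ℕ → ℝ := fun n => ∏ j ∈ Finset.range n, ρabs j with hPrdef
  have hPr : ∀ n, (∏ j ∈ Finset.range n, ρabs j) = Pr n := fun _ => rfl
  simp only [hPr] at hΦnorm hφ hφs
  have hPrpos : ∀ n, 0 < Pr n := fun n => Finset.prod_pos (fun i _ => hρpos i)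
  have hPrne : ∀ n, ((Pr n : ℝ) : ℂ) ≠ 0 :=
    fun n => Complex.ofReal_ne_zero.2 (ne_of_gt (hPrpos n))
  have hρne : ∀ n, ((ρabs n : ℝ) : ℂ) ≠ 0 :=
    fun n => Complex.ofReal_ne_zero.2 (ne_of_gt (hρpos n))
  -- PolyLike instances
  have hPLφ : ∀ n, PolyLike (φ n) := fun n =>
    ⟨Polynomial.C ((Pr n : ℂ))⁻¹ * Φ n, fun z => by simp [hφ n z]⟩
  have hPLφs : ∀ n, PolyLike (φs n) := by
    intro n
    refine ⟨Polynomial.C ((Pr n : ℂ))⁻¹ *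
      ∑ j ∈ Finset.range (n+1), Polynomial.C (conj ((Φ n).coeff (n - j))) * Polynomial.X ^ j,
      fun z => ?_⟩
    simp [hφs n z, hΦs n z, Polynomial.eval_finset_sum]
  have hInt : ∀ {f g : ℂ → ℂ}, PolyLike f → PolyLike g →
      Integrable (fun z => conj (f z) * g z) μ :=
    fun hf hg => integrable_conj_mul μ hz1 hf hg
  -- orthogonality against monomials
  have hOrthPow : ∀ k l, l < k → opucInner μ (φ k) (fun z => z ^ l) = 0 := by
    intro k l hl
    have hk : φ k = fun z => ((Pr k : ℂ))⁻¹ * (Φ k).eval z := funext (hφ k)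
    rw [hk, oi_const_left, hΦorth k l hl, mul_zero]
  -- expansion of inner products against polynomials
  have hExpand : ∀ (f : ℂ → ℂ), PolyLike f → ∀ (R : Polynomial ℂ),
      opucInner μ f (fun z => R.eval z)
        = ∑ m ∈ Finset.range (R.natDegree + 1),
            R.coeff m * opucInner μ f (fun z => z ^ m) := by
    intro f hf R
    have h1 : (fun z : ℂ => R.eval z)
        = fun z => ∑ m ∈ Finset.range (R.natDegree + 1), R.coeff m * z ^ m := by
      funext z; rw [Polynomial.eval_eq_sum_range]
    rw [h1, oi_sum_right μ (Finset.range (R.natDegree + 1)) f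
      (fun m => fun z => R.coeff m * z ^ m)
      (fun m _ => hInt hf ((polyLike_pow m).const_mul _))]
    exact Finset.sum_congr rfl fun m _ => oi_const_right μ _ f _
  -- ⟨φ k, z^k⟩ = Pr k
  have hφzk : ∀ k, opucInner μ (φ k) (fun z : ℂ => z ^ k) = ((Pr k : ℝ) : ℂ) := by
    intro k
    have hsplit : (fun z : ℂ => z ^ k)
        = fun z => (Φ k).eval z + (Polynomial.X ^ k - Φ k).eval z := by
      funext z; simp
    rw [hsplit, oi_add_right μ _ _ _ (hInt (hPLφ k) (polyLike_eval _))
      (hInt (hPLφ k) (polyLike_eval _))]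
    have h2 : opucInner μ (φ k) (fun z => (Polynomial.X ^ k - Φ k).eval z) = 0 := by
      rw [hExpand _ (hPLφ k)]
      refine Finset.sum_eq_zero fun m _ => ?_
      rcases lt_or_ge m k with hm | hm
      · rw [hOrthPow k m hm, mul_zero]
      · have hc : (Polynomial.X ^ k - Φ k).coeff m = 0 := by
          rw [Polynomial.coeff_sub, Polynomial.coeff_X_pow]
          rcases eq_or_lt_of_le hm with h | h
          · have h1 : (Φ k).coeff m = 1 := by
              have h2 := (hΦmonic k).coeff_natDegree
              rw [hΦdeg k] at h2
              rw [h]; exact h ▸ h2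
            rw [if_pos h.symm, h1]; ring
          · rw [if_neg (by omega), Polynomial.coeff_eq_zero_of_natDegree_lt (by rw [hΦdeg]; exact h)]
            ring
        rw [hc, zero_mul]
    have h3 : opucInner μ (φ k) (fun z => (Φ k).eval z) = ((Pr k : ℂ))⁻¹ * ((Pr k : ℂ)) ^ 2 := by
      have hk : φ k = fun z => ((Pr k : ℂ))⁻¹ * (Φ k).eval z := funext (hφ k)
      rw [hk, oi_const_left, hΦnorm k, map_inv₀, Complex.conj_ofReal]
    rw [h2, h3, add_zero, sq]
    field_simp
  -- inner product of φ j against low-degree polynomials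
  have hLow : ∀ j (R : Polynomial ℂ), R.natDegree < j →
      opucInner μ (φ j) (fun z => R.eval z) = 0 := by
    intro j R hR
    rw [hExpand _ (hPLφ j)]
    refine Finset.sum_eq_zero fun m hm => ?_
    have hmj : m < j := lt_of_le_of_lt (Nat.lt_succ_iff.mp (Finset.mem_range.mp hm)) hR
    rw [hOrthPow j m hmj, mul_zero]
  -- orthonormality
  have hφφ : ∀ j k : ℕ, opucInner μ (φ j) (φ k) = if j = k then 1 else 0 := by
    have key : ∀ j k : ℕ, k < j → opucInner μ (φ j) (φ k) = 0 := by
      intro j k hkj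
      have hk : φ k = fun z => ((Pr k : ℂ))⁻¹ * (Φ k).eval z := funext (hφ k)
      rw [hk, oi_const_right, hLow j (Φ k) (by rw [hΦdeg]; exact hkj), mul_zero]
    intro j k
    rcases lt_trichotomy j k with h | h | h
    · rw [if_neg (ne_of_lt h), ← oi_conj, key k j h, map_zero]
    · subst h
      rw [if_pos rfl]
      have hk : φ j = fun z => ((Pr j : ℂ))⁻¹ * (Φ j).eval z := funext (hφ j)
      rw [hk, oi_const_left, oi_const_right, hΦnorm j, map_inv₀, Complex.conj_ofReal, sq]
      field_simp
      exact div_self (hPrne j)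
    · rw [if_neg (Ne.symm (ne_of_lt h)), key j k h]
  -- the star identity on the circle
  have hstar : ∀ n (z : ℂ), ‖z‖ = 1 → φs n z = z ^ n * conj (φ n z) := by
    intro n z hz
    have hz0 : z ≠ 0 := by
      intro h; rw [h] at hz; simp at hz
    have hcz : conj z = z⁻¹ := (Complex.inv_eq_conj hz).symm
    rw [hφs n z, hφ n z, hΦs n z, map_mul, map_inv₀, Complex.conj_ofReal]
    rw [mul_comm (z ^ n), mul_assoc]
    congr 1
    rw [Polynomial.eval_eq_sum_range, hΦdeg, map_sum, Finset.sum_mul]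
    have hrefl := Finset.sum_range_reflect
      (fun m => conj ((Φ n).coeff m) * z ^ (n - m)) (n + 1)
    simp only [Nat.add_sub_cancel] at hrefl
    calc ∑ j ∈ Finset.range (n + 1), conj ((Φ n).coeff (n - j)) * z ^ j
        = ∑ j ∈ Finset.range (n + 1), conj ((Φ n).coeff (n - j)) * z ^ (n - (n - j)) := by
          refine Finset.sum_congr rfl fun j hj => ?_
          rw [Nat.sub_sub_self (Nat.lt_succ_iff.mp (Finset.mem_range.mp hj))]
      _ = ∑ m ∈ Finset.range (n + 1), conj ((Φ n).coeff m) * z ^ (n - m) := hrefl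
      _ = ∑ m ∈ Finset.range (n + 1), conj ((Φ n).coeff m * z ^ m) * z ^ n := by
          refine Finset.sum_congr rfl fun m hm => ?_
          have hmn : m ≤ n := Nat.lt_succ_iff.mp (Finset.mem_range.mp hm)
          rw [pow_sub₀ z hz0 hmn, map_mul, map_pow, hcz]
          field_simp
          rw [mul_assoc, one_div, ← mul_pow, mul_inv_cancel₀ hz0, one_pow, mul_one]
  -- ⟨φ j, φs k⟩ for j ≤ k
  have hX : ∀ j k, j ≤ k → opucInner μ (φ j) (φs k)
      = conj ((Φ j).coeff 0) * (((Pr j : ℝ) : ℂ))⁻¹ * ((Pr k : ℝ) : ℂ) := by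
    intro j k hjk
    have hae : (fun z => conj (φ j z) * φs k z) =ᵐ[μ]
        (fun z => ∑ m ∈ Finset.range (j + 1),
          conj ((((Pr j : ℝ) : ℂ))⁻¹ * (Φ j).coeff m) * (conj (φ k z) * z ^ (k - m))) := by
      filter_upwards [hz1] with z hz
      have hz0 : z ≠ 0 := by intro h; rw [h] at hz; simp at hz
      have hcz : conj z = z⁻¹ := (Complex.inv_eq_conj hz).symm
      rw [hstar k z hz, hφ j z, Polynomial.eval_eq_sum_range, hΦdeg, Finset.mul_sum,
        map_sum, Finset.sum_mul]
      refine Finset.sum_congr rfl fun m hm => ?_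
      have hmk : m ≤ k := le_trans (Nat.lt_succ_iff.mp (Finset.mem_range.mp hm)) hjk
      rw [pow_sub₀ z hz0 hmk]
      simp only [map_mul, map_pow, hcz]
      field_simp
      have hzz : (1 / z) ^ m * z ^ m = 1 := by rw [← mul_pow, one_div, inv_mul_cancel₀ hz0, one_pow]
      linear_combination (conj (1 / ((Pr j : ℝ) : ℂ)) * conj ((Φ j).coeff m) * conj (φ k z)) * hzz
    have h1 : opucInner μ (φ j) (φs k) = ∑ m ∈ Finset.range (j + 1),
        conj ((((Pr j : ℝ) : ℂ))⁻¹ * (Φ j).coeff m)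
          * opucInner μ (φ k) (fun z => z ^ (k - m)) := by
      unfold opucInner
      rw [integral_congr_ae hae, integral_finset_sum _ (fun m _ =>
        (hInt (hPLφ k) (polyLike_pow (k - m))).const_mul _)]
      exact Finset.sum_congr rfl fun m _ => integral_const_mul _ _
    rw [h1, Finset.sum_eq_single 0]
    · rw [Nat.sub_zero, hφzk k, map_mul, map_inv₀, Complex.conj_ofReal]
      ring
    · intro m hm hm0
      have hmpos : 0 < m := Nat.pos_of_ne_zero hm0
      have hmk : m ≤ k := le_trans (Nat.lt_succ_iff.mp (Finset.mem_range.mp hm)) hjk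
      have hk1 : k - m < k := Nat.sub_lt (lt_of_lt_of_le hmpos hmk) hmpos
      rw [hOrthPow k (k - m) hk1, mul_zero]
    · intro h; exact absurd (Finset.mem_range.mpr (Nat.succ_pos j)) h
  -- ⟨φs j, φs k⟩ for j ≤ k
  have hZ : ∀ j k, j ≤ k → opucInner μ (φs j) (φs k)
      = (((Pr j : ℝ) : ℂ))⁻¹ * ((Pr k : ℝ) : ℂ) := by
    intro j k hjk
    have hae : (fun z => conj (φs j z) * φs k z) =ᵐ[μ]
        (fun z => ∑ m ∈ Finset.range (j + 1),
          ((((Pr j : ℝ) : ℂ))⁻¹ * (Φ j).coeff m) * (conj (φ k z) * z ^ (k - j + m))) := by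
      filter_upwards [hz1] with z hz
      have hz0 : z ≠ 0 := by intro h; rw [h] at hz; simp at hz
      have hcz : conj z = z⁻¹ := (Complex.inv_eq_conj hz).symm
      rw [hstar k z hz, hstar j z hz, hφ j z, Polynomial.eval_eq_sum_range, hΦdeg]
      rw [map_mul, map_pow, hcz, Complex.conj_conj, Finset.mul_sum, Finset.mul_sum,
        Finset.sum_mul]
      refine Finset.sum_congr rfl fun m hm => ?_
      rw [pow_add, pow_sub₀ z hz0 hjk]
      field_simp
      have hzz : (1 / z) ^ j * z ^ j = 1 := by rw [← mul_pow, one_div, inv_mul_cancel₀ hz0, one_pow]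
      linear_combination ((Φ j).coeff m * conj (φ k z) / ((Pr j : ℝ) : ℂ)) * hzz
    have h1 : opucInner μ (φs j) (φs k) = ∑ m ∈ Finset.range (j + 1),
        ((((Pr j : ℝ) : ℂ))⁻¹ * (Φ j).coeff m)
          * opucInner μ (φ k) (fun z => z ^ (k - j + m)) := by
      unfold opucInner
      rw [integral_congr_ae hae, integral_finset_sum _ (fun m _ =>
        (hInt (hPLφ k) (polyLike_pow (k - j + m))).const_mul _)]
      exact Finset.sum_congr rfl fun m _ => integral_const_mul _ _
    rw [h1, Finset.sum_eq_single j]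
    · have hjj : (Φ j).coeff j = 1 := by
        have h2 := (hΦmonic j).coeff_natDegree
        rwa [hΦdeg j] at h2
      rw [hjj, Nat.sub_add_cancel hjk, hφzk k, mul_one]
    · intro m hm hmj
      have hmlt : m < j := lt_of_le_of_ne (Nat.lt_succ_iff.mp (Finset.mem_range.mp hm)) hmj
      have hlt : k - j + m < k := by omega
      rw [hOrthPow k _ hlt, mul_zero]
    · intro h; exact absurd (Finset.mem_range.mpr (Nat.lt_succ_self j)) h
  -- ⟨φ j, φs k⟩ = 0 for k < j
  have hXzero : ∀ j k, k < j → opucInner μ (φ j) (φs k) = 0 := by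
    intro j k hkj
    have hk : φs k = fun z => (((Pr k : ℝ) : ℂ))⁻¹ * Φs k z := funext (hφs k)
    rw [hk, oi_const_right]
    have h2 : Φs k = fun z => ∑ m ∈ Finset.range (k + 1),
        conj ((Φ k).coeff (k - m)) * z ^ m := funext (hΦs k)
    rw [h2, oi_sum_right μ _ (φ j) (fun m => fun z => conj ((Φ k).coeff (k - m)) * z ^ m)
      (fun m _ => hInt (hPLφ j) ((polyLike_pow m).const_mul _))]
    rw [Finset.sum_eq_zero, mul_zero]
    intro m hm
    rw [oi_const_right, hOrthPow j m (lt_of_le_of_lt (Nat.lt_succ_iff.mp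
      (Finset.mem_range.mp hm)) hkj), mul_zero]
  -- conj of the constant coefficient
  have hcoeff0 : ∀ j, conj ((Φ j).coeff 0) = -αm j := by
    intro j
    cases j with
    | zero =>
      have h1 : Φ 0 = 1 := (hΦmonic 0).natDegree_eq_zero.mp (hΦdeg 0)
      rw [h1, hαm0]
      simp
    | succ n =>
      rw [hαms n, Polynomial.coeff_zero_eq_eval_zero, hα n, neg_neg]
  -- telescoping of the Pr ratio
  have hratio : ∀ j k, j ≤ k → (((Pr j : ℝ) : ℂ))⁻¹ * ((Pr k : ℝ) : ℂ)
      = ((∏ l ∈ Finset.Ico j k, ρabs l : ℝ) : ℂ) := by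
    intro j k hjk
    have h1 : Pr j * ∏ l ∈ Finset.Ico j k, ρabs l = Pr k := by
      rw [← hPr j, ← hPr k, Finset.range_eq_Ico, Finset.range_eq_Ico]
      exact Finset.prod_Ico_consecutive ρabs (Nat.zero_le j) hjk
    rw [← h1]
    push_cast
    rw [← mul_assoc, inv_mul_cancel₀ (hPrne j), one_mul]
  -- Szegő decomposition of z·φₖ
  have hdecomp : ∀ k, zmul (φ k)
      = fun z => ((ρabs k : ℝ) : ℂ) * φ (k + 1) z + conj (α k) * φs k z := by
    intro k; funext z
    have h := (hszego k z).1
    show z * φ k z = _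
    rw [h, ← mul_assoc, mul_inv_cancel₀ (hρne k), one_mul]
    ring
  have hA : ∀ j k, opucInner μ (φ j) (zmul (φ k))
      = ((ρabs k : ℝ) : ℂ) * opucInner μ (φ j) (φ (k + 1))
        + conj (α k) * opucInner μ (φ j) (φs k) := by
    intro j k
    rw [hdecomp k]
    exact oi_combo μ _ _ _ _ _ (hInt (hPLφ j) (hPLφ (k+1))) (hInt (hPLφ j) (hPLφs k))
  have hB : ∀ j k, opucInner μ (φs j) (zmul (φ k))
      = ((ρabs k : ℝ) : ℂ) * opucInner μ (φs j) (φ (k + 1))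
        + conj (α k) * opucInner μ (φs j) (φs k) := by
    intro j k
    rw [hdecomp k]
    exact oi_combo μ _ _ _ _ _ (hInt (hPLφs j) (hPLφ (k+1))) (hInt (hPLφs j) (hPLφs k))
  -- unrotated formulas
  have hAle : ∀ j k, j ≤ k → opucInner μ (φ j) (zmul (φ k))
      = -conj (α k) * αm j * ((∏ l ∈ Finset.Ico j k, ρabs l : ℝ) : ℂ) := by
    intro j k hjk
    rw [hA j k, hφφ j (k+1), if_neg (by omega), hX j k hjk, hcoeff0 j, mul_zero, zero_add,
      mul_assoc (-αm j), hratio j k hjk]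
    ring
  have hAk1 : ∀ k, opucInner μ (φ (k+1)) (zmul (φ k)) = ((ρabs k : ℝ) : ℂ) := by
    intro k
    rw [hA, hφφ, if_pos rfl, hXzero (k+1) k (Nat.lt_succ_self k), mul_zero, add_zero, mul_one]
  have hAgt : ∀ j k, k + 2 ≤ j → opucInner μ (φ j) (zmul (φ k)) = 0 := by
    intro j k h2
    rw [hA, hφφ, if_neg (by omega), hXzero j k (by omega), mul_zero, mul_zero, add_zero]
  have hBle : ∀ j k, j ≤ k → opucInner μ (φs j) (zmul (φ k))
      = conj (α k) * ((∏ l ∈ Finset.Ico j k, ρabs l : ℝ) : ℂ) := by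
    intro j k hjk
    have h1 : opucInner μ (φs j) (φ (k+1)) = 0 := by
      rw [← oi_conj, hXzero (k+1) j (by omega), map_zero]
    rw [hB, h1, mul_zero, zero_add, hZ j k hjk, hratio j k hjk]
  have hBgt : ∀ j k, k < j → opucInner μ (φs j) (zmul (φ k)) = 0 := by
    intro j k hkj
    have h1 : opucInner μ (φs j) (φ (k+1)) = conj (opucInner μ (φ (k+1)) (φs j)) :=
      (oi_conj μ _ _).symm
    have h2 : opucInner μ (φs j) (φs k) = conj (opucInner μ (φs k) (φs j)) :=
      (oi_conj μ _ _).symm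
    have hPrsucc : Pr (k+1) = Pr k * ρabs k := by
      rw [← hPr (k+1), ← hPr k, Finset.prod_range_succ]
    have e1 : opucInner μ (φs j) (φ (k+1))
        = -conj (α k) * (((Pr (k+1) : ℝ) : ℂ))⁻¹ * ((Pr j : ℝ) : ℂ) := by
      rw [h1, hX (k+1) j hkj, hcoeff0 (k+1), hαms k]
      simp only [map_mul, map_neg, map_inv₀, Complex.conj_ofReal, Complex.conj_conj]
    have e2 : opucInner μ (φs j) (φs k)
        = (((Pr k : ℝ) : ℂ))⁻¹ * ((Pr j : ℝ) : ℂ) := by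
      rw [h2, hZ k j (le_of_lt hkj)]
      simp only [map_mul, map_inv₀, Complex.conj_ofReal]
    rw [hB, e1, e2, hPrsucc]
    push_cast
    rw [mul_inv]
    have hcc : ((ρabs k : ℝ) : ℂ) * (((ρabs k : ℝ) : ℂ))⁻¹ = 1 := mul_inv_cancel₀ (hρne k)
    linear_combination (-(conj (α k)) * (((Pr k : ℝ) : ℂ))⁻¹ * ((Pr j : ℝ) : ℂ)) * hcc
  -- unimodular products
  have hW1 : ∀ n, conj (∏ l ∈ Finset.range n, ζ l) * (∏ l ∈ Finset.range n, ζ l) = 1 := by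
    intro n
    rw [map_prod, ← Finset.prod_mul_distrib]
    refine Finset.prod_eq_one fun l _ => ?_
    rw [mul_comm, Complex.mul_conj, Complex.normSq_eq_norm_sq, hζ l]
    norm_num
  have hWfac : ∀ j k, j ≤ k →
      conj (∏ l ∈ Finset.range j, ζ l) * (∏ l ∈ Finset.range k, ζ l)
        = ∏ l ∈ Finset.Ico j k, ζ l := by
    intro j k hjk
    have h1 : (∏ l ∈ Finset.range k, ζ l)
        = (∏ l ∈ Finset.range j, ζ l) * ∏ l ∈ Finset.Ico j k, ζ l := by
      rw [Finset.range_eq_Ico, Finset.range_eq_Ico]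
      exact (Finset.prod_Ico_consecutive ζ (Nat.zero_le j) hjk).symm
    rw [h1, ← mul_assoc, hW1 j, one_mul]
  have hρprod : ∀ j k, (∏ l ∈ Finset.Ico j k, ρ l)
      = (∏ l ∈ Finset.Ico j k, ζ l) * ((∏ l ∈ Finset.Ico j k, ρabs l : ℝ) : ℂ) := by
    intro j k
    push_cast
    rw [← Finset.prod_mul_distrib]
    exact Finset.prod_congr rfl fun l _ => by rw [hρ l]; ring
  -- rotation reduction
  have hrotA : ∀ j k, opucInner μ (φr j) (zmul (φr k))
      = conj (∏ l ∈ Finset.range j, ζ l) * ((∏ l ∈ Finset.range k, ζ l)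
          * opucInner μ (φ j) (zmul (φ k))) := by
    intro j k
    have h1 : φr j = fun z => (∏ l ∈ Finset.range j, ζ l) * φ j z := funext (hφr j)
    have h2 : zmul (φr k) = fun z => (∏ l ∈ Finset.range k, ζ l) * (zmul (φ k)) z := by
      funext z
      show z * φr k z = _
      rw [hφr k z]
      show _ = _ * (z * φ k z)
      ring
    rw [h1, h2, oi_const_left, oi_const_right]
  have hrotB : ∀ j k, opucInner μ (φsr j) (zmul (φr k))
      = conj (∏ l ∈ Finset.range j, ζ l) * ((∏ l ∈ Finset.range k, ζ l)
          * opucInner μ (φs j) (zmul (φ k))) := by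
    intro j k
    have h1 : φsr j = fun z => (∏ l ∈ Finset.range j, ζ l) * φs j z := funext (hφsr j)
    have h2 : zmul (φr k) = fun z => (∏ l ∈ Finset.range k, ζ l) * (zmul (φ k)) z := by
      funext z
      show z * φr k z = _
      rw [hφr k z]
      show _ = _ * (z * φ k z)
      ring
    rw [h1, h2, oi_const_left, oi_const_right]
  -- final assembly
  constructor
  · intro j k
    refine ⟨?_, ?_, ?_, ?_⟩
    · intro hjk
      rw [hrotA j k, hAle j k (le_of_lt hjk), hρprod j k, ← hWfac j k (le_of_lt hjk)]
      ring
    · intro hjk; subst hjk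
      rw [hrotA j j, hAle j j le_rfl, Finset.Ico_self, Finset.prod_empty, ← mul_assoc, hW1 j]
      push_cast
      ring
    · intro hjk; subst hjk
      rw [hrotA (k+1) k, hAk1 k, ← mul_assoc]
      have h3 : conj (∏ l ∈ Finset.range (k+1), ζ l) * (∏ l ∈ Finset.range k, ζ l)
          = conj (ζ k) := by
        rw [Finset.prod_range_succ, map_mul, mul_comm (conj (∏ l ∈ Finset.range k, ζ l)),
          mul_assoc, hW1 k, mul_one]
      rw [h3, hρ k, map_mul, Complex.conj_ofReal]
      ring
    · intro h
      rw [hrotA j k, hAgt j k h, mul_zero, mul_zero]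
  · intro j k
    refine ⟨?_, ?_, ?_⟩
    · intro hjk
      rw [hrotB j k, hBle j k (le_of_lt hjk), hρprod j k, ← hWfac j k (le_of_lt hjk)]
      ring
    · intro hjk; subst hjk
      rw [hrotB j j, hBle j j le_rfl, Finset.Ico_self, Finset.prod_empty, ← mul_assoc, hW1 j]
      push_cast
      ring
    · intro h
      rw [hrotB j k, hBgt j k h, mul_zero, mul_zero]
end

section
/- With the rotated OPUC setup and the forward Szegő recursion (see context), the following eight inner product identities hold for all n ∈ ℕ (with α_{−1} = −1 and ρ_{−1} interpreted so that the n = 0 cases are covered by the stated conventions): ⟨φ_{2n+1}^∠, z·φ_{2n+1}^∠⟩ = −conj(α_{2n+1})·α_{2n}; ⟨φ_{2n+3}^∠, z²·φ_{2n+1}^∠⟩ = conj(ρ_{2n+1})·conj(ρ_{2n+2}); ⟨φ_{2n}^{∠,*}, z·φ_{2n+1}^∠⟩ = conj(α_{2n+1})·ρ_{2n}; ⟨φ_{2n+2}^{∠,*}, z²·φ_{2n+1}^∠⟩ = conj(α_{2n+2})·conj(ρ_{2n+1}); ⟨φ_{2n}^{∠,*}, z·φ_{2n}^{∠,*}⟩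 = −conj(α_{2n})·α_{2n−1}; ⟨φ_{2n−2}^{∠,*}, φ_{2n}^{∠,*}⟩ = ρ_{2n−2}·ρ_{2n−1} (n ≥ 1); ⟨φ_{2n+1}^∠, z·φ_{2n}^{∠,*}⟩ = −α_{2n−1}·conj(ρ_{2n}); ⟨φ_{2n−1}^∠, φ_{2n}^{∠,*}⟩ = −α_{2n−2}·ρ_{2n−1} (n ≥ 1). -/
open MeasureTheory ComplexConjugate

/-- Multiplication of a function by the square of the independent variable. -/
def z2mul (f : ℂ → ℂ) : ℂ → ℂ := fun z => z ^ 2 * f z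

namespace RotOPUC

variable {μ : Measure ℂ}

lemma ae_circle (hsupp : measureSupport μ ⊆ {z : ℂ | ‖z‖ = 1}) :
    ∀ᵐ z ∂μ, ‖z‖ = 1 := by
  rw [MeasureTheory.ae_iff]
  have hsub : {z : ℂ | ¬ ‖z‖ = 1} ⊆ (measureSupport μ)ᶜ := fun z hz hzs => hz (hsupp hzs)
  refine measure_mono_null hsub ?_
  refine measure_null_of_locally_null _ fun x hx => ?_
  simp only [measureSupport, Set.mem_compl_iff, Set.mem_setOf_eq, not_forall] at hx
  obtain ⟨U, hU, hU0⟩ := hx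
  exact ⟨U, nhdsWithin_le_nhds hU, by simpa using hU0⟩

lemma opuc_integrable [IsProbabilityMeasure μ] (hae : ∀ᵐ z ∂μ, ‖z‖ = 1)
    {f g : ℂ → ℂ} (hf : Continuous f) (hg : Continuous g) :
    Integrable (fun z => conj (f z) * g z) μ := by
  have hc : Continuous fun z => conj (f z) * g z :=
    (Complex.continuous_conj.comp hf).mul hg
  obtain ⟨C, hC⟩ := (isCompact_sphere (0:ℂ) 1).exists_bound_of_continuousOn hc.continuousOn
  refine (integrable_const C).mono' hc.aestronglyMeasurable ?_
  filter_upwards [hae] with z hz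
  exact hC z (mem_sphere_zero_iff_norm.2 (by rw [hz]))

lemma opucInner_conj (f g : ℂ → ℂ) : opucInner μ f g = conj (opucInner μ g f) := by
  rw [opucInner, opucInner, ← integral_conj]
  exact integral_congr_ae (Filter.Eventually.of_forall fun z => by
    simp only [map_mul, Complex.conj_conj]; ring)

lemma opucInner_smul_left (a : ℂ) (f g : ℂ → ℂ) :
    opucInner μ (fun z => a * f z) g = conj a * opucInner μ f g := by
  rw [opucInner, opucInner, ← integral_const_mul]
  exact integral_congr_ae (Filter.Eventually.of_forall fun z => by
    simp only [map_mul]; ring)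

lemma opucInner_smul_right (a : ℂ) (f g : ℂ → ℂ) :
    opucInner μ f (fun z => a * g z) = a * opucInner μ f g := by
  rw [opucInner, opucInner, ← integral_const_mul]
  exact integral_congr_ae (Filter.Eventually.of_forall fun z => by ring)

lemma opucInner_comb [IsProbabilityMeasure μ] (hae : ∀ᵐ z ∂μ, ‖z‖ = 1)
    (f g h : ℂ → ℂ) (a b : ℂ) (hf : Continuous f) (hg : Continuous g) (hh : Continuous h) :
    opucInner μ f (fun z => a * g z + b * h z)
      = a * opucInner μ f g + b * opucInner μ f h := by
  rw [opucInner, opucInner, opucInner]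
  rw [show (fun z => conj (f z) * (a * g z + b * h z))
      = fun z => a * (conj (f z) * g z) + b * (conj (f z) * h z) from funext fun z => by ring]
  rw [integral_add ((opuc_integrable hae hf hg).const_mul a)
      ((opuc_integrable hae hf hh).const_mul b), integral_const_mul, integral_const_mul]

lemma opucInner_sum_right [IsProbabilityMeasure μ] (hae : ∀ᵐ z ∂μ, ‖z‖ = 1)
    {f : ℂ → ℂ} (hf : Continuous f) (s : Finset ℕ) (g : ℕ → ℂ → ℂ)
    (hg : ∀ i, Continuous (g i)) :
    opucInner μ f (fun z => ∑ i ∈ s, g i z) = ∑ i ∈ s, opucInner μ f (g i) := by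
  rw [opucInner]
  rw [show (fun z => conj (f z) * ∑ i ∈ s, g i z)
      = fun z => ∑ i ∈ s, conj (f z) * g i z from funext fun z => Finset.mul_sum _ _ _]
  rw [integral_finset_sum s fun i _ => opuc_integrable hae hf (hg i)]
  rfl

end RotOPUC

open RotOPUC

/-- **The eight special inner products constituting the entries of the rotated CMV matrix**
(rotated analogue of Simon, Prop. 1.5.10), with the conventions `α₋₁ = -1` (encoded via
`αm`, where `αm k = α (k-1)`) and `n ≥ 1` where an index `2n-1` or `2n-2` appears. -/
theorem rotated_opuc_eight_inner_products
    (μ : Measure ℂ) [IsProbabilityMeasure μ]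
    -- the support of `μ` is an infinite subset of the unit circle
    (hsupp_circ : measureSupport μ ⊆ {z : ℂ | ‖z‖ = 1})
    (hsupp_inf : (measureSupport μ).Infinite)
    -- `Φₙ` is the monic OPUC of degree `n`
    (Φ : ℕ → Polynomial ℂ)
    (hΦmonic : ∀ n, (Φ n).Monic) (hΦdeg : ∀ n, (Φ n).natDegree = n)
    (hΦorth : ∀ n, ∀ j < n, opucInner μ (fun z => (Φ n).eval z) (fun z => z ^ j) = 0)
    -- `Φₙ*` is the reverse polynomial of `Φₙ`
    (Φs : ℕ → ℂ → ℂ)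
    (hΦs : ∀ n z, Φs n z = ∑ j ∈ Finset.range (n + 1), conj ((Φ n).coeff (n - j)) * z ^ j)
    -- the Verblunsky coefficients, with `|αₙ| < 1`
    (α : ℕ → ℂ) (hα : ∀ n, α n = -conj ((Φ (n + 1)).eval 0))
    (hα1 : ∀ n, ‖α n‖ < 1)
    -- `αm k = α (k - 1)`, with the convention `α₋₁ = -1`
    (αm : ℕ → ℂ) (hαm0 : αm 0 = -1) (hαms : ∀ n, αm (n + 1) = α n)
    -- `ρabs n = |ρₙ| = (1 - |αₙ|²)^{1/2}` and the Szegő norm identity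
    (ρabs : ℕ → ℝ) (hρabs : ∀ n, ρabs n = Real.sqrt (1 - ‖α n‖ ^ 2))
    (hΦnorm : ∀ n, opucInner μ (fun z => (Φ n).eval z) (fun z => (Φ n).eval z)
      = (((∏ j ∈ Finset.range n, ρabs j : ℝ)) : ℂ) ^ 2)
    -- a sequence of unimodular numbers and the rotated `ρₙ = |ρₙ|·ζₙ`
    (ζ : ℕ → ℂ) (hζ : ∀ n, ‖ζ n‖ = 1)
    (ρ : ℕ → ℂ) (hρ : ∀ n, ρ n = ((ρabs n : ℝ) : ℂ) * ζ n)
    -- the orthonormal polynomials, their reverses, and the rotated versions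
    (φ φs φr φsr : ℕ → ℂ → ℂ)
    (hφ : ∀ n z, φ n z = (((∏ j ∈ Finset.range n, ρabs j : ℝ)) : ℂ)⁻¹ * (Φ n).eval z)
    (hφs : ∀ n z, φs n z = (((∏ j ∈ Finset.range n, ρabs j : ℝ)) : ℂ)⁻¹ * Φs n z)
    (hφr : ∀ n z, φr n z = (∏ j ∈ Finset.range n, ζ j) * φ n z)
    (hφsr : ∀ n z, φsr n z = (∏ j ∈ Finset.range n, ζ j) * φs n z)
    -- the forward Szegő recursion
    (hszego : ∀ (n : ℕ) (z : ℂ),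
      φ (n + 1) z = ((ρabs n : ℝ) : ℂ)⁻¹ * (z * φ n z - conj (α n) * φs n z)
      ∧ φs (n + 1) z = ((ρabs n : ℝ) : ℂ)⁻¹ * (φs n z - α n * z * φ n z)) :
    (∀ n : ℕ, opucInner μ (φr (2 * n + 1)) (zmul (φr (2 * n + 1)))
      = -conj (α (2 * n + 1)) * α (2 * n))
    ∧ (∀ n : ℕ, opucInner μ (φr (2 * n + 3)) (z2mul (φr (2 * n + 1)))
      = conj (ρ (2 * n + 1)) * conj (ρ (2 * n + 2)))
    ∧ (∀ n : ℕ, opucInner μ (φsr (2 * n)) (zmul (φr (2 * n + 1)))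
      = conj (α (2 * n + 1)) * ρ (2 * n))
    ∧ (∀ n : ℕ, opucInner μ (φsr (2 * n + 2)) (z2mul (φr (2 * n + 1)))
      = conj (α (2 * n + 2)) * conj (ρ (2 * n + 1)))
    ∧ (∀ n : ℕ, opucInner μ (φsr (2 * n)) (zmul (φsr (2 * n)))
      = -conj (α (2 * n)) * αm (2 * n))
    ∧ (∀ n : ℕ, 1 ≤ n → opucInner μ (φsr (2 * n - 2)) (φsr (2 * n))
      = ρ (2 * n - 2) * ρ (2 * n - 1))
    ∧ (∀ n : ℕ, opucInner μ (φr (2 * n + 1)) (zmul (φsr (2 * n)))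
      = -αm (2 * n) * conj (ρ (2 * n)))
    ∧ (∀ n : ℕ, 1 ≤ n → opucInner μ (φr (2 * n - 1)) (φsr (2 * n))
      = -α (2 * n - 2) * ρ (2 * n - 1)) := by
  classical
  have hae : ∀ᵐ z ∂μ, ‖z‖ = 1 := ae_circle hsupp_circ
  -- numeric facts
  have habs_lt : ∀ n, 1 - ‖α n‖ ^ 2 > 0 := fun n => by
    have h1 := hα1 n
    have h0 := norm_nonneg (α n)
    nlinarith
  have hρpos : ∀ n, 0 < ρabs n := fun n => by
    rw [hρabs]; exact Real.sqrt_pos.2 (habs_lt n)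
  have hρne : ∀ n, ((ρabs n : ℝ) : ℂ) ≠ 0 := fun n =>
    Complex.ofReal_ne_zero.2 (hρpos n).ne'
  have hρsq : ∀ n, 1 - α n * conj (α n) = ((ρabs n : ℝ) : ℂ) ^ 2 := fun n => by
    rw [Complex.mul_conj, hρabs, ← Complex.ofReal_pow,
      Real.sq_sqrt (le_of_lt (habs_lt n)), Complex.normSq_eq_norm_sq]
    push_cast; ring
  set c : ℕ → ℝ := fun n => ∏ j ∈ Finset.range n, ρabs j with hcdef
  have hcpos : ∀ n, 0 < c n := fun n => Finset.prod_pos fun j _ => hρpos j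
  have hcne : ∀ n, ((c n : ℝ) : ℂ) ≠ 0 := fun n => Complex.ofReal_ne_zero.2 (hcpos n).ne'
  set u : ℕ → ℂ := fun n => ∏ j ∈ Finset.range n, ζ j with hudef
  have huabs : ∀ n, ‖u n‖ = 1 := fun n => by
    rw [hudef]; rw [norm_prod]; exact Finset.prod_eq_one fun j _ => hζ j
  have hu1 : ∀ n, conj (u n) * u n = 1 := fun n => by
    rw [mul_comm, Complex.mul_conj, Complex.normSq_eq_norm_sq, huabs, one_pow, Complex.ofReal_one]
  have husucc : ∀ n, u (n + 1) = u n * ζ n := fun n => Finset.prod_range_succ ζ n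
  -- restated hypotheses
  have hNorm : ∀ n, opucInner μ (fun z => (Φ n).eval z) (fun z => (Φ n).eval z)
      = ((c n : ℝ) : ℂ) ^ 2 := hΦnorm
  have hphi : ∀ n z, φ n z = ((c n : ℝ) : ℂ)⁻¹ * (Φ n).eval z := hφ
  have hphis : ∀ n z, φs n z = ((c n : ℝ) : ℂ)⁻¹ * Φs n z := hφs
  have hphir : ∀ n z, φr n z = u n * φ n z := hφr
  have hphisr : ∀ n z, φsr n z = u n * φs n z := hφsr
  -- continuity
  have hΦscont : ∀ n, Continuous (Φs n) := fun n => by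
    rw [show Φs n = fun z => ∑ j ∈ Finset.range (n + 1), conj ((Φ n).coeff (n - j)) * z ^ j
      from funext (hΦs n)]
    exact continuous_finset_sum _ fun j _ => continuous_const.mul (continuous_pow j)
  have hφcont : ∀ n, Continuous (φ n) := fun n => by
    rw [show φ n = fun z => ((c n : ℝ) : ℂ)⁻¹ * (Φ n).eval z from funext (hphi n)]
    exact continuous_const.mul (Φ n).continuous
  have hφscont : ∀ n, Continuous (φs n) := fun n => by
    rw [show φs n = fun z => ((c n : ℝ) : ℂ)⁻¹ * Φs n z from funext (hphis n)]
    exact continuous_const.mul (hΦscont n)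
  -- φₙ* = zⁿ conj(φₙ) a.e.
  have hz_one : ∀ z : ℂ, ‖z‖ = 1 → z * conj z = 1 := fun z hz => by
    rw [Complex.mul_conj, Complex.normSq_eq_norm_sq, hz, one_pow, Complex.ofReal_one]
  have hφs_circ : ∀ n, ∀ᵐ z ∂μ, φs n z = z ^ n * conj (φ n z) := by
    intro n
    filter_upwards [hae] with z hz
    have hzz : z * conj z = 1 := hz_one z hz
    rw [hphis, hphi, map_mul]
    rw [show conj (((c n : ℝ) : ℂ)⁻¹) = ((c n : ℝ) : ℂ)⁻¹ by
      rw [map_inv₀, Complex.conj_ofReal]]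
    rw [show ((c n : ℝ) : ℂ)⁻¹ * Φs n z = ((c n : ℝ) : ℂ)⁻¹ * Φs n z from rfl]
    have key : Φs n z = z ^ n * conj ((Φ n).eval z) := by
      rw [hΦs n z]
      rw [Polynomial.eval_eq_sum_range' (n := n + 1)
        (lt_of_le_of_lt (le_of_eq (hΦdeg n)) (Nat.lt_succ_self n)) z]
      rw [map_sum, Finset.mul_sum]
      calc ∑ j ∈ Finset.range (n + 1), conj ((Φ n).coeff (n - j)) * z ^ j
          = ∑ j ∈ Finset.range (n + 1), conj ((Φ n).coeff (n - j)) * z ^ (n - (n - j)) := by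
            apply Finset.sum_congr rfl
            intro j hj
            rw [Nat.sub_sub_self (Nat.lt_succ_iff.mp (Finset.mem_range.mp hj))]
        _ = ∑ j ∈ Finset.range (n + 1), conj ((Φ n).coeff j) * z ^ (n - j) := by
            rw [← Finset.sum_range_reflect (fun j => conj ((Φ n).coeff j) * z ^ (n - j)) (n + 1)]
            apply Finset.sum_congr rfl
            intro j hj
            rw [show n + 1 - 1 - j = n - j from by omega]
        _ = ∑ j ∈ Finset.range (n + 1), z ^ n * conj ((Φ n).coeff j * z ^ j) := by
            apply Finset.sum_congr rfl
            intro j hj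
            have hj' : j ≤ n := Nat.lt_succ_iff.mp (Finset.mem_range.mp hj)
            rw [map_mul, map_pow]
            have h2 : z ^ (n - j) * z ^ j = z ^ n := by rw [← pow_add]; congr 1; omega
            have h3 : z ^ j * conj z ^ j = 1 := by rw [← mul_pow, hzz, one_pow]
            calc conj ((Φ n).coeff j) * z ^ (n - j)
                = conj ((Φ n).coeff j) * z ^ (n - j) * (z ^ j * conj z ^ j) := by
                  rw [h3, mul_one]
              _ = (z ^ (n - j) * z ^ j) * (conj ((Φ n).coeff j) * conj z ^ j) := by ring
              _ = z ^ n * (conj ((Φ n).coeff j) * conj z ^ j) := by rw [h2]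
    rw [key]; ring
  -- master lemma for Φ
  have hexp : ∀ n (P : Polynomial ℂ), P.natDegree ≤ n →
      opucInner μ (fun z => (Φ n).eval z) (fun z => P.eval z)
        = P.coeff n * opucInner μ (fun z => (Φ n).eval z) (fun z => z ^ n) := by
    intro n P hP
    rw [show (fun z : ℂ => P.eval z)
        = fun z => ∑ j ∈ Finset.range (n + 1), P.coeff j * z ^ j from
      funext fun z => Polynomial.eval_eq_sum_range' (Nat.lt_succ_of_le hP) z]
    rw [opucInner_sum_right hae (Φ n).continuous (Finset.range (n + 1))
      (fun j => fun z => P.coeff j * z ^ j)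
      (fun j => continuous_const.mul (continuous_pow j))]
    rw [Finset.sum_range_succ]
    rw [Finset.sum_eq_zero (fun j hj => by
      rw [opucInner_smul_right, hΦorth n j (Finset.mem_range.mp hj), mul_zero])]
    rw [zero_add, opucInner_smul_right]
  have hzn : ∀ n, opucInner μ (fun z => (Φ n).eval z) (fun z => z ^ n)
      = ((c n : ℝ) : ℂ) ^ 2 := by
    intro n
    have h1 := hexp n (Φ n) (le_of_eq (hΦdeg n))
    rw [hNorm n] at h1
    rw [show (Φ n).coeff n = 1 from by
      have h2 := hΦmonic n
      rwa [Polynomial.Monic, Polynomial.leadingCoeff, hΦdeg n] at h2, one_mul] at h1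
    exact h1.symm
  have hmaster : ∀ n (P : Polynomial ℂ), P.natDegree ≤ n →
      opucInner μ (fun z => (Φ n).eval z) (fun z => P.eval z)
        = P.coeff n * ((c n : ℝ) : ℂ) ^ 2 := fun n P hP => by
    rw [hexp n P hP, hzn n]
  -- master lemma for φ
  have hPmaster : ∀ n (P : Polynomial ℂ), P.natDegree ≤ n →
      opucInner μ (φ n) (fun z => P.eval z) = P.coeff n * ((c n : ℝ) : ℂ) := by
    intro n P hP
    rw [show φ n = fun z => ((c n : ℝ) : ℂ)⁻¹ * (Φ n).eval z from funext (hphi n)]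
    rw [opucInner_smul_left, hmaster n P hP, map_inv₀, Complex.conj_ofReal]
    field_simp [hcne n]
  -- the reversed polynomial as an actual polynomial
  set Q : ℕ → Polynomial ℂ := fun m =>
    ∑ j ∈ Finset.range (m + 1), Polynomial.C (conj ((Φ m).coeff (m - j))) * Polynomial.X ^ j
    with hQdef
  have hQeval : ∀ m z, (Q m).eval z = Φs m z := by
    intro m z
    rw [hΦs, hQdef]
    simp [Polynomial.eval_finset_sum]
  have hQdeg : ∀ m, (Q m).natDegree ≤ m := by
    intro m
    apply Polynomial.natDegree_sum_le_of_forall_le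
    intro j hj
    refine le_trans (Polynomial.natDegree_C_mul_le _ _) ?_
    rw [Polynomial.natDegree_X_pow]
    exact Nat.lt_succ_iff.mp (Finset.mem_range.mp hj)
  have hQcoeff : ∀ m, (Q m).coeff m = conj ((Φ m).coeff 0) := by
    intro m
    rw [hQdef]
    simp only [Polynomial.finset_sum_coeff, Polynomial.coeff_C_mul, Polynomial.coeff_X_pow]
    rw [Finset.sum_eq_single_of_mem m (Finset.self_mem_range_succ m)]
    · simp
    · intro j hj hne
      simp [Ne.symm hne]
  have hQtop : ∀ m, (Q m).coeff m = -(αm m) := by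
    intro m
    rw [hQcoeff]
    cases m with
    | zero =>
      rw [(Polynomial.Monic.natDegree_eq_zero (hΦmonic 0)).mp (hΦdeg 0)]
      simp [hαm0]
    | succ k =>
      rw [hαms k, hα k, ← Polynomial.coeff_zero_eq_eval_zero]
      simp
  -- basic vanishing inner products
  have hzero : ∀ n m, m < n → opucInner μ (φ n) (φ m) = 0 := by
    intro n m hmn
    rw [show φ m = fun z => ((c m : ℝ) : ℂ)⁻¹ * (Φ m).eval z from funext (hphi m)]
    rw [opucInner_smul_right, hPmaster n (Φ m) (le_of_eq_of_le (hΦdeg m) (le_of_lt hmn))]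
    rw [Polynomial.coeff_eq_zero_of_natDegree_lt (lt_of_le_of_lt (le_of_eq (hΦdeg m)) hmn)]
    ring
  have hzero_r : ∀ n m, m < n → opucInner μ (φ m) (φ n) = 0 := by
    intro n m hmn
    rw [opucInner_conj, hzero n m hmn, map_zero]
  have hzero_s : ∀ n m, m < n → opucInner μ (φ n) (φs m) = 0 := by
    intro n m hmn
    rw [show φs m = fun z => ((c m : ℝ) : ℂ)⁻¹ * (Q m).eval z from
      funext fun z => by rw [hphis, hQeval]]
    rw [opucInner_smul_right, hPmaster n (Q m) (le_trans (hQdeg m) (le_of_lt hmn))]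
    rw [Polynomial.coeff_eq_zero_of_natDegree_lt (lt_of_le_of_lt (hQdeg m) hmn)]
    ring
  have hzero_s_r : ∀ n m, m < n → opucInner μ (φs m) (φ n) = 0 := by
    intro n m hmn
    rw [opucInner_conj, hzero_s n m hmn, map_zero]
  have hzero_zs : ∀ n m, m + 1 < n → opucInner μ (φ n) (fun z => z * φs m z) = 0 := by
    intro n m hmn
    rw [show (fun z => z * φs m z) = fun z => ((c m : ℝ) : ℂ)⁻¹ * (Polynomial.X * Q m).eval z
      from funext fun z => by
        rw [Polynomial.eval_mul, Polynomial.eval_X, hphis, hQeval]; ring]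
    have hdeg : (Polynomial.X * Q m).natDegree ≤ m + 1 := by
      refine le_trans (Polynomial.natDegree_mul_le) ?_
      rw [Polynomial.natDegree_X]
      have := hQdeg m
      omega
    rw [opucInner_smul_right, hPmaster n _ (le_trans hdeg (le_of_lt hmn))]
    rw [Polynomial.coeff_eq_zero_of_natDegree_lt (lt_of_le_of_lt hdeg hmn)]
    ring
  -- norm one and ⟨φ n, φ n*⟩
  have hA : ∀ n, opucInner μ (φ n) (φ n) = 1 := by
    intro n
    rw [show φ n = fun z => ((c n : ℝ) : ℂ)⁻¹ * (Φ n).eval z from funext (hphi n)]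
    rw [opucInner_smul_right]
    rw [show (fun z => ((c n : ℝ) : ℂ)⁻¹ * (Φ n).eval z) = φ n from (funext (hphi n)).symm]
    rw [hPmaster n (Φ n) (le_of_eq (hΦdeg n))]
    rw [show (Φ n).coeff n = 1 from by
      have h2 := hΦmonic n
      rwa [Polynomial.Monic, Polynomial.leadingCoeff, hΦdeg n] at h2]
    field_simp [hcne n]
  have hB : ∀ n, opucInner μ (φ n) (φs n) = -(αm n) := by
    intro n
    rw [show φs n = fun z => ((c n : ℝ) : ℂ)⁻¹ * (Q n).eval z from
      funext fun z => by rw [hphis, hQeval]]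
    rw [opucInner_smul_right, hPmaster n (Q n) (hQdeg n), hQtop n]
    field_simp [hcne n]
  -- Szegő recursion, rearranged as function identities
  have hR1 : ∀ n, (fun z => z * φ n z)
      = fun z => ((ρabs n : ℝ) : ℂ) * φ (n + 1) z + conj (α n) * φs n z := by
    intro n
    funext z
    rw [(hszego n z).1]
    field_simp [hρne n]
    ring
  have hR3 : ∀ n, φs (n + 1)
      = fun z => ((ρabs n : ℝ) : ℂ)⁻¹ * φs n z + (-((ρabs n : ℝ) : ℂ)⁻¹ * α n) * (z * φ n z) := by
    intro n
    funext z
    rw [(hszego n z).2]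
    ring
  have hR5 : ∀ n, (fun z : ℂ => z ^ 2 * φ n z)
      = fun z => ((ρabs n : ℝ) : ℂ) * (z * φ (n + 1) z) + conj (α n) * (z * φs n z) := by
    intro n
    funext z
    rw [(hszego n z).1]
    field_simp [hρne n]
    ring
  -- circle symmetry
  have hcirc : ∀ n m k : ℕ, n ≤ m + k →
      opucInner μ (φs n) (fun z => z ^ k * φs m z)
        = opucInner μ (φ m) (fun z => z ^ (m + k - n) * φ n z) := by
    intro n m k hnmk
    rw [opucInner, opucInner]
    apply integral_congr_ae
    filter_upwards [hae, hφs_circ n, hφs_circ m] with z hz h1 h2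
    rw [h1, h2]
    simp only [map_mul, map_pow, Complex.conj_conj]
    have h0 : conj z * z = 1 := by rw [mul_comm]; exact hz_one z hz
    have h4 : z ^ k * z ^ m = z ^ (m + k - n) * z ^ n := by
      rw [← pow_add, ← pow_add]; congr 1; omega
    have h3 : conj z ^ n * z ^ n = 1 := by rw [← mul_pow, h0, one_pow]
    linear_combination (φ n z * conj (φ m z) * conj z ^ n) * h4
      + (φ n z * conj (φ m z) * z ^ (m + k - n)) * h3
  have hmix : ∀ m k : ℕ, opucInner μ (φ (m + k)) (fun z => z ^ k * φs m z)
      = conj (opucInner μ (φs (m + k)) (φ m)) := by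
    intro m k
    rw [opucInner, opucInner, ← integral_conj]
    apply integral_congr_ae
    filter_upwards [hφs_circ m, hφs_circ (m + k)] with z h1 h2
    rw [h1, h2]
    simp only [map_mul, map_pow, Complex.conj_conj]
    have h4 : z ^ k * z ^ m = z ^ (m + k) := by rw [← pow_add]; congr 1; omega
    linear_combination (conj (φ (m + k) z) * conj (φ m z)) * h4
  -- the unrotated atomic inner products
  have hD : ∀ n, opucInner μ (φ n) (fun z => z * φ n z) = -(conj (α n) * αm n) := by
    intro n
    rw [hR1 n, opucInner_comb hae (φ n) (φ (n + 1)) (φs n) _ _ (hφcont n) (hφcont (n + 1))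
      (hφscont n), hzero_r (n + 1) n (Nat.lt_succ_self n), hB n]
    ring
  have hE : ∀ n, opucInner μ (φs n) (φs n) = 1 := by
    intro n
    have h := hcirc n n 0 (by omega)
    rw [show (fun z : ℂ => z ^ 0 * φs n z) = φs n from funext fun z => by
      rw [pow_zero, one_mul]] at h
    rw [show n + 0 - n = 0 from by omega] at h
    rw [show (fun z : ℂ => z ^ 0 * φ n z) = φ n from funext fun z => by
      rw [pow_zero, one_mul]] at h
    rw [h, hA n]
  have hF : ∀ n, opucInner μ (φs n) (fun z => z * φs n z) = -(conj (α n) * αm n) := by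
    intro n
    have h := hcirc n n 1 (by omega)
    rw [show (fun z : ℂ => z ^ 1 * φs n z) = fun z => z * φs n z from funext fun z => by
      rw [pow_one]] at h
    rw [show n + 1 - n = 1 from by omega] at h
    rw [show (fun z : ℂ => z ^ 1 * φ n z) = fun z => z * φ n z from funext fun z => by
      rw [pow_one]] at h
    rw [h, hD n]
  have hG : ∀ n, opucInner μ (φs n) (fun z => z * φ n z) = conj (α n) := by
    intro n
    rw [hR1 n, opucInner_comb hae (φs n) (φ (n + 1)) (φs n) _ _ (hφscont n) (hφcont (n + 1))
      (hφscont n), hzero_s_r (n + 1) n (Nat.lt_succ_self n), hE n]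
    ring
  have hH : ∀ n, opucInner μ (φs n) (φs (n + 1)) = ((ρabs n : ℝ) : ℂ) := by
    intro n
    rw [hR3 n, opucInner_comb hae (φs n) (φs n) (fun z => z * φ n z) _ _ (hφscont n)
      (hφscont n) (continuous_id.mul (hφcont n)), hE n, hG n]
    field_simp [hρne n]
    linear_combination hρsq n
  have hI : ∀ n, opucInner μ (φs n) (fun z => z * φ (n + 1) z)
      = conj (α (n + 1)) * ((ρabs n : ℝ) : ℂ) := by
    intro n
    rw [hR1 (n + 1), opucInner_comb hae (φs n) (φ (n + 1 + 1)) (φs (n + 1)) _ _ (hφscont n)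
      (hφcont (n + 1 + 1)) (hφscont (n + 1)), hzero_s_r (n + 1 + 1) n (by omega), hH n]
    ring
  have hK : ∀ n, opucInner μ (φs (n + 1)) (fun z => z * φs n z) = 0 := by
    intro n
    have h := hcirc (n + 1) n 1 (by omega)
    rw [show (fun z : ℂ => z ^ 1 * φs n z) = fun z => z * φs n z from funext fun z => by
      rw [pow_one]] at h
    rw [show n + 1 - (n + 1) = 0 from by omega] at h
    rw [show (fun z : ℂ => z ^ 0 * φ (n + 1) z) = φ (n + 1) from funext fun z => by
      rw [pow_zero, one_mul]] at h
    rw [h, hzero_r (n + 1) n (Nat.lt_succ_self n)]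
  have hL : ∀ n, opucInner μ (φs (n + 1)) (fun z : ℂ => z ^ 2 * φ n z)
      = ((ρabs n : ℝ) : ℂ) * conj (α (n + 1)) := by
    intro n
    rw [hR5 n, opucInner_comb hae (φs (n + 1)) (fun z => z * φ (n + 1) z)
      (fun z => z * φs n z) _ _ (hφscont (n + 1)) (continuous_id.mul (hφcont (n + 1)))
      (continuous_id.mul (hφscont n)), hG (n + 1), hK n]
    ring
  have hM1 : ∀ n, opucInner μ (φ (n + 1 + 1)) (fun z => z * φ (n + 1) z)
      = ((ρabs (n + 1) : ℝ) : ℂ) := by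
    intro n
    rw [hR1 (n + 1), opucInner_comb hae (φ (n + 1 + 1)) (φ (n + 1 + 1)) (φs (n + 1)) _ _
      (hφcont (n + 1 + 1)) (hφcont (n + 1 + 1)) (hφscont (n + 1)), hA (n + 1 + 1),
      hzero_s (n + 1 + 1) (n + 1) (Nat.lt_succ_self _)]
    ring
  have hM : ∀ n, opucInner μ (φ (n + 1 + 1)) (fun z : ℂ => z ^ 2 * φ n z)
      = ((ρabs n : ℝ) : ℂ) * ((ρabs (n + 1) : ℝ) : ℂ) := by
    intro n
    rw [hR5 n, opucInner_comb hae (φ (n + 1 + 1)) (fun z => z * φ (n + 1) z)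
      (fun z => z * φs n z) _ _ (hφcont (n + 1 + 1)) (continuous_id.mul (hφcont (n + 1)))
      (continuous_id.mul (hφscont n)), hM1 n, hzero_zs (n + 1 + 1) n (by omega)]
    ring
  have hN : ∀ n, opucInner μ (φs n) (φs (n + 1 + 1))
      = ((ρabs n : ℝ) : ℂ) * ((ρabs (n + 1) : ℝ) : ℂ) := by
    intro n
    rw [hR3 (n + 1), opucInner_comb hae (φs n) (φs (n + 1)) (fun z => z * φ (n + 1) z) _ _
      (hφscont n) (hφscont (n + 1)) (continuous_id.mul (hφcont (n + 1))), hH n, hI n]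
    field_simp [hρne (n + 1)]
    linear_combination ((ρabs n : ℝ) : ℂ) * hρsq (n + 1)
  have hP1 : ∀ n, opucInner μ (φ n) (φs (n + 1)) = -(αm n) * ((ρabs n : ℝ) : ℂ) := by
    intro n
    rw [hR3 n, opucInner_comb hae (φ n) (φs n) (fun z => z * φ n z) _ _ (hφcont n)
      (hφscont n) (continuous_id.mul (hφcont n)), hB n, hD n]
    field_simp [hρne n]
    linear_combination (-(αm n)) * hρsq n
  have hO : ∀ n, opucInner μ (φ (n + 1)) (fun z => z * φs n z)
      = -(αm n) * ((ρabs n : ℝ) : ℂ) := by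
    intro n
    have h := hmix n 1
    rw [show (fun z : ℂ => z ^ 1 * φs n z) = fun z => z * φs n z from funext fun z => by
      rw [pow_one]] at h
    rw [opucInner_conj (φs (n + 1)) (φ n), Complex.conj_conj] at h
    rw [h, hP1 n]
  -- the eight identities
  refine ⟨?_, ?_, ?_, ?_, ?_, ?_, ?_, ?_⟩
  · -- ⟨φ_{2n+1}, zφ_{2n+1}⟩
    intro n
    rw [show φr (2 * n + 1) = fun z => u (2 * n + 1) * φ (2 * n + 1) z from funext (hphir _)]
    rw [show zmul (fun z => u (2 * n + 1) * φ (2 * n + 1) z)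
        = fun z => u (2 * n + 1) * (z * φ (2 * n + 1) z) from funext fun z => by
      simp only [zmul]; ring]
    rw [opucInner_smul_left, opucInner_smul_right, hD (2 * n + 1), hαms (2 * n)]
    linear_combination (-(conj (α (2 * n + 1)) * α (2 * n))) * hu1 (2 * n + 1)
  · -- ⟨φ_{2n+3}, z²φ_{2n+1}⟩
    intro n
    rw [show 2 * n + 3 = 2 * n + 1 + 1 + 1 from by omega,
      show 2 * n + 2 = 2 * n + 1 + 1 from by omega]
    rw [show φr (2 * n + 1 + 1 + 1) = fun z => u (2 * n + 1 + 1 + 1) * φ (2 * n + 1 + 1 + 1) z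
      from funext (hphir _)]
    rw [show φr (2 * n + 1) = fun z => u (2 * n + 1) * φ (2 * n + 1) z from funext (hphir _)]
    rw [show z2mul (fun z => u (2 * n + 1) * φ (2 * n + 1) z)
        = fun z => u (2 * n + 1) * (z ^ 2 * φ (2 * n + 1) z) from funext fun z => by
      simp only [z2mul]; ring]
    rw [opucInner_smul_left, opucInner_smul_right, hM (2 * n + 1),
      husucc (2 * n + 1 + 1), husucc (2 * n + 1), hρ (2 * n + 1), hρ (2 * n + 1 + 1)]
    simp only [map_mul, Complex.conj_ofReal]
    linear_combination (((ρabs (2 * n + 1) : ℝ) : ℂ) * ((ρabs (2 * n + 1 + 1) : ℝ) : ℂ)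
      * conj (ζ (2 * n + 1)) * conj (ζ (2 * n + 1 + 1))) * hu1 (2 * n + 1)
  · -- ⟨φ*_{2n}, zφ_{2n+1}⟩
    intro n
    rw [show φsr (2 * n) = fun z => u (2 * n) * φs (2 * n) z from funext (hphisr _)]
    rw [show φr (2 * n + 1) = fun z => u (2 * n + 1) * φ (2 * n + 1) z from funext (hphir _)]
    rw [show zmul (fun z => u (2 * n + 1) * φ (2 * n + 1) z)
        = fun z => u (2 * n + 1) * (z * φ (2 * n + 1) z) from funext fun z => by
      simp only [zmul]; ring]
    rw [opucInner_smul_left, opucInner_smul_right, hI (2 * n), husucc (2 * n), hρ (2 * n)]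
    linear_combination (conj (α (2 * n + 1)) * ((ρabs (2 * n) : ℝ) : ℂ) * ζ (2 * n))
      * hu1 (2 * n)
  · -- ⟨φ*_{2n+2}, z²φ_{2n+1}⟩
    intro n
    rw [show 2 * n + 2 = 2 * n + 1 + 1 from by omega]
    rw [show φsr (2 * n + 1 + 1) = fun z => u (2 * n + 1 + 1) * φs (2 * n + 1 + 1) z
      from funext (hphisr _)]
    rw [show φr (2 * n + 1) = fun z => u (2 * n + 1) * φ (2 * n + 1) z from funext (hphir _)]
    rw [show z2mul (fun z => u (2 * n + 1) * φ (2 * n + 1) z)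
        = fun z => u (2 * n + 1) * (z ^ 2 * φ (2 * n + 1) z) from funext fun z => by
      simp only [z2mul]; ring]
    rw [opucInner_smul_left, opucInner_smul_right, hL (2 * n + 1), husucc (2 * n + 1),
      hρ (2 * n + 1)]
    simp only [map_mul, Complex.conj_ofReal]
    linear_combination (conj (α (2 * n + 1 + 1)) * ((ρabs (2 * n + 1) : ℝ) : ℂ)
      * conj (ζ (2 * n + 1))) * hu1 (2 * n + 1)
  · -- ⟨φ*_{2n}, zφ*_{2n}⟩
    intro n
    rw [show φsr (2 * n) = fun z => u (2 * n) * φs (2 * n) z from funext (hphisr _)]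
    rw [show zmul (fun z => u (2 * n) * φs (2 * n) z)
        = fun z => u (2 * n) * (z * φs (2 * n) z) from funext fun z => by
      simp only [zmul]; ring]
    rw [opucInner_smul_left, opucInner_smul_right, hF (2 * n)]
    linear_combination (-(conj (α (2 * n)) * αm (2 * n))) * hu1 (2 * n)
  · -- ⟨φ*_{2n-2}, φ*_{2n}⟩
    intro n hn
    obtain ⟨m, hm⟩ : ∃ m, 2 * n = m + 2 := ⟨2 * n - 2, by omega⟩
    rw [hm, show m + 2 - 2 = m from by omega, show m + 2 - 1 = m + 1 from by omega,
      show m + 2 = m + 1 + 1 from by omega]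
    rw [show φsr m = fun z => u m * φs m z from funext (hphisr _)]
    rw [show φsr (m + 1 + 1) = fun z => u (m + 1 + 1) * φs (m + 1 + 1) z
      from funext (hphisr _)]
    rw [opucInner_smul_left, opucInner_smul_right, hN m, husucc (m + 1), husucc m,
      hρ m, hρ (m + 1)]
    linear_combination (ζ m * ζ (m + 1) * ((ρabs m : ℝ) : ℂ) * ((ρabs (m + 1) : ℝ) : ℂ))
      * hu1 m
  · -- ⟨φ_{2n+1}, zφ*_{2n}⟩
    intro n
    rw [show φr (2 * n + 1) = fun z => u (2 * n + 1) * φ (2 * n + 1) z from funext (hphir _)]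
    rw [show φsr (2 * n) = fun z => u (2 * n) * φs (2 * n) z from funext (hphisr _)]
    rw [show zmul (fun z => u (2 * n) * φs (2 * n) z)
        = fun z => u (2 * n) * (z * φs (2 * n) z) from funext fun z => by
      simp only [zmul]; ring]
    rw [opucInner_smul_left, opucInner_smul_right, hO (2 * n), husucc (2 * n), hρ (2 * n)]
    simp only [map_mul, Complex.conj_ofReal]
    linear_combination (-(αm (2 * n)) * ((ρabs (2 * n) : ℝ) : ℂ) * conj (ζ (2 * n)))
      * hu1 (2 * n)
  · -- ⟨φ_{2n-1}, φ*_{2n}⟩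
    intro n hn
    obtain ⟨m, hm⟩ : ∃ m, 2 * n = m + 2 := ⟨2 * n - 2, by omega⟩
    rw [hm, show m + 2 - 2 = m from by omega, show m + 2 - 1 = m + 1 from by omega,
      show m + 2 = m + 1 + 1 from by omega]
    rw [show φr (m + 1) = fun z => u (m + 1) * φ (m + 1) z from funext (hphir _)]
    rw [show φsr (m + 1 + 1) = fun z => u (m + 1 + 1) * φs (m + 1 + 1) z
      from funext (hphisr _)]
    rw [opucInner_smul_left, opucInner_smul_right, hP1 (m + 1), hαms m, husucc (m + 1),
      hρ (m + 1)]
    linear_combination (-(α m) * ((ρabs (m + 1) : ℝ) : ℂ) * ζ (m + 1)) * hu1 (m + 1)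
end

section
/- With the rotated OPUC setup, the forward Szegő recursion, and the rotated CMV basis {χₙ^∠} (see context), the following entries of the rotated CMV matrix C^∠_{kℓ} = ⟨χₖ^∠, z·χ_ℓ^∠⟩ hold for all n ∈ ℕ (with α_{−1} = −1, and the n ≥ 1 restriction where an index 2n−2 or 2n−1 appears): ⟨χ_{2n−2}^∠, z·χ_{2n}^∠⟩ = ρ_{2n−2}·ρ_{2n−1}; ⟨χ_{2n−1}^∠, z·χ_{2n}^∠⟩ = −α_{2n−2}·ρ_{2n−1}; ⟨χ_{2n}^∠, z·χ_{2n}^∠⟩ = −conj(α_{2n})·α_{2n−1}; ⟨χ_{2n+1}^∠, z·χ_{2n}^∠⟩ = −α_{2n−1}·conj(ρ_{2n}); ⟨χ_{2n−2}^∠, z·χ_{2n−1}^∠⟩ = conj(α_{2n−1})·ρ_{2n−2}; ⟨χ_{2n−1}^∠, z·χ_{2n−1}^∠⟩ = −conj(α_{2n−1})·α_{2n−2}; ⟨χ_{2n}^∠, z·χ_{2n−1}^∠⟩ = conj(α_{2n})·conj(ρ_{2n−1}); ⟨χ_{2n+1}^∠, z·χ_{2n−1}^∠⟩ = conj(ρ_{2n})·conj(ρ_{2n−1}).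 Moreover all entries C^∠_{kℓ} with |k − ℓ| ≥ 3 vanish. -/
open MeasureTheory ComplexConjugate

namespace CMVAux

variable {μ : Measure ℂ}

lemma ae_circle (μ : Measure ℂ)
    (hsupp : measureSupport μ ⊆ {z : ℂ | ‖z‖ = 1}) :
    ∀ᵐ z ∂μ, ‖z‖ = 1 := by
  have h0 : μ {z : ℂ | ¬ ‖z‖ = 1} = 0 := by
    have hsub : {z : ℂ | ¬ ‖z‖ = 1} ⊆ (measureSupport μ)ᶜ := by
      intro z hz hzs; exact hz (hsupp hzs)
    refine measure_mono_null hsub ?_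
    refine measure_null_of_locally_null _ (fun x hx => ?_)
    simp only [measureSupport, Set.mem_compl_iff, Set.mem_setOf_eq, not_forall] at hx
    obtain ⟨U, hU, hU0⟩ := hx
    refine ⟨U, mem_nhdsWithin_of_mem_nhds hU, by simpa using hU0⟩
  simpa [ae_iff] using h0

lemma conj_eq_inv (z : ℂ) (h : ‖z‖ = 1) : conj z = z⁻¹ := by
  have h1 : z * conj z = 1 := by
    rw [Complex.mul_conj]; norm_cast; simp [Complex.normSq_eq_norm_sq, h]
  have hz : z ≠ 0 := by intro h0; simp [h0] at h
  field_simp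
  linear_combination h1

lemma ne_zero_of_abs (z : ℂ) (h : ‖z‖ = 1) : z ≠ 0 := by
  intro h0; simp [h0] at h

lemma conj_mul_self (z : ℂ) (h : ‖z‖ = 1) : conj z * z = 1 := by
  rw [mul_comm, Complex.mul_conj, Complex.normSq_eq_norm_sq, h]
  norm_num

/-- A "nice" function: measurable and bounded on the unit circle. -/
def Nice (F : ℂ → ℂ) : Prop :=
  Measurable F ∧ ∃ C : ℝ, 0 ≤ C ∧ ∀ z : ℂ, ‖z‖ = 1 → ‖F z‖ ≤ C

lemma Nice.add {F G : ℂ → ℂ} (hF : Nice F) (hG : Nice G) : Nice (fun z => F z + G z) := by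
  obtain ⟨hFm, C1, hC1, hF⟩ := hF
  obtain ⟨hGm, C2, hC2, hG⟩ := hG
  exact ⟨hFm.add hGm, C1 + C2, by positivity, fun z hz =>
    le_trans (norm_add_le _ _) (add_le_add (hF z hz) (hG z hz))⟩

lemma Nice.mul {F G : ℂ → ℂ} (hF : Nice F) (hG : Nice G) : Nice (fun z => F z * G z) := by
  obtain ⟨hFm, C1, hC1, hF⟩ := hF
  obtain ⟨hGm, C2, hC2, hG⟩ := hG
  refine ⟨hFm.mul hGm, C1 * C2, by positivity, fun z hz => ?_⟩
  rw [norm_mul]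
  exact mul_le_mul (hF z hz) (hG z hz) (norm_nonneg _) hC1

lemma Nice.const (c : ℂ) : Nice (fun _ => c) :=
  ⟨measurable_const, ‖c‖, norm_nonneg _, fun _ _ => le_rfl⟩

lemma Nice.zpow (k : ℤ) : Nice (fun z : ℂ => z ^ k) := by
  refine ⟨?_, 1, zero_le_one, fun z hz => ?_⟩
  · rcases k with n | n
    · simpa using (measurable_id.pow_const n)
    · simp only [zpow_negSucc]; exact (measurable_id.pow_const (n + 1)).inv
  · rw [norm_zpow, hz, one_zpow]

lemma Nice.pow (n : ℕ) : Nice (fun z : ℂ => z ^ n) := by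
  have := Nice.zpow (n : ℤ)
  simpa [zpow_natCast] using this

lemma Nice.id : Nice (fun z : ℂ => z) := by simpa using Nice.pow 1

lemma Nice.sum {ι : Type*} (s : Finset ι) (F : ι → ℂ → ℂ) (h : ∀ i ∈ s, Nice (F i)) :
    Nice (fun z => ∑ i ∈ s, F i z) := by
  induction s using Finset.cons_induction with
  | empty => simpa using Nice.const 0
  | cons a s ha ih =>
    simp only [Finset.sum_cons]
    exact (h a (Finset.mem_cons_self a s)).add
      (ih fun i hi => h i (Finset.mem_cons.2 (Or.inr hi)))

lemma Nice.poly (p : Polynomial ℂ) : Nice (fun z => p.eval z) := by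
  have h : (fun z : ℂ => p.eval z)
      = fun z => ∑ j ∈ Finset.range (p.natDegree + 1), p.coeff j * z ^ j := by
    funext z
    exact Polynomial.eval_eq_sum_range z
  rw [h]
  exact Nice.sum _ _ fun j _ => (Nice.const _).mul (Nice.pow j)

/-- `f` is a.e. equal to a nice function. -/
def IsNice (μ : Measure ℂ) (f : ℂ → ℂ) : Prop := ∃ F, Nice F ∧ f =ᵐ[μ] F

lemma Nice.isNice {F : ℂ → ℂ} (h : Nice F) : IsNice μ F := ⟨F, h, Filter.EventuallyEq.rfl⟩

lemma IsNice.congr {f g : ℂ → ℂ} (h : f =ᵐ[μ] g) (hg : IsNice μ g) : IsNice μ f := by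
  obtain ⟨G, hG, hgG⟩ := hg
  exact ⟨G, hG, h.trans hgG⟩

lemma IsNice.mul {f g : ℂ → ℂ} (hf : IsNice μ f) (hg : IsNice μ g) :
    IsNice μ (fun z => f z * g z) := by
  obtain ⟨F, hF, hfF⟩ := hf
  obtain ⟨G, hG, hgG⟩ := hg
  exact ⟨fun z => F z * G z, hF.mul hG, by filter_upwards [hfF, hgG] with z h1 h2; rw [h1, h2]⟩

lemma IsNice.integrable_conj_mul [IsProbabilityMeasure μ]
    (h1 : ∀ᵐ z ∂μ, ‖z‖ = 1) {f g : ℂ → ℂ} (hf : IsNice μ f) (hg : IsNice μ g) :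
    Integrable (fun z => conj (f z) * g z) μ := by
  obtain ⟨F, ⟨hFm, C1, hC1, hF⟩, hfF⟩ := hf
  obtain ⟨G, ⟨hGm, C2, hC2, hG⟩, hgG⟩ := hg
  have hmeas : Measurable fun z => conj (F z) * G z :=
    (Complex.continuous_conj.measurable.comp hFm).mul hGm
  have hint : Integrable (fun z => conj (F z) * G z) μ := by
    refine (integrable_const (C1 * C2)).mono' hmeas.aestronglyMeasurable ?_
    filter_upwards [h1] with z hz
    have h2 : ‖conj (F z) * G z‖ ≤ C1 * C2 := by
      rw [norm_mul, Complex.norm_conj]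
      exact mul_le_mul (hF z hz) (hG z hz) (norm_nonneg _) hC1
    simpa using h2
  refine hint.congr ?_
  filter_upwards [hfF, hgG] with z h2 h3
  rw [h2, h3]

lemma inner_conj (μ : Measure ℂ) (f g : ℂ → ℂ) :
    opucInner μ f g = conj (opucInner μ g f) := by
  rw [opucInner, opucInner, ← integral_conj]
  congr 1; funext z; simp [mul_comm]

lemma inner_congr {f f' g g' : ℂ → ℂ} (hf : f =ᵐ[μ] f') (hg : g =ᵐ[μ] g') :
    opucInner μ f g = opucInner μ f' g' :=
  integral_congr_ae (by filter_upwards [hf, hg] with z h1 h2; rw [h1, h2])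

lemma integrand_congr {f f' g g' : ℂ → ℂ}
    (h : ∀ᵐ z ∂μ, conj (f z) * g z = conj (f' z) * g' z) :
    opucInner μ f g = opucInner μ f' g' :=
  integral_congr_ae h

lemma inner_const_right (μ : Measure ℂ) (f g : ℂ → ℂ) (c : ℂ) :
    opucInner μ f (fun z => c * g z) = c * opucInner μ f g := by
  simp only [opucInner]
  rw [← integral_const_mul]
  congr 1; funext z; ring

lemma inner_const_left (μ : Measure ℂ) (f g : ℂ → ℂ) (c : ℂ) :
    opucInner μ (fun z => c * f z) g = conj c * opucInner μ f g := by
  simp only [opucInner]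
  rw [← integral_const_mul]
  congr 1; funext z; rw [map_mul]; ring

lemma inner_add_right {f g h : ℂ → ℂ}
    (hg : Integrable (fun z => conj (f z) * g z) μ)
    (hh : Integrable (fun z => conj (f z) * h z) μ) :
    opucInner μ f (fun z => g z + h z) = opucInner μ f g + opucInner μ f h := by
  simp only [opucInner, mul_add]
  exact integral_add hg hh

lemma inner_sub_right {f g h : ℂ → ℂ}
    (hg : Integrable (fun z => conj (f z) * g z) μ)
    (hh : Integrable (fun z => conj (f z) * h z) μ) :
    opucInner μ f (fun z => g z - h z) = opucInner μ f g - opucInner μ f h := by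
  simp only [opucInner, mul_sub]
  exact integral_sub hg hh

lemma inner_add_left {f g h : ℂ → ℂ}
    (hg : Integrable (fun z => conj (g z) * f z) μ)
    (hh : Integrable (fun z => conj (h z) * f z) μ) :
    opucInner μ (fun z => g z + h z) f = opucInner μ g f + opucInner μ h f := by
  simp only [opucInner, map_add, add_mul]
  exact integral_add hg hh

lemma inner_sub_left {f g h : ℂ → ℂ}
    (hg : Integrable (fun z => conj (g z) * f z) μ)
    (hh : Integrable (fun z => conj (h z) * f z) μ) :
    opucInner μ (fun z => g z - h z) f = opucInner μ g f - opucInner μ h f := by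
  simp only [opucInner, map_sub, sub_mul]
  exact integral_sub hg hh

lemma inner_sum_right {ι : Type*} {f : ℂ → ℂ} (s : Finset ι) (g : ι → ℂ → ℂ)
    (h : ∀ i ∈ s, Integrable (fun z => conj (f z) * g i z) μ) :
    opucInner μ f (fun z => ∑ i ∈ s, g i z) = ∑ i ∈ s, opucInner μ f (g i) := by
  simp only [opucInner, Finset.mul_sum]
  exact integral_finset_sum s h

lemma reverse_eval (P : Polynomial ℂ) (n : ℕ) (hdeg : P.natDegree = n) (z : ℂ)
    (hz : ‖z‖ = 1) :
    ∑ j ∈ Finset.range (n + 1), conj (P.coeff (n - j)) * z ^ j = z ^ n * conj (P.eval z) := by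
  have hzne : z ≠ 0 := ne_zero_of_abs z hz
  have hconj : conj z = z⁻¹ := conj_eq_inv z hz
  rw [Polynomial.eval_eq_sum_range, hdeg, map_sum, Finset.mul_sum]
  have key : ∀ i ∈ Finset.range (n + 1),
      z ^ n * conj (P.coeff i * z ^ i) = conj (P.coeff i) * z ^ (n - i) := by
    intro i hi
    rw [Finset.mem_range, Nat.lt_succ_iff] at hi
    rw [map_mul, map_pow, hconj, inv_pow, pow_sub₀ z hzne hi]
    field_simp
  rw [Finset.sum_congr rfl key, ← Finset.sum_range_reflect]
  apply Finset.sum_congr rfl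
  intro j hj
  rw [Finset.mem_range, Nat.lt_succ_iff] at hj
  have h1 : n + 1 - 1 - j = n - j := by omega
  have h2 : n - (n - j) = j := by omega
  rw [h1, h2]

lemma shift1 (a b : ℕ) (hba : b ≤ a + 1) (z : ℂ) (hz : ‖z‖ = 1)
    (f g : ℂ → ℂ) :
    conj (z ^ (-(a : ℤ)) * f z) * (z * (z ^ (-(b : ℤ)) * g z))
      = conj (f z) * (z ^ (a + 1 - b) * g z) := by
  have hzne : z ≠ 0 := ne_zero_of_abs z hz
  have hconj : conj z = z⁻¹ := conj_eq_inv z hz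
  have hca : conj (z ^ (-(a : ℤ))) = z ^ (a : ℤ) := by
    rw [map_zpow₀, hconj, inv_zpow, ← zpow_neg, neg_neg]
  rw [map_mul, hca]
  have h1 : z ^ (a : ℤ) * z * z ^ (-(b : ℤ)) = z ^ (a + 1 - b) := by
    rw [show (z : ℂ) ^ (a + 1 - b) = z ^ (((a + 1 - b : ℕ) : ℤ)) from (zpow_natCast z _).symm]
    rw [show (((a + 1 - b : ℕ) : ℤ)) = (a : ℤ) + 1 + -(b : ℤ) by omega]
    rw [zpow_add₀ hzne, zpow_add₀ hzne, zpow_one]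
  linear_combination (conj (f z) * g z) * h1

lemma shift2 (a b : ℕ) (hab : a + 1 ≤ b) (z : ℂ) (hz : ‖z‖ = 1)
    (f g : ℂ → ℂ) :
    conj (z * (z ^ (-(b : ℤ)) * g z)) * (z ^ (-(a : ℤ)) * f z)
      = conj (g z) * (z ^ (b - 1 - a) * f z) := by
  have hzne : z ≠ 0 := ne_zero_of_abs z hz
  have hconj : conj z = z⁻¹ := conj_eq_inv z hz
  have hcb : conj (z ^ (-(b : ℤ))) = z ^ (b : ℤ) := by
    rw [map_zpow₀, hconj, inv_zpow, ← zpow_neg, neg_neg]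
  rw [map_mul, map_mul, hcb]
  have h1 : conj z * z ^ (b : ℤ) * z ^ (-(a : ℤ)) = z ^ (b - 1 - a) := by
    rw [hconj, show (z : ℂ)⁻¹ = z ^ (-1 : ℤ) by simp]
    rw [show (z : ℂ) ^ (b - 1 - a) = z ^ (((b - 1 - a : ℕ) : ℤ)) from (zpow_natCast z _).symm]
    rw [show (((b - 1 - a : ℕ) : ℤ)) = (-1 : ℤ) + (b : ℤ) + -(a : ℤ) by omega]
    rw [zpow_add₀ hzne, zpow_add₀ hzne]
  linear_combination (conj (g z) * f z) * h1

lemma red1 (hae : ∀ᵐ z ∂μ, ‖z‖ = 1) (a b : ℕ) (hba : b ≤ a + 1) (f g : ℂ → ℂ) :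
    opucInner μ (fun z => z ^ (-(a : ℤ)) * f z) (zmul (fun z => z ^ (-(b : ℤ)) * g z))
      = opucInner μ f (fun z => z ^ (a + 1 - b) * g z) :=
  integrand_congr (by filter_upwards [hae] with z hz; exact shift1 a b hba z hz f g)

lemma red2 (hae : ∀ᵐ z ∂μ, ‖z‖ = 1) (a b : ℕ) (hab : a + 1 ≤ b) (f g : ℂ → ℂ) :
    opucInner μ (fun z => z ^ (-(a : ℤ)) * f z) (zmul (fun z => z ^ (-(b : ℤ)) * g z))
      = conj (opucInner μ g (fun z => z ^ (b - 1 - a) * f z)) := by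
  rw [inner_conj]
  congr 1
  exact integrand_congr (by filter_upwards [hae] with z hz; exact shift2 a b hab z hz f g)

noncomputable def Kc (ζ : ℕ → ℂ) (ρabs : ℕ → ℝ) (n : ℕ) : ℂ :=
  (∏ i ∈ Finset.range n, ζ i) * (((∏ i ∈ Finset.range n, ρabs i : ℝ)) : ℂ)⁻¹

variable {ζ ρ : ℕ → ℂ} {ρabs : ℕ → ℝ}

lemma conj_zeta_mul (hζ : ∀ n, ‖ζ n‖ = 1) (i : ℕ) : conj (ζ i) * ζ i = 1 :=
  conj_mul_self (ζ i) (hζ i)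

lemma prod_conj_zeta (hζ : ∀ n, ‖ζ n‖ = 1) (n : ℕ) :
    (∏ i ∈ Finset.range n, conj (ζ i)) * (∏ i ∈ Finset.range n, ζ i) = 1 := by
  rw [← Finset.prod_mul_distrib]
  exact Finset.prod_eq_one fun i _ => conj_zeta_mul hζ i

lemma conj_Kc (ζ : ℕ → ℂ) (ρabs : ℕ → ℝ) (n : ℕ) :
    conj (Kc ζ ρabs n)
      = (∏ i ∈ Finset.range n, conj (ζ i)) * (((∏ i ∈ Finset.range n, ρabs i : ℝ)) : ℂ)⁻¹ := by
  simp [Kc, map_mul, map_inv₀, Complex.conj_ofReal, map_prod]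

lemma cast_prod (ρabs : ℕ → ℝ) (n : ℕ) :
    (((∏ i ∈ Finset.range n, ρabs i : ℝ)) : ℂ) = ∏ i ∈ Finset.range n, ((ρabs i : ℝ) : ℂ) := by
  push_cast; ring

lemma PLbase (hζ : ∀ n, ‖ζ n‖ = 1) (hρ : ∀ n, ρ n = ((ρabs n : ℝ) : ℂ) * ζ n)
    (hne : ∀ i, ρabs i ≠ 0) (m : ℕ) :
    conj (Kc ζ ρabs m) * ∏ i ∈ Finset.range m, ρ i = 1 := by
  rw [conj_Kc, Finset.prod_congr rfl fun i _ => hρ i, Finset.prod_mul_distrib, cast_prod]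
  have hz := prod_conj_zeta hζ m
  have hpne : (∏ i ∈ Finset.range m, ((ρabs i : ℝ) : ℂ)) ≠ 0 :=
    Finset.prod_ne_zero_iff.2 fun i _ => Complex.ofReal_ne_zero.2 (hne i)
  field_simp
  linear_combination hz

lemma PL (hζ : ∀ n, ‖ζ n‖ = 1) (hρ : ∀ n, ρ n = ((ρabs n : ℝ) : ℂ) * ζ n)
    (hne : ∀ i, ρabs i ≠ 0) {m n : ℕ} (hmn : m ≤ n) :
    conj (Kc ζ ρabs m) * ∏ i ∈ Finset.range n, ρ i = ∏ i ∈ Finset.Ico m n, ρ i := by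
  rw [← Finset.prod_range_mul_prod_Ico ρ hmn]
  linear_combination (∏ i ∈ Finset.Ico m n, ρ i) * PLbase hζ hρ hne m

lemma PB0aux (hζ : ∀ n, ‖ζ n‖ = 1) (hρ : ∀ n, ρ n = ((ρabs n : ℝ) : ℂ) * ζ n)
    (hne : ∀ i, ρabs i ≠ 0) (n : ℕ) :
    conj (Kc ζ ρabs n) * (((∏ i ∈ Finset.range n, ρabs i : ℝ)) : ℂ) ^ 2
      = conj (∏ i ∈ Finset.range n, ρ i) := by
  rw [conj_Kc, map_prod]
  have h1 : ∀ i ∈ Finset.range n, conj (ρ i) = ((ρabs i : ℝ) : ℂ) * conj (ζ i) := by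
    intro i _; rw [hρ, map_mul, Complex.conj_ofReal]
  rw [Finset.prod_congr rfl h1, Finset.prod_mul_distrib, cast_prod]
  have hpne : (∏ i ∈ Finset.range n, ((ρabs i : ℝ) : ℂ)) ≠ 0 :=
    Finset.prod_ne_zero_iff.2 fun i _ => Complex.ofReal_ne_zero.2 (hne i)
  field_simp

lemma KcKc (hζ : ∀ n, ‖ζ n‖ = 1) (hne : ∀ i, ρabs i ≠ 0) (n : ℕ) :
    conj (Kc ζ ρabs n) * (Kc ζ ρabs n * (((∏ i ∈ Finset.range n, ρabs i : ℝ)) : ℂ) ^ 2) = 1 := by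
  rw [conj_Kc, Kc, cast_prod]
  have hz := prod_conj_zeta hζ n
  have hpne : (∏ i ∈ Finset.range n, ((ρabs i : ℝ) : ℂ)) ≠ 0 :=
    Finset.prod_ne_zero_iff.2 fun i _ => Complex.ofReal_ne_zero.2 (hne i)
  field_simp
  linear_combination hz

end CMVAux
/-- **The nonzero entries of the rotated CMV matrix** `C^∠_{kℓ} = ⟨χₖ^∠, z·χ_ℓ^∠⟩`, where
`{χₙ^∠}` is the rotated CMV basis, together with the five-diagonal structure:
all entries with `|k - ℓ| ≥ 3` vanish.  Conventions: `α₋₁ = -1` (encoded via `αm`, with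
`αm k = α (k-1)`) and `n ≥ 1` where an index `2n-2` or `2n-1` appears. -/
theorem rotated_cmv_matrix_entries
    (μ : Measure ℂ) [IsProbabilityMeasure μ]
    -- the support of `μ` is an infinite subset of the unit circle
    (hsupp_circ : measureSupport μ ⊆ {z : ℂ | ‖z‖ = 1})
    (hsupp_inf : (measureSupport μ).Infinite)
    -- `Φₙ` is the monic OPUC of degree `n`
    (Φ : ℕ → Polynomial ℂ)
    (hΦmonic : ∀ n, (Φ n).Monic) (hΦdeg : ∀ n, (Φ n).natDegree = n)
    (hΦorth : ∀ n, ∀ j < n, opucInner μ (fun z => (Φ n).eval z) (fun z => z ^ j) = 0)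
    -- `Φₙ*` is the reverse polynomial of `Φₙ`
    (Φs : ℕ → ℂ → ℂ)
    (hΦs : ∀ n z, Φs n z = ∑ j ∈ Finset.range (n + 1), conj ((Φ n).coeff (n - j)) * z ^ j)
    -- the Verblunsky coefficients, with `|αₙ| < 1`
    (α : ℕ → ℂ) (hα : ∀ n, α n = -conj ((Φ (n + 1)).eval 0))
    (hα1 : ∀ n, ‖α n‖ < 1)
    -- `αm k = α (k - 1)`, with the convention `α₋₁ = -1`
    (αm : ℕ → ℂ) (hαm0 : αm 0 = -1) (hαms : ∀ n, αm (n + 1) = α n)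
    -- `ρabs n = |ρₙ| = (1 - |αₙ|²)^{1/2}` and the Szegő norm identity
    (ρabs : ℕ → ℝ) (hρabs : ∀ n, ρabs n = Real.sqrt (1 - ‖α n‖ ^ 2))
    (hΦnorm : ∀ n, opucInner μ (fun z => (Φ n).eval z) (fun z => (Φ n).eval z)
      = (((∏ j ∈ Finset.range n, ρabs j : ℝ)) : ℂ) ^ 2)
    -- a sequence of unimodular numbers and the rotated `ρₙ = |ρₙ|·ζₙ`
    (ζ : ℕ → ℂ) (hζ : ∀ n, ‖ζ n‖ = 1)
    (ρ : ℕ → ℂ) (hρ : ∀ n, ρ n = ((ρabs n : ℝ) : ℂ) * ζ n)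
    -- the orthonormal polynomials, their reverses, and the rotated versions
    (φ φs φr φsr : ℕ → ℂ → ℂ)
    (hφ : ∀ n z, φ n z = (((∏ j ∈ Finset.range n, ρabs j : ℝ)) : ℂ)⁻¹ * (Φ n).eval z)
    (hφs : ∀ n z, φs n z = (((∏ j ∈ Finset.range n, ρabs j : ℝ)) : ℂ)⁻¹ * Φs n z)
    (hφr : ∀ n z, φr n z = (∏ j ∈ Finset.range n, ζ j) * φ n z)
    (hφsr : ∀ n z, φsr n z = (∏ j ∈ Finset.range n, ζ j) * φs n z)
    -- the forward Szegő recursion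
    (hszego : ∀ (n : ℕ) (z : ℂ),
      φ (n + 1) z = ((ρabs n : ℝ) : ℂ)⁻¹ * (z * φ n z - conj (α n) * φs n z)
      ∧ φs (n + 1) z = ((ρabs n : ℝ) : ℂ)⁻¹ * (φs n z - α n * z * φ n z))
    -- the rotated CMV basis: `χ_{2n}^∠(z) = z^{-n}·φ_{2n}^{∠,*}(z)` and
    -- `χ_{2n+1}^∠(z) = z^{-n}·φ_{2n+1}^∠(z)`  (for `z ≠ 0`, hence `μ`-a.e.)
    (χ : ℕ → ℂ → ℂ)
    (hχeven : ∀ (n : ℕ) (z : ℂ), z ≠ 0 → χ (2 * n) z = z ^ (-(n : ℤ)) * φsr (2 * n) z)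
    (hχodd : ∀ (n : ℕ) (z : ℂ), z ≠ 0 → χ (2 * n + 1) z = z ^ (-(n : ℤ)) * φr (2 * n + 1) z) :
    (∀ n : ℕ, 1 ≤ n → opucInner μ (χ (2 * n - 2)) (zmul (χ (2 * n)))
      = ρ (2 * n - 2) * ρ (2 * n - 1))
    ∧ (∀ n : ℕ, 1 ≤ n → opucInner μ (χ (2 * n - 1)) (zmul (χ (2 * n)))
      = -α (2 * n - 2) * ρ (2 * n - 1))
    ∧ (∀ n : ℕ, opucInner μ (χ (2 * n)) (zmul (χ (2 * n)))
      = -conj (α (2 * n)) * αm (2 * n))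
    ∧ (∀ n : ℕ, opucInner μ (χ (2 * n + 1)) (zmul (χ (2 * n)))
      = -αm (2 * n) * conj (ρ (2 * n)))
    ∧ (∀ n : ℕ, 1 ≤ n → opucInner μ (χ (2 * n - 2)) (zmul (χ (2 * n - 1)))
      = conj (α (2 * n - 1)) * ρ (2 * n - 2))
    ∧ (∀ n : ℕ, 1 ≤ n → opucInner μ (χ (2 * n - 1)) (zmul (χ (2 * n - 1)))
      = -conj (α (2 * n - 1)) * α (2 * n - 2))
    ∧ (∀ n : ℕ, 1 ≤ n → opucInner μ (χ (2 * n)) (zmul (χ (2 * n - 1)))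
      = conj (α (2 * n)) * conj (ρ (2 * n - 1)))
    ∧ (∀ n : ℕ, 1 ≤ n → opucInner μ (χ (2 * n + 1)) (zmul (χ (2 * n - 1)))
      = conj (ρ (2 * n)) * conj (ρ (2 * n - 1)))
    ∧ (∀ k ℓ : ℕ, 3 ≤ |(k : ℤ) - (ℓ : ℤ)| → opucInner μ (χ k) (zmul (χ ℓ)) = 0) := by
  clear hsupp_inf
  have hae : ∀ᵐ z ∂μ, ‖z‖ = 1 := CMVAux.ae_circle μ hsupp_circ
  -- positivity facts
  have hρpos : ∀ n, 0 < ρabs n := by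
    intro n
    rw [hρabs]
    apply Real.sqrt_pos.2
    nlinarith [norm_nonneg (α n), hα1 n]
  have hρne : ∀ n, ρabs n ≠ 0 := fun n => (hρpos n).ne'
  have hcρne : ∀ n, ((ρabs n : ℝ) : ℂ) ≠ 0 := fun n => Complex.ofReal_ne_zero.2 (hρne n)
  -- pointwise descriptions
  have hA : ∀ n z, φr n z = CMVAux.Kc ζ ρabs n * (Φ n).eval z := by
    intro n z; rw [hφr, hφ, CMVAux.Kc]; ring
  have hB : ∀ n z, φsr n z = CMVAux.Kc ζ ρabs n * Φs n z := by
    intro n z; rw [hφsr, hφs, CMVAux.Kc]; ring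
  have hEA : ∀ n z, φr n z
      = ∑ j ∈ Finset.range (n + 1), (CMVAux.Kc ζ ρabs n * (Φ n).coeff j) * z ^ j := by
    intro n z
    rw [hA, Polynomial.eval_eq_sum_range' (show (Φ n).natDegree < n + 1 by rw [hΦdeg]; omega),
      Finset.mul_sum]
    exact Finset.sum_congr rfl fun j _ => by ring
  have hEB : ∀ n z, φsr n z
      = ∑ j ∈ Finset.range (n + 1), (CMVAux.Kc ζ ρabs n * conj ((Φ n).coeff (n - j))) * z ^ j := by
    intro n z
    rw [hB, hΦs, Finset.mul_sum]
    exact Finset.sum_congr rfl fun j _ => by ring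
  -- niceness and integrability
  have hNA : ∀ n, CMVAux.Nice (φr n) := by
    intro n
    rw [show φr n = fun z => CMVAux.Kc ζ ρabs n * (Φ n).eval z from funext (hA n)]
    exact (CMVAux.Nice.const _).mul (CMVAux.Nice.poly _)
  have hNB : ∀ n, CMVAux.Nice (φsr n) := by
    intro n
    rw [show φsr n = fun z => ∑ j ∈ Finset.range (n + 1),
        (CMVAux.Kc ζ ρabs n * conj ((Φ n).coeff (n - j))) * z ^ j from funext (hEB n)]
    exact CMVAux.Nice.sum _ _ fun j _ => (CMVAux.Nice.const _).mul (CMVAux.Nice.pow j)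
  have hInt : ∀ f g : ℂ → ℂ, CMVAux.Nice f → CMVAux.Nice g →
      Integrable (fun z => conj (f z) * g z) μ := by
    intro f g hf hg
    exact CMVAux.IsNice.integrable_conj_mul hae hf.isNice hg.isNice
  -- basic orthogonality for the rotated polynomials
  have hPA : ∀ m j, j < m → opucInner μ (φr m) (fun z => (z : ℂ) ^ j) = 0 := by
    intro m j hj
    rw [show φr m = fun z => CMVAux.Kc ζ ρabs m * (Φ m).eval z from funext (hA m)]
    rw [CMVAux.inner_const_left, hΦorth m j hj, mul_zero]
  have hΦskey : ∀ n j, j ≤ n →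
      opucInner μ (fun z => Φs n z) (fun z => (z : ℂ) ^ j)
        = opucInner μ (fun z => (z : ℂ) ^ (n - j)) (fun z => (Φ n).eval z) := by
    intro n j hjn
    apply CMVAux.integrand_congr
    filter_upwards [hae] with z hz
    have hzne := CMVAux.ne_zero_of_abs z hz
    have hconj := CMVAux.conj_eq_inv z hz
    rw [hΦs n z, CMVAux.reverse_eval (Φ n) n (hΦdeg n) z hz]
    rw [map_mul, map_pow, map_pow, hconj, Complex.conj_conj]
    have h2 : (z⁻¹) ^ n * z ^ j = (z⁻¹) ^ (n - j) := by
      rw [inv_pow, inv_pow]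
      field_simp
      rw [← pow_add]
      congr 1
      omega
    linear_combination (Φ n).eval z * h2
  have hPB : ∀ n j, 1 ≤ j → j ≤ n → opucInner μ (φsr n) (fun z => (z : ℂ) ^ j) = 0 := by
    intro n j h1 h2
    rw [show φsr n = fun z => CMVAux.Kc ζ ρabs n * Φs n z from funext (hB n)]
    rw [CMVAux.inner_const_left, hΦskey n j h2, CMVAux.inner_conj,
      hΦorth n (n - j) (by omega), map_zero, mul_zero]
  have hTop : ∀ n, opucInner μ (fun z => (Φ n).eval z) (fun z => (z : ℂ) ^ n)
      = (((∏ j ∈ Finset.range n, ρabs j : ℝ)) : ℂ) ^ 2 := by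
    intro n
    have hc : (Φ n).coeff n = 1 := by
      have := (hΦmonic n).coeff_natDegree
      rwa [hΦdeg n] at this
    have hsplit : (fun z : ℂ => (z : ℂ) ^ n)
        = fun z => (Φ n).eval z - ∑ j ∈ Finset.range n, (Φ n).coeff j * z ^ j := by
      funext z
      rw [Polynomial.eval_eq_sum_range' (show (Φ n).natDegree < n + 1 by rw [hΦdeg]; omega),
        Finset.sum_range_succ, hc]
      ring
    rw [hsplit, CMVAux.inner_sub_right (hInt _ _ (CMVAux.Nice.poly _) (CMVAux.Nice.poly _))
      (hInt _ _ (CMVAux.Nice.poly _) (CMVAux.Nice.sum _ _ fun j _ =>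
        (CMVAux.Nice.const _).mul (CMVAux.Nice.pow j)))]
    rw [hΦnorm n]
    rw [CMVAux.inner_sum_right _ _ (fun j _ => hInt _ _ (CMVAux.Nice.poly _)
      ((CMVAux.Nice.const _).mul (CMVAux.Nice.pow j)))]
    rw [Finset.sum_eq_zero, sub_zero]
    intro j hj
    rw [CMVAux.inner_const_right, hΦorth n j (Finset.mem_range.1 hj), mul_zero]
  have hPB0 : ∀ n, opucInner μ (φsr n) (fun _ => (1 : ℂ))
      = conj (∏ i ∈ Finset.range n, ρ i) := by
    intro n
    rw [show (fun _ : ℂ => (1 : ℂ)) = fun z : ℂ => (z : ℂ) ^ (0 : ℕ) from funext fun z => by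
      rw [pow_zero]]
    rw [show φsr n = fun z => CMVAux.Kc ζ ρabs n * Φs n z from funext (hB n)]
    rw [CMVAux.inner_const_left, hΦskey n 0 (by omega), CMVAux.inner_conj, Nat.sub_zero,
      hTop n, ← CMVAux.PB0aux hζ hρ hρne n]
    rw [map_pow, Complex.conj_ofReal]
  -- summed orthogonality
  have hKA : ∀ m (s : Finset ℕ) (c : ℕ → ℂ) (e : ℕ → ℕ), (∀ j ∈ s, e j < m) →
      opucInner μ (φr m) (fun z => ∑ j ∈ s, c j * z ^ (e j)) = 0 := by
    intro m s c e he
    rw [CMVAux.inner_sum_right s (fun j => fun z => c j * z ^ (e j))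
      (fun j _ => hInt _ _ (hNA m) ((CMVAux.Nice.const _).mul (CMVAux.Nice.pow _)))]
    apply Finset.sum_eq_zero
    intro j hj
    rw [CMVAux.inner_const_right, hPA m (e j) (he j hj), mul_zero]
  have hKB : ∀ m (s : Finset ℕ) (c : ℕ → ℂ) (e : ℕ → ℕ), (∀ j ∈ s, 1 ≤ e j ∧ e j ≤ m) →
      opucInner μ (φsr m) (fun z => ∑ j ∈ s, c j * z ^ (e j)) = 0 := by
    intro m s c e he
    rw [CMVAux.inner_sum_right s (fun j => fun z => c j * z ^ (e j))
      (fun j _ => hInt _ _ (hNB m) ((CMVAux.Nice.const _).mul (CMVAux.Nice.pow _)))]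
    apply Finset.sum_eq_zero
    intro j hj
    rw [CMVAux.inner_const_right, hPB m (e j) (he j hj).1 (he j hj).2, mul_zero]
  -- vanishing inner products
  have hz1 : ∀ m n, n < m → opucInner μ (φr m) (φsr n) = 0 := by
    intro m n h
    rw [show φsr n = fun z => ∑ j ∈ Finset.range (n + 1),
        (CMVAux.Kc ζ ρabs n * conj ((Φ n).coeff (n - j))) * z ^ j from funext (hEB n)]
    exact hKA m _ _ (fun j => j) fun j hj => by
      rw [Finset.mem_range] at hj; show j < m; omega
  have hz2 : ∀ m n, n < m → opucInner μ (φr m) (φr n) = 0 := by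
    intro m n h
    rw [show φr n = fun z => ∑ j ∈ Finset.range (n + 1),
        (CMVAux.Kc ζ ρabs n * (Φ n).coeff j) * z ^ j from funext (hEA n)]
    exact hKA m _ _ (fun j => j) fun j hj => by
      rw [Finset.mem_range] at hj; show j < m; omega
  have hzmulB : ∀ m, zmul (φsr m) = fun z => ∑ j ∈ Finset.range (m + 1),
      (CMVAux.Kc ζ ρabs m * conj ((Φ m).coeff (m - j))) * z ^ (j + 1) := by
    intro m
    funext z
    show z * φsr m z = _
    rw [hEB m z, Finset.mul_sum]
    exact Finset.sum_congr rfl fun j _ => by ring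
  have hz3 : ∀ m n, m < n → opucInner μ (φsr n) (zmul (φsr m)) = 0 := by
    intro m n h
    rw [hzmulB m]
    exact hKB n _ _ (fun j => j + 1) fun j hj => by
      rw [Finset.mem_range] at hj; show 1 ≤ j + 1 ∧ j + 1 ≤ n; omega
  have hz4 : ∀ m n, m + 1 < n → opucInner μ (φr n) (zmul (φsr m)) = 0 := by
    intro m n h
    rw [hzmulB m]
    exact hKA n _ _ (fun j => j + 1) fun j hj => by
      rw [Finset.mem_range] at hj; show j + 1 < n; omega
  -- the two key nonzero inner products
  have hcoeffm : ∀ m, (Φ m).coeff m = 1 := by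
    intro m
    have := (hΦmonic m).coeff_natDegree
    rwa [hΦdeg m] at this
  have hK2 : ∀ m n, m ≤ n → opucInner μ (φsr m) (φsr n) = ∏ i ∈ Finset.Ico m n, ρ i := by
    intro m n hmn
    rw [CMVAux.inner_conj]
    rw [show φsr m = fun z => ∑ j ∈ Finset.range (m + 1),
        (CMVAux.Kc ζ ρabs m * conj ((Φ m).coeff (m - j))) * z ^ j from funext (hEB m)]
    rw [CMVAux.inner_sum_right _ _ (fun j _ => hInt _ _ (hNB n)
      ((CMVAux.Nice.const _).mul (CMVAux.Nice.pow _)))]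
    rw [Finset.sum_eq_single_of_mem 0 (Finset.mem_range.2 (by omega)) (fun j hj hj0 => by
      rw [CMVAux.inner_const_right, hPB n j (by omega)
        (by rw [Finset.mem_range] at hj; omega), mul_zero])]
    rw [CMVAux.inner_const_right]
    rw [show (fun z : ℂ => (z : ℂ) ^ (0 : ℕ)) = fun _ : ℂ => (1 : ℂ) from funext fun z => by
      rw [pow_zero]]
    rw [hPB0 n, Nat.sub_zero, hcoeffm m]
    simp only [map_one, mul_one, map_mul, Complex.conj_conj]
    exact CMVAux.PL hζ hρ hρne hmn
  have hK1 : ∀ m n, m ≤ n → opucInner μ (φr m) (φsr n)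
      = conj ((Φ m).coeff 0) * ∏ i ∈ Finset.Ico m n, ρ i := by
    intro m n hmn
    rw [CMVAux.inner_conj]
    rw [show φr m = fun z => ∑ j ∈ Finset.range (m + 1),
        (CMVAux.Kc ζ ρabs m * (Φ m).coeff j) * z ^ j from funext (hEA m)]
    rw [CMVAux.inner_sum_right _ _ (fun j _ => hInt _ _ (hNB n)
      ((CMVAux.Nice.const _).mul (CMVAux.Nice.pow _)))]
    rw [Finset.sum_eq_single_of_mem 0 (Finset.mem_range.2 (by omega)) (fun j hj hj0 => by
      rw [CMVAux.inner_const_right, hPB n j (by omega)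
        (by rw [Finset.mem_range] at hj; omega), mul_zero])]
    rw [CMVAux.inner_const_right]
    rw [show (fun z : ℂ => (z : ℂ) ^ (0 : ℕ)) = fun _ : ℂ => (1 : ℂ) from funext fun z => by
      rw [pow_zero]]
    rw [hPB0 n]
    simp only [map_mul, Complex.conj_conj]
    linear_combination conj ((Φ m).coeff 0) * CMVAux.PL hζ hρ hρne hmn
  have hAA : ∀ n, opucInner μ (φr n) (φr n) = 1 := by
    intro n
    rw [show φr n = fun z => CMVAux.Kc ζ ρabs n * (Φ n).eval z from funext (hA n)]
    rw [CMVAux.inner_const_left, CMVAux.inner_const_right, hΦnorm n]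
    exact CMVAux.KcKc hζ hρne n
  -- constant coefficients and Verblunsky coefficients
  have hcoeff0 : ∀ k, conj ((Φ k).coeff 0) = -αm k := by
    intro k
    cases k with
    | zero =>
      rw [hαm0]
      have h1 : Φ 0 = 1 := (Polynomial.Monic.natDegree_eq_zero (hΦmonic 0)).1 (hΦdeg 0)
      rw [h1]
      simp
    | succ p =>
      rw [hαms p, Polynomial.coeff_zero_eq_eval_zero, hα p, neg_neg]
  -- recursion relations
  have hrec1 : ∀ n z, (z : ℂ) * φ n z
      = ((ρabs n : ℝ) : ℂ) * φ (n + 1) z + conj (α n) * φs n z := by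
    intro n z
    rw [(hszego n z).1]
    linear_combination (-(z * φ n z - conj (α n) * φs n z)) * mul_inv_cancel₀ (hcρne n)
  have hrec2 : ∀ n z, φs n z
      = ((ρabs n : ℝ) : ℂ) * φs (n + 1) z + α n * (z * φ n z) := by
    intro n z
    rw [(hszego n z).2]
    linear_combination (-(φs n z - α n * z * φ n z)) * mul_inv_cancel₀ (hcρne n)
  have hsq : ∀ n, ((ρabs n : ℝ) : ℂ) ^ 2 = 1 - conj (α n) * α n := by
    intro n
    have h1 : (ρabs n) ^ 2 = 1 - (‖α n‖) ^ 2 := by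
      rw [hρabs]
      exact Real.sq_sqrt (by nlinarith [hα1 n, norm_nonneg (α n)])
    have h2 : conj (α n) * α n = (((‖α n‖) ^ 2 : ℝ) : ℂ) := by
      rw [mul_comm, Complex.mul_conj, Complex.normSq_eq_norm_sq]
    rw [h2, ← Complex.ofReal_pow, h1]
    push_cast
    ring
  have hrec3 : ∀ n z, φ (n + 1) z
      = ((ρabs n : ℝ) : ℂ) * (z * φ n z) - conj (α n) * φs (n + 1) z := by
    intro n z
    have h1 := (hszego n z).1
    have h2 := (hszego n z).2
    rw [h1, h2]
    linear_combination (-(((ρabs n : ℝ) : ℂ)⁻¹ * (z * φ n z))) * hsq n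
      + (((ρabs n : ℝ) : ℂ) * (z * φ n z)) * mul_inv_cancel₀ (hcρne n)
  have hconjρ : ∀ n, conj (ρ n) = ((ρabs n : ℝ) : ℂ) * conj (ζ n) := by
    intro n
    rw [hρ, map_mul, Complex.conj_ofReal]
  have hF1 : ∀ n z, (z : ℂ) * φr n z = conj (ρ n) * φr (n + 1) z + conj (α n) * φsr n z := by
    intro n z
    rw [hφr n z, hφr (n + 1) z, hφsr n z, hconjρ n, Finset.prod_range_succ]
    have hz1 := CMVAux.conj_zeta_mul hζ n
    linear_combination (∏ i ∈ Finset.range n, ζ i) * hrec1 n z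
      - (((ρabs n : ℝ) : ℂ) * φ (n + 1) z * (∏ i ∈ Finset.range n, ζ i)) * hz1
  have hF2 : ∀ n z, φsr n z = conj (ρ n) * φsr (n + 1) z + α n * ((z : ℂ) * φr n z) := by
    intro n z
    rw [hφsr n z, hφsr (n + 1) z, hφr n z, hconjρ n, Finset.prod_range_succ]
    have hz1 := CMVAux.conj_zeta_mul hζ n
    linear_combination (∏ i ∈ Finset.range n, ζ i) * hrec2 n z
      - (((ρabs n : ℝ) : ℂ) * φs (n + 1) z * (∏ i ∈ Finset.range n, ζ i)) * hz1
  have hG1 : ∀ n z, φr (n + 1) z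
      = ρ n * ((z : ℂ) * φr n z) - conj (α n) * φsr (n + 1) z := by
    intro n z
    rw [hφr (n + 1) z, hφr n z, hφsr (n + 1) z, hρ n, Finset.prod_range_succ]
    linear_combination ((∏ i ∈ Finset.range n, ζ i) * ζ n) * hrec3 n z
  -- a.e. descriptions of the CMV basis
  have hχe : ∀ n, χ (2 * n) =ᵐ[μ] fun z => z ^ (-(n : ℤ)) * φsr (2 * n) z := by
    intro n
    filter_upwards [hae] with z hz
    exact hχeven n z (CMVAux.ne_zero_of_abs z hz)
  have hχo : ∀ n, χ (2 * n + 1) =ᵐ[μ] fun z => z ^ (-(n : ℤ)) * φr (2 * n + 1) z := by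
    intro n
    filter_upwards [hae] with z hz
    exact hχodd n z (CMVAux.ne_zero_of_abs z hz)
  -- reductions
  have hred1 : ∀ (a b : ℕ), b ≤ a + 1 → ∀ f g f' g' : ℂ → ℂ,
      f =ᵐ[μ] (fun z => z ^ (-(a : ℤ)) * f' z) → g =ᵐ[μ] (fun z => z ^ (-(b : ℤ)) * g' z) →
      opucInner μ f (zmul g) = opucInner μ f' (fun z => z ^ (a + 1 - b) * g' z) := by
    intro a b hba f g f' g' hf hg
    rw [CMVAux.inner_congr hf (show zmul g =ᵐ[μ] zmul (fun z => z ^ (-(b : ℤ)) * g' z) from by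
      filter_upwards [hg] with z h
      show z * g z = z * _
      rw [h])]
    exact CMVAux.red1 hae a b hba f' g'
  have hred2 : ∀ (a b : ℕ), a + 1 ≤ b → ∀ f g f' g' : ℂ → ℂ,
      f =ᵐ[μ] (fun z => z ^ (-(a : ℤ)) * f' z) → g =ᵐ[μ] (fun z => z ^ (-(b : ℤ)) * g' z) →
      opucInner μ f (zmul g) = conj (opucInner μ g' (fun z => z ^ (b - 1 - a) * f' z)) := by
    intro a b hab f g f' g' hf hg
    rw [CMVAux.inner_congr hf (show zmul g =ᵐ[μ] zmul (fun z => z ^ (-(b : ℤ)) * g' z) from by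
      filter_upwards [hg] with z h
      show z * g z = z * _
      rw [h])]
    exact CMVAux.red2 hae a b hab f' g'
  -- small product computations
  have hIco1 : ∀ m : ℕ, ∏ i ∈ Finset.Ico m (m + 1), ρ i = ρ m := by
    intro m
    rw [Finset.prod_Ico_succ_top (by omega), Finset.Ico_self, Finset.prod_empty, one_mul]
  have hIco2 : ∀ m : ℕ, ∏ i ∈ Finset.Ico m (m + 2), ρ i = ρ m * ρ (m + 1) := by
    intro m
    rw [show m + 2 = (m + 1) + 1 from rfl, Finset.prod_Ico_succ_top (by omega), hIco1]
  -- pointwise rewriting helpers for the entry computations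
  have hEBt : ∀ m t : ℕ, (fun z : ℂ => z ^ t * φsr m z)
      = fun z => ∑ j ∈ Finset.range (m + 1),
          (CMVAux.Kc ζ ρabs m * conj ((Φ m).coeff (m - j))) * z ^ (j + t) := by
    intro m t
    funext z
    rw [hEB m z, Finset.mul_sum]
    exact Finset.sum_congr rfl fun j _ => by ring
  have hEAt : ∀ m t : ℕ, (fun z : ℂ => z ^ t * φr m z)
      = fun z => ∑ j ∈ Finset.range (m + 1),
          (CMVAux.Kc ζ ρabs m * (Φ m).coeff j) * z ^ (j + t) := by
    intro m t
    funext z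
    rw [hEA m z, Finset.mul_sum]
    exact Finset.sum_congr rfl fun j _ => by ring
  have hzmB : ∀ m : ℕ, (fun z : ℂ => z ^ (1 : ℕ) * φsr m z) = zmul (φsr m) := by
    intro m
    funext z
    rw [pow_one]
    rfl
  have hshiftAB : ∀ m k : ℕ,
      opucInner μ (fun z => z * φr m z) (zmul (φsr k))
        = opucInner μ (φr m) (φsr k) := by
    intro m k
    apply CMVAux.integrand_congr
    filter_upwards [hae] with z hz
    have h1 := CMVAux.conj_mul_self z hz
    show conj (z * φr m z) * (z * φsr k z) = _
    rw [map_mul]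
    linear_combination (conj (φr m z) * φsr k z) * h1
  have hRexp : ∀ m : ℕ, (fun z : ℂ => z ^ (1 : ℕ) * φr m z)
      = fun z => conj (ρ m) * φr (m + 1) z + conj (α m) * φsr m z := by
    intro m
    funext z
    rw [pow_one, hF1 m z]
  have hR2exp : ∀ m : ℕ, (fun z : ℂ => z ^ (2 : ℕ) * φr m z)
      = fun z => (conj (ρ m) * conj (ρ (m + 1))) * φr (m + 1 + 1) z
        + ((conj (ρ m) * conj (α (m + 1))) * φsr (m + 1) z
          + conj (α m) * (z * φsr m z)) := by
    intro m
    funext z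
    have h1 := hF1 m z
    have h2 := hF1 (m + 1) z
    linear_combination z * h1 + conj (ρ m) * h2
  refine ⟨?_, ?_, ?_, ?_, ?_, ?_, ?_, ?_, ?_⟩
  · -- entry ⟨χ_{2n-2}, z χ_{2n}⟩
    intro n hn
    obtain ⟨p, rfl⟩ : ∃ p, n = p + 1 := ⟨n - 1, by omega⟩
    rw [show 2 * (p + 1) - 2 = 2 * p by omega, show 2 * (p + 1) - 1 = 2 * p + 1 by omega]
    rw [hred1 p (p + 1) (by omega) _ _ _ _ (hχe p) (hχe (p + 1))]
    rw [show p + 1 - (p + 1) = 0 by omega]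
    rw [show (fun z : ℂ => z ^ (0 : ℕ) * φsr (2 * (p + 1)) z) = φsr (2 * (p + 1)) from
      funext fun z => by rw [pow_zero, one_mul]]
    rw [hK2 (2 * p) (2 * (p + 1)) (by omega)]
    rw [show 2 * (p + 1) = 2 * p + 2 by ring, hIco2]
  · -- entry ⟨χ_{2n-1}, z χ_{2n}⟩
    intro n hn
    obtain ⟨p, rfl⟩ : ∃ p, n = p + 1 := ⟨n - 1, by omega⟩
    rw [show 2 * (p + 1) - 2 = 2 * p by omega, show 2 * (p + 1) - 1 = 2 * p + 1 by omega]
    rw [hred1 p (p + 1) (by omega) _ _ _ _ (hχo p) (hχe (p + 1))]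
    rw [show p + 1 - (p + 1) = 0 by omega]
    rw [show (fun z : ℂ => z ^ (0 : ℕ) * φsr (2 * (p + 1)) z) = φsr (2 * (p + 1)) from
      funext fun z => by rw [pow_zero, one_mul]]
    rw [hK1 (2 * p + 1) (2 * (p + 1)) (by omega), hcoeff0 (2 * p + 1), hαms (2 * p)]
    rw [show 2 * (p + 1) = (2 * p + 1) + 1 by ring, hIco1]
  · -- entry ⟨χ_{2n}, z χ_{2n}⟩
    intro n
    rw [hred1 n n (by omega) _ _ _ _ (hχe n) (hχe n)]
    rw [show n + 1 - n = 1 by omega]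
    have hexp3 : φsr (2 * n) =ᵐ[μ]
        fun z => conj (ρ (2 * n)) * φsr (2 * n + 1) z + α (2 * n) * (z * φr (2 * n) z) :=
      Filter.Eventually.of_forall fun z => hF2 (2 * n) z
    rw [CMVAux.inner_congr hexp3 Filter.EventuallyEq.rfl]
    rw [CMVAux.inner_add_left
      (hInt _ _ ((CMVAux.Nice.const _).mul (hNB (2 * n + 1)))
        ((CMVAux.Nice.pow 1).mul (hNB (2 * n))))
      (hInt _ _ ((CMVAux.Nice.const _).mul (CMVAux.Nice.id.mul (hNA (2 * n))))
        ((CMVAux.Nice.pow 1).mul (hNB (2 * n))))]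
    rw [CMVAux.inner_const_left, CMVAux.inner_const_left]
    rw [hzmB (2 * n), hz3 (2 * n) (2 * n + 1) (by omega)]
    rw [hshiftAB (2 * n) (2 * n), hK1 (2 * n) (2 * n) le_rfl, Finset.Ico_self,
      Finset.prod_empty, mul_one, hcoeff0 (2 * n)]
    ring
  · -- entry ⟨χ_{2n+1}, z χ_{2n}⟩
    intro n
    rw [hred1 n n (by omega) _ _ _ _ (hχo n) (hχe n)]
    rw [show n + 1 - n = 1 by omega]
    have hexp4 : φr (2 * n + 1) =ᵐ[μ]
        fun z => ρ (2 * n) * (z * φr (2 * n) z) - conj (α (2 * n)) * φsr (2 * n + 1) z :=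
      Filter.Eventually.of_forall fun z => hG1 (2 * n) z
    rw [CMVAux.inner_congr hexp4 Filter.EventuallyEq.rfl]
    rw [CMVAux.inner_sub_left
      (hInt _ _ ((CMVAux.Nice.const _).mul (CMVAux.Nice.id.mul (hNA (2 * n))))
        ((CMVAux.Nice.pow 1).mul (hNB (2 * n))))
      (hInt _ _ ((CMVAux.Nice.const _).mul (hNB (2 * n + 1)))
        ((CMVAux.Nice.pow 1).mul (hNB (2 * n))))]
    rw [CMVAux.inner_const_left, CMVAux.inner_const_left]
    rw [hzmB (2 * n), hz3 (2 * n) (2 * n + 1) (by omega)]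
    rw [hshiftAB (2 * n) (2 * n), hK1 (2 * n) (2 * n) le_rfl, Finset.Ico_self,
      Finset.prod_empty, mul_one, hcoeff0 (2 * n)]
    ring
  · -- entry ⟨χ_{2n-2}, z χ_{2n-1}⟩
    intro n hn
    obtain ⟨p, rfl⟩ : ∃ p, n = p + 1 := ⟨n - 1, by omega⟩
    rw [show 2 * (p + 1) - 2 = 2 * p by omega, show 2 * (p + 1) - 1 = 2 * p + 1 by omega]
    rw [hred1 p p (by omega) _ _ _ _ (hχe p) (hχo p)]
    rw [show p + 1 - p = 1 by omega]
    rw [hRexp (2 * p + 1)]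
    rw [CMVAux.inner_add_right
      (hInt _ _ (hNB (2 * p)) ((CMVAux.Nice.const _).mul (hNA (2 * p + 1 + 1))))
      (hInt _ _ (hNB (2 * p)) ((CMVAux.Nice.const _).mul (hNB (2 * p + 1))))]
    rw [CMVAux.inner_const_right, CMVAux.inner_const_right]
    rw [CMVAux.inner_conj (μ := μ) (φsr (2 * p)) (φr (2 * p + 1 + 1)),
      hz1 (2 * p + 1 + 1) (2 * p) (by omega), map_zero, mul_zero]
    rw [hK2 (2 * p) (2 * p + 1) (by omega), hIco1]
    ring
  · -- entry ⟨χ_{2n-1}, z χ_{2n-1}⟩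
    intro n hn
    obtain ⟨p, rfl⟩ : ∃ p, n = p + 1 := ⟨n - 1, by omega⟩
    rw [show 2 * (p + 1) - 2 = 2 * p by omega, show 2 * (p + 1) - 1 = 2 * p + 1 by omega]
    rw [hred1 p p (by omega) _ _ _ _ (hχo p) (hχo p)]
    rw [show p + 1 - p = 1 by omega]
    rw [hRexp (2 * p + 1)]
    rw [CMVAux.inner_add_right
      (hInt _ _ (hNA (2 * p + 1)) ((CMVAux.Nice.const _).mul (hNA (2 * p + 1 + 1))))
      (hInt _ _ (hNA (2 * p + 1)) ((CMVAux.Nice.const _).mul (hNB (2 * p + 1))))]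
    rw [CMVAux.inner_const_right, CMVAux.inner_const_right]
    rw [CMVAux.inner_conj (μ := μ) (φr (2 * p + 1)) (φr (2 * p + 1 + 1)),
      hz2 (2 * p + 1 + 1) (2 * p + 1) (by omega), map_zero, mul_zero]
    rw [hK1 (2 * p + 1) (2 * p + 1) le_rfl, Finset.Ico_self, Finset.prod_empty, mul_one,
      hcoeff0 (2 * p + 1), hαms (2 * p)]
    ring
  · -- entry ⟨χ_{2n}, z χ_{2n-1}⟩
    intro n hn
    obtain ⟨p, rfl⟩ : ∃ p, n = p + 1 := ⟨n - 1, by omega⟩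
    rw [show 2 * (p + 1) - 1 = 2 * p + 1 by omega]
    rw [hred1 (p + 1) p (by omega) _ _ _ _ (hχe (p + 1)) (hχo p)]
    rw [show p + 1 + 1 - p = 2 by omega]
    rw [hR2exp (2 * p + 1)]
    rw [CMVAux.inner_add_right
      (hInt _ _ (hNB (2 * (p + 1))) ((CMVAux.Nice.const _).mul (hNA (2 * p + 1 + 1 + 1))))
      (hInt _ _ (hNB (2 * (p + 1))) (((CMVAux.Nice.const _).mul (hNB (2 * p + 1 + 1))).add
        ((CMVAux.Nice.const _).mul (CMVAux.Nice.id.mul (hNB (2 * p + 1))))))]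
    rw [CMVAux.inner_add_right
      (hInt _ _ (hNB (2 * (p + 1))) ((CMVAux.Nice.const _).mul (hNB (2 * p + 1 + 1))))
      (hInt _ _ (hNB (2 * (p + 1))) ((CMVAux.Nice.const _).mul (CMVAux.Nice.id.mul
        (hNB (2 * p + 1)))))]
    rw [CMVAux.inner_const_right, CMVAux.inner_const_right, CMVAux.inner_const_right]
    rw [CMVAux.inner_conj (μ := μ) (φsr (2 * (p + 1))) (φr (2 * p + 1 + 1 + 1)),
      hz1 (2 * p + 1 + 1 + 1) (2 * (p + 1)) (by omega), map_zero, mul_zero]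
    rw [show (fun z : ℂ => z * φsr (2 * p + 1) z) = zmul (φsr (2 * p + 1)) from rfl,
      hz3 (2 * p + 1) (2 * (p + 1)) (by omega), mul_zero]
    rw [show (2 : ℕ) * p + 1 + 1 = 2 * (p + 1) by ring]
    rw [hK2 (2 * (p + 1)) (2 * (p + 1)) le_rfl, Finset.Ico_self, Finset.prod_empty]
    ring
  · -- entry ⟨χ_{2n+1}, z χ_{2n-1}⟩
    intro n hn
    obtain ⟨p, rfl⟩ : ∃ p, n = p + 1 := ⟨n - 1, by omega⟩
    rw [show 2 * (p + 1) - 1 = 2 * p + 1 by omega]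
    rw [hred1 (p + 1) p (by omega) _ _ _ _ (hχo (p + 1)) (hχo p)]
    rw [show p + 1 + 1 - p = 2 by omega]
    rw [hR2exp (2 * p + 1)]
    rw [CMVAux.inner_add_right
      (hInt _ _ (hNA (2 * (p + 1) + 1)) ((CMVAux.Nice.const _).mul (hNA (2 * p + 1 + 1 + 1))))
      (hInt _ _ (hNA (2 * (p + 1) + 1)) (((CMVAux.Nice.const _).mul (hNB (2 * p + 1 + 1))).add
        ((CMVAux.Nice.const _).mul (CMVAux.Nice.id.mul (hNB (2 * p + 1))))))]
    rw [CMVAux.inner_add_right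
      (hInt _ _ (hNA (2 * (p + 1) + 1)) ((CMVAux.Nice.const _).mul (hNB (2 * p + 1 + 1))))
      (hInt _ _ (hNA (2 * (p + 1) + 1)) ((CMVAux.Nice.const _).mul (CMVAux.Nice.id.mul
        (hNB (2 * p + 1)))))]
    rw [CMVAux.inner_const_right, CMVAux.inner_const_right, CMVAux.inner_const_right]
    rw [show (2 : ℕ) * p + 1 + 1 + 1 = 2 * (p + 1) + 1 by ring]
    rw [hAA (2 * (p + 1) + 1)]
    rw [hz1 (2 * (p + 1) + 1) (2 * p + 1 + 1) (by omega), mul_zero]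
    rw [show (fun z : ℂ => z * φsr (2 * p + 1) z) = zmul (φsr (2 * p + 1)) from rfl,
      hz4 (2 * p + 1) (2 * (p + 1) + 1) (by omega), mul_zero]
    rw [show (2 : ℕ) * p + 1 + 1 = 2 * (p + 1) by ring]
    ring
  · -- five-diagonal structure
    intro k ℓ hkl
    have hsplit : ℓ + 3 ≤ k ∨ k + 3 ≤ ℓ := by
      rcases abs_cases ((k : ℤ) - (ℓ : ℤ)) with ⟨h1, _⟩ | ⟨h1, _⟩ <;> rw [h1] at hkl <;> omega
    rcases Nat.even_or_odd k with ⟨a, hk⟩ | ⟨a, hk⟩ <;>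
      rcases Nat.even_or_odd ℓ with ⟨b, hl⟩ | ⟨b, hl⟩
    · rw [show a + a = 2 * a by ring] at hk
      rw [show b + b = 2 * b by ring] at hl
      subst hk; subst hl
      rcases hsplit with hI | hII
      · rw [hred1 a b (by omega) _ _ _ _ (hχe a) (hχe b), hEBt (2 * b) (a + 1 - b)]
        exact hKB (2 * a) _ _ (fun j => j + (a + 1 - b)) fun j hj => by
          rw [Finset.mem_range] at hj
          show 1 ≤ j + (a + 1 - b) ∧ j + (a + 1 - b) ≤ 2 * a
          omega
      · rw [hred2 a b (by omega) _ _ _ _ (hχe a) (hχe b), hEBt (2 * a) (b - 1 - a)]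
        rw [hKB (2 * b) _ _ (fun j => j + (b - 1 - a)) fun j hj => by
          rw [Finset.mem_range] at hj
          show 1 ≤ j + (b - 1 - a) ∧ j + (b - 1 - a) ≤ 2 * b
          omega]
        exact map_zero _
    · rw [show a + a = 2 * a by ring] at hk
      subst hk; subst hl
      rcases hsplit with hI | hII
      · rw [hred1 a b (by omega) _ _ _ _ (hχe a) (hχo b), hEAt (2 * b + 1) (a + 1 - b)]
        exact hKB (2 * a) _ _ (fun j => j + (a + 1 - b)) fun j hj => by
          rw [Finset.mem_range] at hj
          show 1 ≤ j + (a + 1 - b) ∧ j + (a + 1 - b) ≤ 2 * a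
          omega
      · rw [hred2 a b (by omega) _ _ _ _ (hχe a) (hχo b), hEBt (2 * a) (b - 1 - a)]
        rw [hKA (2 * b + 1) _ _ (fun j => j + (b - 1 - a)) fun j hj => by
          rw [Finset.mem_range] at hj
          show j + (b - 1 - a) < 2 * b + 1
          omega]
        exact map_zero _
    · rw [show b + b = 2 * b by ring] at hl
      subst hk; subst hl
      rcases hsplit with hI | hII
      · rw [hred1 a b (by omega) _ _ _ _ (hχo a) (hχe b), hEBt (2 * b) (a + 1 - b)]
        exact hKA (2 * a + 1) _ _ (fun j => j + (a + 1 - b)) fun j hj => by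
          rw [Finset.mem_range] at hj
          show j + (a + 1 - b) < 2 * a + 1
          omega
      · rw [hred2 a b (by omega) _ _ _ _ (hχo a) (hχe b), hEAt (2 * a + 1) (b - 1 - a)]
        rw [hKB (2 * b) _ _ (fun j => j + (b - 1 - a)) fun j hj => by
          rw [Finset.mem_range] at hj
          show 1 ≤ j + (b - 1 - a) ∧ j + (b - 1 - a) ≤ 2 * b
          omega]
        exact map_zero _
    · subst hk; subst hl
      rcases hsplit with hI | hII
      · rw [hred1 a b (by omega) _ _ _ _ (hχo a) (hχo b), hEAt (2 * b + 1) (a + 1 - b)]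
        exact hKA (2 * a + 1) _ _ (fun j => j + (a + 1 - b)) fun j hj => by
          rw [Finset.mem_range] at hj
          show j + (a + 1 - b) < 2 * a + 1
          omega
      · rw [hred2 a b (by omega) _ _ _ _ (hχo a) (hχo b), hEAt (2 * a + 1) (b - 1 - a)]
        rw [hKA (2 * b + 1) _ _ (fun j => j + (b - 1 - a)) fun j hj => by
          rw [Finset.mem_range] at hj
          show j + (b - 1 - a) < 2 * b + 1
          omega]
        exact map_zero _
end

section
/- Let α : ℕ → ℂ with |αₙ| < 1 and ρ : ℕ → ℂ with |αₙ|² + |ρₙ|² = 1 (so ρₙ ≠ 0), and set α_{−1} = −1, ζₙ = ρₙ/|ρₙ|, and r_k = ∏_{j=0}^{k−1} ζⱼ. Define the rotated CMV matrix entries C^∠(α,ρ) : ℕ×ℕ → ℂ by: C^∠(2n, 2n−1) = conj(α_{2n})·conj(ρ_{2n−1}) for n ≥ 1; C^∠(2n, 2n) = −conj(α_{2n})·α_{2n−1}; C^∠(2n, 2n+1) = conj(α_{2n+1})·ρ_{2n}; C^∠(2n, 2n+2) = ρ_{2n+1}·ρ_{2n}; C^∠(2n+1, 2n−1) = conj(ρ_{2n})·conj(ρ_{2n−1})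 for n ≥ 1; C^∠(2n+1, 2n) = −α_{2n−1}·conj(ρ_{2n}); C^∠(2n+1, 2n+1) = −conj(α_{2n+1})·α_{2n}; C^∠(2n+1, 2n+2) = −α_{2n}·ρ_{2n+1}; and all other entries are 0. Let C(α, |ρ|) be defined by the same formulas with |ρₙ| in place of ρₙ. Then for all k, ℓ ∈ ℕ: C(α, |ρ|)(k, ℓ) = r_k · C^∠(α, ρ)(k, ℓ) · conj(r_ℓ); that is, the diagonal unitary R = diag(1, ζ₀, ζ₀ζ₁, ζ₀ζ₁ζ₂, …) conjugates the rotated CMV matrix C^∠({αₙ, ρₙ}) into the standard CMV matrix C({αₙ, |ρₙ|}) with the same Verblunsky coefficients. -/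
open ComplexConjugate

/-- **Unitary conjugation of the rotated CMV matrix into the standard CMV matrix.**
Let `|αₙ| < 1`, `|αₙ|² + |ρₙ|² = 1`, `ζₙ = ρₙ/|ρₙ|`, and `r k = ∏_{j<k} ζⱼ`.  If `CD` is
the rotated CMV matrix `C^∠({αₙ, ρₙ})` and `C` is the standard CMV matrix `C({αₙ, |ρₙ|})`
(same formulas with `|ρₙ|` in place of `ρₙ`), then
`C k ℓ = r k * CD k ℓ * conj (r ℓ)` for all `k, ℓ`; that is, the diagonal unitary
`R = diag(1, ζ₀, ζ₀ζ₁, …)` conjugates `C^∠({αₙ, ρₙ})` into `C({αₙ, |ρₙ|})`, leaving the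
Verblunsky coefficients invariant.  The convention `α₋₁ = -1` is encoded via `αm`, with
`αm k = α (k-1)`. -/
theorem rotated_cmv_conjugation_to_standard
    (α ρ : ℕ → ℂ)
    (hα : ∀ n, ‖α n‖ < 1)
    (hρ : ∀ n, ‖α n‖ ^ 2 + ‖ρ n‖ ^ 2 = 1)
    (αm : ℕ → ℂ) (hαm0 : αm 0 = -1) (hαms : ∀ n, αm (n + 1) = α n)
    (ζ : ℕ → ℂ) (hζ : ∀ n, ζ n = ρ n / ((‖ρ n‖ : ℝ) : ℂ))
    (r : ℕ → ℂ) (hr : ∀ k, r k = ∏ j ∈ Finset.range k, ζ j)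
    (CD C : ℕ → ℕ → ℂ)
    -- entries of the rotated CMV matrix `CD = C^∠({αₙ, ρₙ})`
    (hCD1 : ∀ n : ℕ, 1 ≤ n →
      CD (2 * n) (2 * n - 1) = conj (α (2 * n)) * conj (ρ (2 * n - 1)))
    (hCD2 : ∀ n : ℕ, CD (2 * n) (2 * n) = -conj (α (2 * n)) * αm (2 * n))
    (hCD3 : ∀ n : ℕ, CD (2 * n) (2 * n + 1) = conj (α (2 * n + 1)) * ρ (2 * n))
    (hCD4 : ∀ n : ℕ, CD (2 * n) (2 * n + 2) = ρ (2 * n + 1) * ρ (2 * n))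
    (hCD5 : ∀ n : ℕ, 1 ≤ n →
      CD (2 * n + 1) (2 * n - 1) = conj (ρ (2 * n)) * conj (ρ (2 * n - 1)))
    (hCD6 : ∀ n : ℕ, CD (2 * n + 1) (2 * n) = -αm (2 * n) * conj (ρ (2 * n)))
    (hCD7 : ∀ n : ℕ, CD (2 * n + 1) (2 * n + 1) = -conj (α (2 * n + 1)) * α (2 * n))
    (hCD8 : ∀ n : ℕ, CD (2 * n + 1) (2 * n + 2) = -α (2 * n) * ρ (2 * n + 1))
    (hCD0 : ∀ k ℓ : ℕ, (ℓ + 1 < 2 * (k / 2) ∨ 2 * (k / 2) + 2 < ℓ) → CD k ℓ = 0)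
    -- entries of the standard CMV matrix `C = C({αₙ, |ρₙ|})`: the same formulas with
    -- `|ρₙ|` in place of `ρₙ`
    (hC1 : ∀ n : ℕ, 1 ≤ n → C (2 * n) (2 * n - 1)
      = conj (α (2 * n)) * conj ((‖ρ (2 * n - 1)‖ : ℝ) : ℂ))
    (hC2 : ∀ n : ℕ, C (2 * n) (2 * n) = -conj (α (2 * n)) * αm (2 * n))
    (hC3 : ∀ n : ℕ, C (2 * n) (2 * n + 1)
      = conj (α (2 * n + 1)) * ((‖ρ (2 * n)‖ : ℝ) : ℂ))
    (hC4 : ∀ n : ℕ, C (2 * n) (2 * n + 2)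
      = ((‖ρ (2 * n + 1)‖ : ℝ) : ℂ) * ((‖ρ (2 * n)‖ : ℝ) : ℂ))
    (hC5 : ∀ n : ℕ, 1 ≤ n → C (2 * n + 1) (2 * n - 1)
      = conj ((‖ρ (2 * n)‖ : ℝ) : ℂ) * conj ((‖ρ (2 * n - 1)‖ : ℝ) : ℂ))
    (hC6 : ∀ n : ℕ, C (2 * n + 1) (2 * n)
      = -αm (2 * n) * conj ((‖ρ (2 * n)‖ : ℝ) : ℂ))
    (hC7 : ∀ n : ℕ, C (2 * n + 1) (2 * n + 1) = -conj (α (2 * n + 1)) * α (2 * n))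
    (hC8 : ∀ n : ℕ, C (2 * n + 1) (2 * n + 2)
      = -α (2 * n) * ((‖ρ (2 * n + 1)‖ : ℝ) : ℂ))
    (hC0 : ∀ k ℓ : ℕ, (ℓ + 1 < 2 * (k / 2) ∨ 2 * (k / 2) + 2 < ℓ) → C k ℓ = 0) :
    ∀ k ℓ : ℕ, C k ℓ = r k * CD k ℓ * conj (r ℓ) := by
  -- `|ρ n| ≠ 0`
  have hρa : ∀ n, ‖ρ n‖ ≠ 0 := by
    intro n hz
    have h1 := hα n
    have h2 := hρ n
    have h0 := norm_nonneg (α n)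
    rw [hz] at h2
    nlinarith
  have hane : ∀ n, ((‖ρ n‖ : ℝ) : ℂ) ≠ 0 :=
    fun n => Complex.ofReal_ne_zero.mpr (hρa n)
  -- `ζ` is unimodular
  have hζu : ∀ n, ζ n * conj (ζ n) = 1 := by
    intro n
    rw [hζ, map_div₀, Complex.conj_ofReal, div_mul_div_comm, Complex.mul_conj,
      Complex.normSq_eq_norm_sq]
    rw [div_eq_one_iff_eq (mul_ne_zero (hane n) (hane n))]
    push_cast
    ring
  have hζne : ∀ n, ζ n ≠ 0 := by
    intro n hz
    have := hζu n
    rw [hz] at this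
    simp at this
  have hζc : ∀ n, conj (ζ n) = (ζ n)⁻¹ :=
    fun n => eq_inv_of_mul_eq_one_left (by rw [mul_comm]; exact hζu n)
  -- facts about `r`
  have hrne : ∀ k, r k ≠ 0 := by
    intro k
    rw [hr]
    exact Finset.prod_ne_zero_iff.mpr fun j _ => hζne j
  have hrc : ∀ k, conj (r k) = (r k)⁻¹ := by
    intro k
    rw [hr, map_prod, ← Finset.prod_inv_distrib]
    exact Finset.prod_congr rfl fun j _ => hζc j
  have hrs : ∀ k, r (k + 1) = r k * ζ k := by
    intro k
    rw [hr, hr, Finset.prod_range_succ]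
  -- decomposition of `ρ`
  have hρζ : ∀ n, ρ n = ((‖ρ n‖ : ℝ) : ℂ) * ζ n := by
    intro n
    rw [hζ, mul_comm]
    exact (div_mul_cancel₀ (ρ n) (hane n)).symm
  have hρc : ∀ n, conj (ρ n) = ((‖ρ n‖ : ℝ) : ℂ) * (ζ n)⁻¹ := by
    intro n
    conv_lhs => rw [hρζ n]
    rw [map_mul, Complex.conj_ofReal, hζc]
  intro k ℓ
  rcases Nat.even_or_odd' k with ⟨n, hk | hk⟩ <;> subst hk
  · -- k = 2n
    by_cases hb : ℓ + 1 < 2 * n ∨ 2 * n + 2 < ℓ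
    · rw [hC0 (2 * n) ℓ (by omega), hCD0 (2 * n) ℓ (by omega)]
      ring
    · push_neg at hb
      have hcase : (ℓ + 1 = 2 * n ∧ 1 ≤ n) ∨ ℓ = 2 * n ∨ ℓ = 2 * n + 1 ∨ ℓ = 2 * n + 2 := by
        omega
      rcases hcase with ⟨hl, hn⟩ | rfl | rfl | rfl
      · -- ℓ = 2n - 1
        obtain ⟨m, rfl⟩ : ∃ m, n = m + 1 := ⟨n - 1, by omega⟩
        have hℓ : ℓ = 2 * (m + 1) - 1 := by omega
        subst hℓ
        rw [hC1 (m + 1) (by omega), hCD1 (m + 1) (by omega)]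
        simp only [show 2 * (m + 1) - 1 = 2 * m + 1 from by omega,
          show 2 * (m + 1) = (2 * m + 1) + 1 from by omega]
        rw [hrs, hρc, hrc, Complex.conj_ofReal]
        field_simp [hrne (2 * m + 1), hζne (2 * m + 1)]
        ring_nf; rw [show 2 + m * 2 - 1 = 1 + m * 2 from by omega]; ring
      · -- ℓ = 2n
        rw [hC2, hCD2, hrc]
        field_simp [hrne (2 * n)]
      · -- ℓ = 2n + 1
        rw [hC3, hCD3]
        conv_rhs => rw [hρζ (2 * n)]
        rw [hrs, map_mul, hrc, hζc]
        field_simp [hrne (2 * n), hζne (2 * n)]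
      · -- ℓ = 2n + 2
        rw [hC4, hCD4]
        conv_rhs => rw [hρζ (2 * n), hρζ (2 * n + 1)]
        rw [show 2 * n + 2 = (2 * n + 1) + 1 from rfl, hrs, hrs, map_mul, map_mul,
          hrc, hζc, hζc]
        field_simp [hrne (2 * n), hζne (2 * n), hζne (2 * n + 1)]
  · -- k = 2n + 1
    by_cases hb : ℓ + 1 < 2 * n ∨ 2 * n + 2 < ℓ
    · rw [hC0 (2 * n + 1) ℓ (by omega), hCD0 (2 * n + 1) ℓ (by omega)]
      ring
    · push_neg at hb
      have hcase : (ℓ + 1 = 2 * n ∧ 1 ≤ n) ∨ ℓ = 2 * n ∨ ℓ = 2 * n + 1 ∨ ℓ = 2 * n + 2 := by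
        omega
      rcases hcase with ⟨hl, hn⟩ | rfl | rfl | rfl
      · -- ℓ = 2n - 1
        obtain ⟨m, rfl⟩ : ∃ m, n = m + 1 := ⟨n - 1, by omega⟩
        have hℓ : ℓ = 2 * (m + 1) - 1 := by omega
        subst hℓ
        rw [hC5 (m + 1) (by omega), hCD5 (m + 1) (by omega)]
        simp only [show 2 * (m + 1) - 1 = 2 * m + 1 from by omega,
          show 2 * (m + 1) = (2 * m + 1) + 1 from by omega]
        rw [hrs, hrs, hρc, hρc, hrc, Complex.conj_ofReal, Complex.conj_ofReal]
        field_simp [hrne (2 * m + 1), hζne (2 * m + 1), hζne ((2 * m + 1) + 1)]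
        ring_nf; rw [show 2 + m * 2 - 1 = 1 + m * 2 from by omega]; ring
      · -- ℓ = 2n
        rw [hC6, hCD6, hrs, hρc, hrc, Complex.conj_ofReal]
        field_simp [hrne (2 * n), hζne (2 * n)]
      · -- ℓ = 2n + 1
        rw [hC7, hCD7, hrc]
        field_simp [hrne (2 * n + 1)]
      · -- ℓ = 2n + 2
        rw [hC8, hCD8, hrc, show 2 * n + 2 = (2 * n + 1) + 1 from by omega, hrs (2 * n + 1)]
        conv_rhs => rw [hρζ (2 * n + 1)]
        field_simp [hrne (2 * n + 1), hζne (2 * n + 1)]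
end

section
/- With the rotated OPUC setup, the forward Szegő recursion, and the rotated CMV and alternate CMV bases (see context), assume in addition that {χₙ^∠} and {χ̃ₙ^∠} are orthonormal in L²(μ). Define L^∠_{kℓ} = ⟨χₖ^∠, z·χ̃_ℓ^∠⟩ and M^∠_{kℓ} = ⟨χ̃ₖ^∠, χ_ℓ^∠⟩. Then L^∠ is block diagonal with 2×2 blocks Θ_{2n}^∠ = [[conj(α_{2n}), ρ_{2n}], [conj(ρ_{2n}), −α_{2n}]] on rows/columns (2n, 2n+1): explicitly L^∠_{2n,2n} = conj(α_{2n}), L^∠_{2n+1,2n} = conj(ρ_{2n}), L^∠_{2n,2n+1} = ρ_{2n}, L^∠_{2n+1,2n+1} = −α_{2n}, and L^∠_{kℓ} = 0 whenever k and ℓ do not lie in a common pair {2n, 2n+1}; and M^∠ is block diagonal with the 1×1 block 1 at (0,0) followed by 2×2 blocks Θ_{2n−1}^∠ = [[conj(α_{2n−1}), ρ_{2n−1}], [conj(ρ_{2n−1}), −α_{2n−1}]] on rows/columns (2n−1, 2n) for n ≥ 1: explicitly M^∠_{00} = 1, M^∠_{2n−1,2n−1} = conj(α_{2n−1}), M^∠_{2n,2n−1}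 = conj(ρ_{2n−1}), M^∠_{2n−1,2n} = ρ_{2n−1}, M^∠_{2n,2n} = −α_{2n−1}, and M^∠_{kℓ} = 0 whenever k and ℓ do not lie in a common pair {2n−1, 2n} (n ≥ 1) and (k,ℓ) ≠ (0,0). -/
open MeasureTheory ComplexConjugate

/-- **Θ-factorisation of the rotated `L` and `M` operators.**
With `L^∠_{kℓ} = ⟨χₖ^∠, z·χ̃_ℓ^∠⟩` and `M^∠_{kℓ} = ⟨χ̃ₖ^∠, χ_ℓ^∠⟩`, the operator `L^∠` is
block diagonal with `2×2` blocks `Θ_{2n}^∠ = [[conj α_{2n}, ρ_{2n}], [conj ρ_{2n}, -α_{2n}]]`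
on the coordinate pairs `(2n, 2n+1)`, and `M^∠` is block diagonal with the `1×1` block `1`
at `(0,0)` followed by the blocks `Θ_{2n-1}^∠` on the pairs `(2n-1, 2n)` for `n ≥ 1`. -/
theorem rotated_LM_theta_factorisation
    (μ : Measure ℂ) [IsProbabilityMeasure μ]
    -- the support of `μ` is an infinite subset of the unit circle
    (hsupp_circ : measureSupport μ ⊆ {z : ℂ | ‖z‖ = 1})
    (hsupp_inf : (measureSupport μ).Infinite)
    -- `Φₙ` is the monic OPUC of degree `n`
    (Φ : ℕ → Polynomial ℂ)
    (hΦmonic : ∀ n, (Φ n).Monic) (hΦdeg : ∀ n, (Φ n).natDegree = n)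
    (hΦorth : ∀ n, ∀ j < n, opucInner μ (fun z => (Φ n).eval z) (fun z => z ^ j) = 0)
    -- `Φₙ*` is the reverse polynomial of `Φₙ`
    (Φs : ℕ → ℂ → ℂ)
    (hΦs : ∀ n z, Φs n z = ∑ j ∈ Finset.range (n + 1), conj ((Φ n).coeff (n - j)) * z ^ j)
    -- the Verblunsky coefficients, with `|αₙ| < 1`
    (α : ℕ → ℂ) (hα : ∀ n, α n = -conj ((Φ (n + 1)).eval 0))
    (hα1 : ∀ n, ‖α n‖ < 1)
    -- `αm k = α (k - 1)`, with the convention `α₋₁ = -1`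
    (αm : ℕ → ℂ) (hαm0 : αm 0 = -1) (hαms : ∀ n, αm (n + 1) = α n)
    -- `ρabs n = |ρₙ| = (1 - |αₙ|²)^{1/2}` and the Szegő norm identity
    (ρabs : ℕ → ℝ) (hρabs : ∀ n, ρabs n = Real.sqrt (1 - ‖α n‖ ^ 2))
    (hΦnorm : ∀ n, opucInner μ (fun z => (Φ n).eval z) (fun z => (Φ n).eval z)
      = (((∏ j ∈ Finset.range n, ρabs j : ℝ)) : ℂ) ^ 2)
    -- a sequence of unimodular numbers and the rotated `ρₙ = |ρₙ|·ζₙ`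
    (ζ : ℕ → ℂ) (hζ : ∀ n, ‖ζ n‖ = 1)
    (ρ : ℕ → ℂ) (hρ : ∀ n, ρ n = ((ρabs n : ℝ) : ℂ) * ζ n)
    -- the orthonormal polynomials, their reverses, and the rotated versions
    (φ φs φr φsr : ℕ → ℂ → ℂ)
    (hφ : ∀ n z, φ n z = (((∏ j ∈ Finset.range n, ρabs j : ℝ)) : ℂ)⁻¹ * (Φ n).eval z)
    (hφs : ∀ n z, φs n z = (((∏ j ∈ Finset.range n, ρabs j : ℝ)) : ℂ)⁻¹ * Φs n z)
    (hφr : ∀ n z, φr n z = (∏ j ∈ Finset.range n, ζ j) * φ n z)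
    (hφsr : ∀ n z, φsr n z = (∏ j ∈ Finset.range n, ζ j) * φs n z)
    -- the forward Szegő recursion
    (hszego : ∀ (n : ℕ) (z : ℂ),
      φ (n + 1) z = ((ρabs n : ℝ) : ℂ)⁻¹ * (z * φ n z - conj (α n) * φs n z)
      ∧ φs (n + 1) z = ((ρabs n : ℝ) : ℂ)⁻¹ * (φs n z - α n * z * φ n z))
    -- the rotated CMV basis
    (χ : ℕ → ℂ → ℂ)
    (hχeven : ∀ (n : ℕ) (z : ℂ), z ≠ 0 → χ (2 * n) z = z ^ (-(n : ℤ)) * φsr (2 * n) z)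
    (hχodd : ∀ (n : ℕ) (z : ℂ), z ≠ 0 → χ (2 * n + 1) z = z ^ (-(n : ℤ)) * φr (2 * n + 1) z)
    -- the rotated alternate CMV basis
    (χt : ℕ → ℂ → ℂ)
    (hχteven : ∀ (n : ℕ) (z : ℂ), z ≠ 0 → χt (2 * n) z = z ^ (-(n : ℤ)) * φr (2 * n) z)
    (hχtodd : ∀ (n : ℕ) (z : ℂ), z ≠ 0 →
      χt (2 * n + 1) z = z ^ (-(n : ℤ) - 1) * φsr (2 * n + 1) z)
    -- both bases are orthonormal in `L²(μ)`
    (hχon : ∀ j k, opucInner μ (χ j) (χ k) = if j = k then 1 else 0)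
    (hχton : ∀ j k, opucInner μ (χt j) (χt k) = if j = k then 1 else 0)
    -- the entries of `L^∠` and `M^∠`
    (Lop Mop : ℕ → ℕ → ℂ)
    (hLop : ∀ k ℓ, Lop k ℓ = opucInner μ (χ k) (zmul (χt ℓ)))
    (hMop : ∀ k ℓ, Mop k ℓ = opucInner μ (χt k) (χ ℓ)) :
    -- `L^∠` is block diagonal with blocks `Θ_{2n}^∠` on the pairs `(2n, 2n+1)`
    ((∀ n : ℕ, Lop (2 * n) (2 * n) = conj (α (2 * n))
        ∧ Lop (2 * n + 1) (2 * n) = conj (ρ (2 * n))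
        ∧ Lop (2 * n) (2 * n + 1) = ρ (2 * n)
        ∧ Lop (2 * n + 1) (2 * n + 1) = -α (2 * n))
      ∧ (∀ k ℓ : ℕ, k / 2 ≠ ℓ / 2 → Lop k ℓ = 0))
    -- `M^∠` is block diagonal with the block `1` at `(0,0)` and blocks `Θ_{2n-1}^∠`
    -- on the pairs `(2n-1, 2n)`, `n ≥ 1`
    ∧ (Mop 0 0 = 1
      ∧ (∀ n : ℕ, 1 ≤ n → Mop (2 * n - 1) (2 * n - 1) = conj (α (2 * n - 1))
        ∧ Mop (2 * n) (2 * n - 1) = conj (ρ (2 * n - 1))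
        ∧ Mop (2 * n - 1) (2 * n) = ρ (2 * n - 1)
        ∧ Mop (2 * n) (2 * n) = -α (2 * n - 1))
      ∧ (∀ k ℓ : ℕ, (k + 1) / 2 ≠ (ℓ + 1) / 2 → Mop k ℓ = 0)) := by
  classical
  -- ## numeric facts
  have hρpos : ∀ n, 0 < ρabs n := by
    intro n
    rw [hρabs]
    have h0 : (0:ℝ) ≤ ‖α n‖ := norm_nonneg _
    have h2 : ‖α n‖ ^ 2 < 1 := by nlinarith [hα1 n]
    exact Real.sqrt_pos.mpr (by linarith)
  have hρC : ∀ n, ((ρabs n : ℝ) : ℂ) ≠ 0 := fun n =>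
    Complex.ofReal_ne_zero.mpr (ne_of_gt (hρpos n))
  have hρsq : ∀ n, ((ρabs n : ℝ) : ℂ) ^ 2 + conj (α n) * α n = 1 := by
    intro n
    have h0 : (0:ℝ) ≤ ‖α n‖ := norm_nonneg _
    have h2 : ‖α n‖ ^ 2 ≤ 1 := by nlinarith [hα1 n]
    have hr : (ρabs n)^2 = 1 - ‖α n‖^2 := by
      rw [hρabs]; exact Real.sq_sqrt (by linarith)
    have hc : conj (α n) * α n = ((‖α n‖ : ℂ))^2 := by
      rw [Complex.conj_mul']
    rw [hc, show ((ρabs n : ℝ):ℂ)^2 = (((ρabs n)^2 : ℝ) : ℂ) from by push_cast; ring, hr]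
    push_cast
    ring
  have hζconj : ∀ n, conj (ζ n) * ζ n = 1 := by
    intro n
    rw [Complex.conj_mul', hζ n]
    norm_num
  have hζne : ∀ n, ζ n ≠ 0 := by
    intro n h
    have := hζ n
    rw [h] at this
    simp at this
  have hconjρζ : ∀ n, conj (ρ n) * ζ n = ((ρabs n : ℝ) : ℂ) := by
    intro n
    rw [hρ n, map_mul, Complex.conj_ofReal, mul_assoc, hζconj n, mul_one]
  have hρρ : ∀ n, conj (ρ n) * ρ n = ((ρabs n : ℝ):ℂ)^2 := by
    intro n
    rw [hρ n, map_mul, Complex.conj_ofReal]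
    linear_combination (((ρabs n : ℝ):ℂ))^2 * hζconj n
  have hρne : ∀ n, ρ n ≠ 0 := fun n => by
    rw [hρ n]; exact mul_ne_zero (hρC n) (hζne n)
  have hconjρne : ∀ n, conj (ρ n) ≠ 0 := fun n => by
    rw [starRingEnd_apply]; exact star_ne_zero.mpr (hρne n)
  -- ## cleared Szegő recursion
  have hsz1 : ∀ n z, ((ρabs n:ℝ):ℂ) * φ (n+1) z = z * φ n z - conj (α n) * φs n z := by
    intro n z
    rw [(hszego n z).1, mul_inv_cancel_left₀ (hρC n)]
  have hsz2 : ∀ n z, ((ρabs n:ℝ):ℂ) * φs (n+1) z = φs n z - α n * z * φ n z := by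
    intro n z
    rw [(hszego n z).2, mul_inv_cancel_left₀ (hρC n)]
  -- ## rotated recursion
  have hR1 : ∀ n z, z * φr n z = conj (ρ n) * φr (n+1) z + conj (α n) * φsr n z := by
    intro n z
    rw [hφr n z, hφr (n+1) z, hφsr n z, Finset.prod_range_succ]
    linear_combination (-(∏ j ∈ Finset.range n, ζ j)) * hsz1 n z +
      (-(∏ j ∈ Finset.range n, ζ j) * φ (n+1) z) * hconjρζ n
  have hR2 : ∀ n z, φsr n z = conj (ρ n) * φsr (n+1) z + α n * (z * φr n z) := by
    intro n z
    rw [hφsr n z, hφsr (n+1) z, hφr n z, Finset.prod_range_succ]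
    linear_combination (-(∏ j ∈ Finset.range n, ζ j)) * hsz2 n z +
      (-(∏ j ∈ Finset.range n, ζ j) * φs (n+1) z) * hconjρζ n
  have hR4 : ∀ n z, φsr (n+1) z = ρ n * φsr n z - α n * φr (n+1) z := by
    intro n z
    apply mul_left_cancel₀ (hconjρne n)
    linear_combination (-1 : ℂ) * hR2 n z + (-(α n)) * hR1 n z +
      (-(φsr n z)) * hρρ n + (-(φsr n z)) * hρsq n
  -- ## a.e. nonvanishing
  have h0supp : (0:ℂ) ∉ measureSupport μ := by
    intro h
    have := hsupp_circ h
    simp [Set.mem_setOf_eq] at this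
  have hμ0 : μ {(0:ℂ)} = 0 := by
    rw [measureSupport, Set.mem_setOf_eq] at h0supp
    push_neg at h0supp
    obtain ⟨U, hU, hUμ⟩ := h0supp
    exact le_antisymm (hUμ ▸ measure_mono (Set.singleton_subset_iff.mpr (mem_of_mem_nhds hU)))
      (zero_le)
  have hae0 : ∀ᵐ z ∂μ, z ≠ 0 := by
    rw [MeasureTheory.ae_iff]
    convert hμ0 using 2
    ext z
    simp
  -- ## measurability
  have hmΦs : ∀ n, Measurable (Φs n) := by
    intro n
    rw [show Φs n = fun z => ∑ j ∈ Finset.range (n + 1), conj ((Φ n).coeff (n - j)) * z ^ j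
      from funext (hΦs n)]
    exact Finset.measurable_sum _ fun j _ => (measurable_id.pow_const j).const_mul _
  have hmφ : ∀ n, Measurable (φ n) := by
    intro n
    rw [show φ n = fun z => (((∏ j ∈ Finset.range n, ρabs j : ℝ)) : ℂ)⁻¹ * (Φ n).eval z
      from funext (hφ n)]
    exact ((Φ n).continuous).measurable.const_mul _
  have hmφs : ∀ n, Measurable (φs n) := by
    intro n
    rw [show φs n = fun z => (((∏ j ∈ Finset.range n, ρabs j : ℝ)) : ℂ)⁻¹ * Φs n z
      from funext (hφs n)]
    exact (hmΦs n).const_mul _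
  have hmφr : ∀ n, Measurable (φr n) := by
    intro n
    rw [show φr n = fun z => (∏ j ∈ Finset.range n, ζ j) * φ n z from funext (hφr n)]
    exact (hmφ n).const_mul _
  have hmφsr : ∀ n, Measurable (φsr n) := by
    intro n
    rw [show φsr n = fun z => (∏ j ∈ Finset.range n, ζ j) * φs n z from funext (hφsr n)]
    exact (hmφs n).const_mul _
  have hamχ : ∀ k, AEStronglyMeasurable (χ k) μ := by
    intro k
    rcases Nat.even_or_odd k with ⟨m, hm⟩ | ⟨m, hm⟩
    · rw [show k = 2*m from by omega]
      refine (((measurable_id.pow_const m).inv.mul (hmφsr (2*m))).aestronglyMeasurable).congr ?_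
      filter_upwards [hae0] with z hz
      rw [hχeven m z hz, zpow_neg, zpow_natCast]
      rfl
    · rw [show k = 2*m+1 from by omega]
      refine (((measurable_id.pow_const m).inv.mul (hmφr (2*m+1))).aestronglyMeasurable).congr ?_
      filter_upwards [hae0] with z hz
      rw [hχodd m z hz, zpow_neg, zpow_natCast]
      rfl
  have hamχt : ∀ k, AEStronglyMeasurable (χt k) μ := by
    intro k
    rcases Nat.even_or_odd k with ⟨m, hm⟩ | ⟨m, hm⟩
    · rw [show k = 2*m from by omega]
      refine (((measurable_id.pow_const m).inv.mul (hmφr (2*m))).aestronglyMeasurable).congr ?_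
      filter_upwards [hae0] with z hz
      rw [hχteven m z hz, zpow_neg, zpow_natCast]
      rfl
    · rw [show k = 2*m+1 from by omega]
      refine (((measurable_id.pow_const (m+1)).inv.mul
        (hmφsr (2*m+1))).aestronglyMeasurable).congr ?_
      filter_upwards [hae0] with z hz
      rw [hχtodd m z hz, show (-(m:ℤ)-1) = -((m+1 : ℕ) : ℤ) from by push_cast; ring,
        zpow_neg, zpow_natCast]
      rfl
  -- ## L² membership
  have hL2 : ∀ f : ℂ → ℂ, AEStronglyMeasurable f μ → opucInner μ f f = 1 → MemLp f 2 μ := by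
    intro f hm h1
    rw [memLp_two_iff_integrable_sq_norm hm]
    have hint : Integrable (fun z => conj (f z) * f z) μ := by
      by_contra hni
      rw [opucInner, integral_undef hni] at h1
      exact one_ne_zero h1.symm
    have h2 := hint.re
    have h3 : ∀ z : ℂ, RCLike.re (conj (f z) * f z) = ‖f z‖ ^ 2 := by
      intro z
      rw [Complex.conj_mul', ← Complex.ofReal_pow, RCLike.re_to_complex, Complex.ofReal_re]
    exact h2.congr (Filter.Eventually.of_forall h3)
  have honχ : ∀ k, MemLp (χ k) 2 μ := fun k => hL2 _ (hamχ k) (by simpa using hχon k k)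
  have honχt : ∀ k, MemLp (χt k) 2 μ := fun k => hL2 _ (hamχt k) (by simpa using hχton k k)
  have hintmul : ∀ f g : ℂ → ℂ, MemLp f 2 μ → MemLp g 2 μ →
      Integrable (fun z => conj (f z) * g z) μ := by
    intro f g hf hg
    have h := L2.integrable_inner (𝕜 := ℂ) (hf.toLp f) (hg.toLp g)
    refine h.congr ?_
    filter_upwards [hf.coeFn_toLp, hg.coeFn_toLp] with z h1 h2
    rw [h1, h2, RCLike.inner_apply, mul_comm]
  -- ## the generic inner product computation
  have generic : ∀ (B : ℕ → ℂ → ℂ), (∀ k, MemLp (B k) 2 μ) →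
      (∀ j k, opucInner μ (B j) (B k) = if j = k then 1 else 0) →
      ∀ (a b : ℂ) (p q k : ℕ) (h : ℂ → ℂ), (h =ᵐ[μ] fun z => a * B p z + b * B q z) →
      opucInner μ (B k) h = (if k = p then a else 0) + (if k = q then b else 0) := by
    intro B hB hon a b p q k h hae
    have h1 : opucInner μ (B k) h
        = ∫ z, (a * (conj (B k z) * B p z) + b * (conj (B k z) * B q z)) ∂μ := by
      simp only [opucInner]
      apply integral_congr_ae
      filter_upwards [hae] with z hz
      rw [hz]; ring
    rw [h1, integral_add ((hintmul _ _ (hB k) (hB p)).const_mul a)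
      ((hintmul _ _ (hB k) (hB q)).const_mul b), integral_const_mul, integral_const_mul]
    have e1 := hon k p
    have e2 := hon k q
    simp only [opucInner] at e1 e2
    rw [e1, e2]
    split_ifs <;> ring
  -- ## a.e. expansions
  have haeL0 : ∀ n, zmul (χt (2*n)) =ᵐ[μ]
      fun z => conj (α (2*n)) * χ (2*n) z + conj (ρ (2*n)) * χ (2*n+1) z := by
    intro n
    filter_upwards [hae0] with z hz
    simp only [zmul]
    rw [hχteven n z hz, hχeven n z hz, hχodd n z hz]
    generalize z ^ (-(n:ℤ)) = w
    linear_combination w * hR1 (2*n) z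
  have haeL1 : ∀ n, zmul (χt (2*n+1)) =ᵐ[μ]
      fun z => ρ (2*n) * χ (2*n) z + (-(α (2*n))) * χ (2*n+1) z := by
    intro n
    filter_upwards [hae0] with z hz
    have hzz : z * z⁻¹ = 1 := mul_inv_cancel₀ hz
    simp only [zmul]
    rw [hχtodd n z hz, hχeven n z hz, hχodd n z hz, zpow_sub₀ hz, zpow_one]
    generalize z ^ (-(n:ℤ)) = w
    linear_combination w * hR4 (2*n) z + (w * φsr (2*n+1) z) * hzz
  have haeM1 : ∀ n, χ (2*n+1) =ᵐ[μ]
      fun z => conj (α (2*n+1)) * χt (2*n+1) z + conj (ρ (2*n+1)) * χt (2*n+2) z := by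
    intro n
    filter_upwards [hae0] with z hz
    have hzz : z * z⁻¹ = 1 := mul_inv_cancel₀ hz
    have h3 := hχteven (n+1) z hz
    rw [show 2*(n+1) = 2*n+2 from by ring] at h3
    rw [show (-(((n+1):ℕ):ℤ)) = -(n:ℤ)-1 from by push_cast; ring] at h3
    rw [hχodd n z hz, hχtodd n z hz, h3, zpow_sub₀ hz, zpow_one]
    generalize z ^ (-(n:ℤ)) = w
    linear_combination (w * z⁻¹) * hR1 (2*n+1) z + (-(w * φr (2*n+1) z)) * hzz
  have haeM2 : ∀ n, χ (2*n+2) =ᵐ[μ]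
      fun z => ρ (2*n+1) * χt (2*n+1) z + (-(α (2*n+1))) * χt (2*n+2) z := by
    intro n
    filter_upwards [hae0] with z hz
    have h1 := hχeven (n+1) z hz
    rw [show 2*(n+1) = 2*n+2 from by ring] at h1
    rw [show (-(((n+1):ℕ):ℤ)) = -(n:ℤ)-1 from by push_cast; ring] at h1
    have h3 := hχteven (n+1) z hz
    rw [show 2*(n+1) = 2*n+2 from by ring] at h3
    rw [show (-(((n+1):ℕ):ℤ)) = -(n:ℤ)-1 from by push_cast; ring] at h3
    rw [h1, hχtodd n z hz, h3, zpow_sub₀ hz, zpow_one]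
    generalize z ^ (-(n:ℤ)) = w
    linear_combination (w * z⁻¹) * hR4 (2*n+1) z
  have haeM0 : χ 0 =ᵐ[μ] fun z => (1:ℂ) * χt 0 z + 0 * χt 0 z := by
    have hΦ0 : Φ 0 = 1 := (hΦmonic 0).natDegree_eq_zero.mp (hΦdeg 0)
    filter_upwards [hae0] with z hz
    have h1 := hχeven 0 z hz
    have h2 := hχteven 0 z hz
    norm_num at h1 h2
    rw [h1, h2, hφsr 0 z, hφr 0 z, hφs 0 z, hφ 0 z, hΦs 0 z]
    simp [hΦ0]
  -- ## assembling the result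
  refine ⟨⟨?_, ?_⟩, ?_, ?_, ?_⟩
  · intro n
    refine ⟨?_, ?_, ?_, ?_⟩
    · rw [hLop, generic χ honχ hχon _ _ _ _ _ _ (haeL0 n), if_pos rfl,
        if_neg (by omega), add_zero]
    · rw [hLop, generic χ honχ hχon _ _ _ _ _ _ (haeL0 n), if_neg (by omega),
        if_pos rfl, zero_add]
    · rw [hLop, generic χ honχ hχon _ _ _ _ _ _ (haeL1 n), if_pos rfl,
        if_neg (by omega), add_zero]
    · rw [hLop, generic χ honχ hχon _ _ _ _ _ _ (haeL1 n), if_neg (by omega),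
        if_pos rfl, zero_add]
  · intro k ℓ hkl
    rcases Nat.even_or_odd ℓ with ⟨m, hm⟩ | ⟨m, hm⟩
    · rw [show ℓ = 2*m from by omega] at hkl ⊢
      rw [hLop, generic χ honχ hχon _ _ _ _ _ _ (haeL0 m), if_neg (by omega),
        if_neg (by omega), add_zero]
    · rw [show ℓ = 2*m+1 from by omega] at hkl ⊢
      rw [hLop, generic χ honχ hχon _ _ _ _ _ _ (haeL1 m), if_neg (by omega),
        if_neg (by omega), add_zero]
  · rw [hMop, generic χt honχt hχton 1 0 0 0 0 (χ 0) haeM0]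
    norm_num
  · intro n hn
    obtain ⟨m, rfl⟩ : ∃ m, n = m + 1 := ⟨n - 1, by omega⟩
    rw [show 2*(m+1)-1 = 2*m+1 from by omega, show 2*(m+1) = 2*m+2 from by omega]
    refine ⟨?_, ?_, ?_, ?_⟩
    · rw [hMop, generic χt honχt hχton _ _ _ _ _ _ (haeM1 m), if_pos rfl,
        if_neg (by omega), add_zero]
    · rw [hMop, generic χt honχt hχton _ _ _ _ _ _ (haeM1 m), if_neg (by omega),
        if_pos rfl, zero_add]
    · rw [hMop, generic χt honχt hχton _ _ _ _ _ _ (haeM2 m), if_pos rfl,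
        if_neg (by omega), add_zero]
    · rw [hMop, generic χt honχt hχton _ _ _ _ _ _ (haeM2 m), if_neg (by omega),
        if_pos rfl, zero_add]
  · intro k ℓ hkl
    rcases Nat.even_or_odd ℓ with ⟨m, hm⟩ | ⟨m, hm⟩
    · rcases Nat.eq_zero_or_pos m with rfl | hmpos
      · rw [show ℓ = 0 from by omega] at hkl ⊢
        rw [hMop, generic χt honχt hχton 1 0 0 0 k (χ 0) haeM0, if_neg (by omega),
          if_neg (by omega), add_zero]
      · obtain ⟨m', rfl⟩ : ∃ m', m = m' + 1 := ⟨m - 1, by omega⟩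
        rw [show ℓ = 2*m'+2 from by omega] at hkl ⊢
        rw [hMop, generic χt honχt hχton _ _ _ _ _ _ (haeM2 m'), if_neg (by omega),
          if_neg (by omega), add_zero]
    · rw [show ℓ = 2*m+1 from by omega] at hkl ⊢
      rw [hMop, generic χt honχt hχton _ _ _ _ _ _ (haeM1 m), if_neg (by omega),
        if_neg (by omega), add_zero]
end

section
/- (Gesztesy–Zinchenko theory for rotated extended CMV operators.) Let z ∈ ℂ with z ≠ 0, let α : ℤ → ℂ with |αₙ| < 1 for all n, and let ρ : ℤ → ℂ with |αₙ|² + |ρₙ|² = 1 for all n (hence ρₙ ≠ 0). Let 𝕄^∠ and 𝕃^∠ be the rotated block operators acting on arbitrary sequences u : ℤ → ℂ (see context), and let f, g : ℤ → ℂ. Then the following are equivalent: (1) for all n ∈ ℤ, (𝕃^∠(𝕄^∠ f))ₙ = z·fₙ and (𝕄^∠ f)ₙ = z·gₙ; (2) for all n ∈ ℤ, (𝕄^∠(𝕃^∠ g))ₙ = z·gₙ and (𝕃^∠ g)ₙ = fₙ; (3) for all n ∈ ℤ, (𝕄^∠ f)ₙ = z·gₙ and (𝕃^∠ g)ₙ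 = fₙ; (4) for all n ∈ ℤ, (f_{n+1}, g_{n+1})ᵀ = T^∠_{n+1}(z)·(fₙ, gₙ)ᵀ, where T^∠ₘ(z) = ρₘ⁻¹·[[−conj(αₘ), z], [z⁻¹, −αₘ]] if m is even and T^∠ₘ(z) = ρₘ⁻¹·[[−αₘ, 1], [1, −conj(αₘ)]] if m is odd. -/
open ComplexConjugate

lemma auxEvenStep (z a r x x' y y' : ℂ) (hz : z ≠ 0) (hr : r ≠ 0)
    (hk : conj r * r = 1 - conj a * a) :
    (conj a * x + r * x' = z * y ∧ conj r * x - a * x' = z * y') ↔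
    ![x', y'] = (r⁻¹ • !![-(conj a), z; z⁻¹, -a]).mulVec ![x, y] := by
  constructor
  · rintro ⟨A, B⟩
    funext i
    fin_cases i <;>
      simp [Matrix.mulVec, dotProduct, Fin.sum_univ_two]
    · field_simp
      linear_combination A
    · field_simp
      linear_combination (-r) * B + (-a) * A + x * hk
  · intro H
    have h0 := congrFun H 0
    have h1 := congrFun H 1
    simp [Matrix.mulVec, dotProduct, Fin.sum_univ_two] at h0 h1
    field_simp at h0 h1
    constructor
    · refine mul_left_cancel₀ hr ?_
      linear_combination r * h0
    · refine mul_left_cancel₀ (mul_ne_zero (mul_ne_zero hr hr) hz) ?_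
      linear_combination (-(r*z)) * h1 + (-(r*z*a)) * h0 + (r*z*x) * hk

lemma auxOddStep (a r x x' y y' : ℂ) (hr : r ≠ 0)
    (hk : conj r * r = 1 - conj a * a) :
    (conj a * y + r * y' = x ∧ conj r * y - a * y' = x') ↔
    ![x', y'] = (r⁻¹ • !![-a, 1; 1, -(conj a)]).mulVec ![x, y] := by
  constructor
  · rintro ⟨A, B⟩
    funext i
    fin_cases i <;>
      simp [Matrix.mulVec, dotProduct, Fin.sum_univ_two]
    · field_simp
      linear_combination (-r) * B + (-a) * A + y * hk
    · field_simp
      linear_combination A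
  · intro H
    have h0 := congrFun H 0
    have h1 := congrFun H 1
    simp [Matrix.mulVec, dotProduct, Fin.sum_univ_two] at h0 h1
    field_simp at h0 h1
    constructor
    · linear_combination h1
    · refine mul_left_cancel₀ (mul_ne_zero hr hr) ?_
      linear_combination (-r) * h0 + (-(a*r)) * h1 + (r*y) * hk

/-- **Gesztesy–Zinchenko theory for rotated extended CMV operators.**
Let `z ≠ 0`, `α, ρ : ℤ → ℂ` with `|αₙ| < 1` and `|αₙ|² + |ρₙ|² = 1`.  Let `𝕄^∠` be the
direct sum of the blocks `Θ^∠_{2k}` acting on coordinate pairs `(2k-1, 2k)` and `𝕃^∠` the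
direct sum of the blocks `Θ^∠_{2k+1}` acting on `(2k, 2k+1)`, where
`Θ^∠ₘ = [[conj αₘ, ρₘ], [conj ρₘ, -αₘ]]`.  For sequences `f, g : ℤ → ℂ`, the following
are equivalent: (1) `𝔈^∠ f = z·f` and `𝕄^∠ f = z·g`; (2) `𝔈̃^∠ g = z·g` and `𝕃^∠ g = f`;
(3) `𝕄^∠ f = z·g` and `𝕃^∠ g = f`; (4) `(f_{n+1}, g_{n+1})ᵀ = T^∠_{n+1}(z)·(fₙ, gₙ)ᵀ`
for all `n`, where `T^∠` is the rotated Gesztesy–Zinchenko transfer matrix. -/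
theorem rotated_extended_cmv_gesztesy_zinchenko
    (z : ℂ) (hz : z ≠ 0)
    (α ρ : ℤ → ℂ)
    (hα : ∀ n, ‖α n‖ < 1)
    (hρ : ∀ n, ‖α n‖ ^ 2 + ‖ρ n‖ ^ 2 = 1)
    (M L : (ℤ → ℂ) → ℤ → ℂ)
    (hM : ∀ (u : ℤ → ℂ) (k : ℤ),
      M u (2 * k - 1) = conj (α (2 * k)) * u (2 * k - 1) + ρ (2 * k) * u (2 * k)
      ∧ M u (2 * k) = conj (ρ (2 * k)) * u (2 * k - 1) - α (2 * k) * u (2 * k))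
    (hL : ∀ (u : ℤ → ℂ) (k : ℤ),
      L u (2 * k) = conj (α (2 * k + 1)) * u (2 * k) + ρ (2 * k + 1) * u (2 * k + 1)
      ∧ L u (2 * k + 1) = conj (ρ (2 * k + 1)) * u (2 * k) - α (2 * k + 1) * u (2 * k + 1))
    (T : ℤ → Matrix (Fin 2) (Fin 2) ℂ)
    (hT : ∀ m : ℤ, T m =
      if Even m then (ρ m)⁻¹ • !![-(conj (α m)), z; z⁻¹, -(α m)]
      else (ρ m)⁻¹ • !![-(α m), 1; 1, -(conj (α m))])
    (f g : ℤ → ℂ) :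
    List.TFAE
      [ (∀ n : ℤ, L (M f) n = z * f n) ∧ (∀ n : ℤ, M f n = z * g n),
        (∀ n : ℤ, M (L g) n = z * g n) ∧ (∀ n : ℤ, L g n = f n),
        (∀ n : ℤ, M f n = z * g n) ∧ (∀ n : ℤ, L g n = f n),
        ∀ n : ℤ, ![f (n + 1), g (n + 1)] = (T (n + 1)).mulVec ![f n, g n] ] := by
  have hρ0 : ∀ n, ρ n ≠ 0 := by
    intro n h
    have h2 := hρ n
    rw [h, norm_zero] at h2
    nlinarith [hα n, norm_nonneg (α n)]
  have hkey : ∀ n, conj (ρ n) * ρ n = 1 - conj (α n) * α n := by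
    intro n
    have h2 := hρ n
    rw [Complex.sq_norm, Complex.sq_norm] at h2
    rw [mul_comm, Complex.mul_conj, mul_comm (conj (α n)), Complex.mul_conj]
    norm_cast
    linarith
  tfae_have 3 → 1
  | ⟨h1, h2⟩ => by
    refine ⟨fun n => ?_, h1⟩
    obtain ⟨k, hk | hk⟩ := Int.even_or_odd' n <;> subst hk
    · rw [(hL (M f) k).1, h1, h1, ← h2 (2*k), (hL g k).1]; ring
    · rw [(hL (M f) k).2, h1, h1, ← h2 (2*k+1), (hL g k).2]; ring
  tfae_have 1 → 3
  | ⟨hE, h1⟩ => by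
    refine ⟨h1, fun n => mul_left_cancel₀ hz ?_⟩
    obtain ⟨k, hk | hk⟩ := Int.even_or_odd' n <;> subst hk
    · rw [(hL g k).1, ← hE (2*k), (hL (M f) k).1, h1, h1]; ring
    · rw [(hL g k).2, ← hE (2*k+1), (hL (M f) k).2, h1, h1]; ring
  tfae_have 3 → 2
  | ⟨h1, h2⟩ => by
    refine ⟨fun n => ?_, h2⟩
    obtain ⟨k, hk | hk⟩ := Int.even_or_odd' n <;> subst hk
    · rw [(hM (L g) k).2, h2, h2, ← (hM f k).2, h1]
    · have e : 2*(k+1) - 1 = 2*k + 1 := by ring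
      have E := (hM (L g) (k+1)).1
      have E2 := (hM f (k+1)).1
      rw [e] at E E2
      rw [E, h2, h2, ← E2, h1]
  tfae_have 2 → 3
  | ⟨h1, h2⟩ => by
    refine ⟨fun n => ?_, h2⟩
    obtain ⟨k, hk | hk⟩ := Int.even_or_odd' n <;> subst hk
    · rw [(hM f k).2, ← h2 (2*k - 1), ← h2 (2*k), ← (hM (L g) k).2]
      exact h1 (2*k)
    · have e : 2*(k+1) - 1 = 2*k + 1 := by ring
      have E := (hM (L g) (k+1)).1
      have E2 := (hM f (k+1)).1
      rw [e] at E E2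
      rw [E2, ← h2 (2*k + 1), ← h2 (2*(k+1)), ← E]
      exact h1 (2*k + 1)
  tfae_have 3 → 4
  | ⟨h1, h2⟩ => by
    intro n
    obtain ⟨k, hk | hk⟩ := Int.even_or_odd' n <;> subst hk
    · rw [hT, if_neg (by rw [Int.even_iff]; omega)]
      have A := ((hL g k).1).symm.trans (h2 (2*k))
      have B := ((hL g k).2).symm.trans (h2 (2*k + 1))
      exact (auxOddStep _ _ _ _ _ _ (hρ0 _) (hkey _)).mp ⟨A, B⟩
    · have e : (2*k + 1 + 1 : ℤ) = 2*(k+1) := by ring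
      have e2 : 2*(k+1) - 1 = 2*k + 1 := by ring
      rw [e, hT, if_pos ⟨k+1, by ring⟩]
      have A := ((hM f (k+1)).1).symm.trans (h1 (2*(k+1) - 1))
      have B := ((hM f (k+1)).2).symm.trans (h1 (2*(k+1)))
      rw [e2] at A B
      exact (auxEvenStep z _ _ _ _ _ _ hz (hρ0 _) (hkey _)).mp ⟨A, B⟩
  tfae_have 4 → 3
  | h4 => by
    constructor
    · intro n
      obtain ⟨k, hk | hk⟩ := Int.even_or_odd' n <;> subst hk
      · have H := h4 (2*k - 1)
        rw [show (2*k - 1 + 1 : ℤ) = 2*k by ring, hT, if_pos ⟨k, two_mul k⟩] at H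
        rw [(hM f k).2]
        exact ((auxEvenStep z _ _ _ _ _ _ hz (hρ0 _) (hkey _)).mpr H).2
      · have e : (2*k + 1 + 1 : ℤ) = 2*(k+1) := by ring
        have e2 : 2*(k+1) - 1 = 2*k + 1 := by ring
        have H := h4 (2*k + 1)
        rw [e, hT, if_pos ⟨k+1, by ring⟩] at H
        have E := (hM f (k+1)).1
        rw [e2] at E
        rw [E]
        exact ((auxEvenStep z _ _ _ _ _ _ hz (hρ0 _) (hkey _)).mpr H).1
    · intro n
      obtain ⟨k, hk | hk⟩ := Int.even_or_odd' n <;> subst hk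
      · have H := h4 (2*k)
        rw [hT, if_neg (by rw [Int.even_iff]; omega)] at H
        rw [(hL g k).1]
        exact ((auxOddStep _ _ _ _ _ _ (hρ0 _) (hkey _)).mpr H).1
      · have H := h4 (2*k)
        rw [hT, if_neg (by rw [Int.even_iff]; omega)] at H
        rw [(hL g k).2]
        exact ((auxOddStep _ _ _ _ _ _ (hρ0 _) (hkey _)).mpr H).2
  tfae_finish
end
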